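/- arXiv:2110.07896 — 12 statements merged into one kernel-verified Lean document; each statement's English description precedes it below -/
import Mathlib

section
/- Let Ω be a finite set and let G be a primitive 2-closed permutation group on Ω having exactly 4 orbits on Ω × Ω. If there exists a binary relation E on Ω with Aut(E) = G, then there exists a nontrivial orbital O of G (a G-orbit on Ω × Ω disjoint from the diagonal {(a,a) : a ∈ Ω}) such that, regarding O as a binary relation on Ω, Aut(O) = G. -/
open MulAction

section Defs

variable {Ω : Type*}

/-- The automorphism group of a binary relation (digraph) `E` on `Ω`. -/
def AutRel (E : Ω → Ω → Prop) : Subgroup (Equiv.Perm Ω) where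
  carrier := {σ | ∀ a b : Ω, E a b ↔ E (σ a) (σ b)}
  one_mem' := by intro a b; simp
  mul_mem' := by
    intro σ τ hσ hτ a b
    simpa using (hτ a b).trans (hσ (τ a) (τ b))
  inv_mem' := by
    intro σ hσ a b
    simpa using (hσ (σ⁻¹ a) (σ⁻¹ b)).symm

/-- The 2-closure of a permutation group `G ≤ Sym(Ω)`: the group of all permutations
preserving every orbit of `G` on `Ω × Ω` (acting coordinatewise). -/
def twoClosure (G : Subgroup (Equiv.Perm Ω)) : Subgroup (Equiv.Perm Ω) where
  carrier := {σ | ∀ x : Ω × Ω, σ • x ∈ MulAction.orbit G x}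
  one_mem' := by intro x; simp [MulAction.mem_orbit_self x]
  mul_mem' := by
    intro σ τ hσ hτ x
    have h1 : τ • x ∈ MulAction.orbit G x := hτ x
    have h2 : σ • (τ • x) ∈ MulAction.orbit G (τ • x) := hσ (τ • x)
    rw [MulAction.orbit_eq_iff.mpr h1] at h2
    simpa [mul_smul] using h2
  inv_mem' := by
    intro σ hσ x
    have h : σ • (σ⁻¹ • x) ∈ MulAction.orbit G (σ⁻¹ • x) := hσ (σ⁻¹ • x)
    simp only [smul_inv_smul] at h
    exact MulAction.mem_orbit_symm.mp h

/-- A permutation group `G ≤ Sym(Ω)` is primitive if it is transitive on `Ω` and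
every block of its action is trivial. -/
def IsPrimitivePerm (G : Subgroup (Equiv.Perm Ω)) : Prop :=
  MulAction.IsPretransitive G Ω ∧
    ∀ B : Set Ω, MulAction.IsBlock G B → MulAction.IsTrivialBlock B

/-- The rank of a permutation group: the number of orbits on `Ω × Ω`. -/
noncomputable def permRank (G : Subgroup (Equiv.Perm Ω)) : ℕ :=
  Nat.card (MulAction.orbitRel.Quotient G (Ω × Ω))

end Defs

section Aux

variable {Ω : Type*}

lemma mem_autRel_iff {E : Ω → Ω → Prop} {σ : Equiv.Perm Ω} :
    σ ∈ AutRel E ↔ ∀ a b, E a b ↔ E (σ a) (σ b) := Iff.rfl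

lemma autRel_compl (E : Ω → Ω → Prop) : AutRel (fun a b => ¬ E a b) = AutRel E := by
  ext σ
  simp only [mem_autRel_iff]
  exact ⟨fun h a b => not_iff_not.mp (h a b), fun h a b => not_iff_not.mpr (h a b)⟩

lemma autRel_diag_or (F : Ω → Ω → Prop) (hF : ∀ a, ¬ F a a) :
    AutRel (fun a b => a = b ∨ F a b) = AutRel F := by
  ext σ
  simp only [mem_autRel_iff]
  constructor
  · intro h a b
    rcases eq_or_ne a b with rfl | hab
    · exact iff_of_false (hF a) (hF (σ a))
    · have h1 := h a b
      have h2 : ¬ (σ a = σ b) := fun e => hab (σ.injective e)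
      tauto
  · intro h a b
    have h1 : a = b ↔ σ a = σ b := ⟨fun e => by rw [e], fun e => σ.injective e⟩
    have h2 := h a b
    tauto

lemma autRel_top_of_eq (E : Ω → Ω → Prop) (hd : ∀ a b, E a b ↔ a = b) :
    AutRel E = ⊤ := by
  ext σ
  simp only [mem_autRel_iff, Subgroup.mem_top, iff_true]
  intro a b
  rw [hd, hd]
  exact ⟨fun e => by rw [e], fun e => σ.injective e⟩

lemma autRel_top_of_empty (E : Ω → Ω → Prop) (hd : ∀ a b, ¬ E a b) :
    AutRel E = ⊤ := by
  ext σ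
  simp only [mem_autRel_iff, Subgroup.mem_top, iff_true]
  intro a b
  exact iff_of_false (hd a b) (hd _ _)

lemma exists_perm_two (a b c d : Ω) (hab : a ≠ b) (hcd : c ≠ d) :
    ∃ σ : Equiv.Perm Ω, σ a = c ∧ σ b = d := by
  classical
  set τ1 := Equiv.swap a c with hτ1
  have h1 : τ1 a = c := Equiv.swap_apply_left a c
  set b' := τ1 b with hb'
  have hb'c : b' ≠ c := by
    rw [hb', ← h1]
    exact fun e => hab (τ1.injective e).symm
  set τ2 := Equiv.swap b' d with hτ2
  refine ⟨τ2 * τ1, ?_, ?_⟩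
  · show τ2 (τ1 a) = c
    rw [h1, hτ2]
    exact Equiv.swap_apply_of_ne_of_ne hb'c.symm hcd
  · show τ2 (τ1 b) = d
    rw [← hb', hτ2]
    exact Equiv.swap_apply_left b' d

lemma half {Ω : Type*} [Fintype Ω] (G : Subgroup (Equiv.Perm Ω))
    (htrans : MulAction.IsPretransitive G Ω) (a₀ : Ω)
    (E : Ω → Ω → Prop) (hE : AutRel E = G) (hrank : permRank G = 4)
    (hcard : {q : MulAction.orbitRel.Quotient G (Ω × Ω) |
        q ≠ Quotient.mk'' (a₀, a₀) ∧ q.orbit ⊆ {p : Ω × Ω | E p.1 p.2}}.ncard ≤ 1) :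
    ∃ O : Set (Ω × Ω), (∃ x : Ω × Ω, O = MulAction.orbit G x) ∧
      (∀ a : Ω, (a, a) ∉ O) ∧ AutRel (fun a b => (a, b) ∈ O) = G := by
  classical
  set Q := MulAction.orbitRel.Quotient G (Ω × Ω) with hQdef
  set q0 : Q := Quotient.mk'' (a₀, a₀) with hq0
  set S : Set (Ω × Ω) := {p | E p.1 p.2} with hSdef
  set A : Set Q := {q | q ≠ q0 ∧ q.orbit ⊆ S} with hAdef
  have hEg : ∀ (g : G) (a b : Ω), E a b ↔ E ((g : Equiv.Perm Ω) a) ((g : Equiv.Perm Ω) b) := by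
    intro g
    have : (g : Equiv.Perm Ω) ∈ AutRel E := by rw [hE]; exact g.2
    exact this
  have hdiag : ∀ a : Ω, (Quotient.mk'' ((a, a) : Ω × Ω) : Q) = q0 := by
    intro a
    obtain ⟨g, hg⟩ := htrans.exists_smul_eq a₀ a
    rw [hq0, Quotient.eq'', MulAction.orbitRel_apply]
    exact ⟨g, by rw [← hg]; rfl⟩
  have hq0diag : ∀ p : Ω × Ω, (Quotient.mk'' p : Q) = q0 → p.1 = p.2 := by
    intro p hp
    rw [hq0, Quotient.eq'', MulAction.orbitRel_apply] at hp
    obtain ⟨g, hg⟩ := hp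
    rw [← hg]; rfl
  have hinv : ∀ p : Ω × Ω, p ∈ S → MulAction.orbit G p ⊆ S := by
    rintro p hp x ⟨g, rfl⟩
    exact (hEg g p.1 p.2).mp hp
  have hoffA : ∀ a b : Ω, a ≠ b → E a b → (Quotient.mk'' ((a, b) : Ω × Ω) : Q) ∈ A := by
    intro a b hab hEab
    refine ⟨fun hq => hab (hq0diag (a, b) hq), ?_⟩
    rw [MulAction.orbitRel.Quotient.orbit_mk]
    exact hinv (a, b) hEab
  have hdiagE : (∀ a, E a a) ∨ (∀ a, ¬ E a a) := by
    by_cases hex : ∃ a, E a a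
    · obtain ⟨a, ha⟩ := hex
      left
      intro b
      obtain ⟨g, hg⟩ := htrans.exists_smul_eq a b
      have := (hEg g a a).mp ha
      rwa [show (g : Equiv.Perm Ω) a = b from hg] at this
    · right; push_neg at hex; exact hex
  rcases Nat.le_one_iff_eq_zero_or_eq_one.mp hcard with h0 | h1
  · -- A is empty: E is trivial, so G = ⊤, contradicting rank 4
    exfalso
    have hAempty : A = ∅ := (Set.ncard_eq_zero (Set.toFinite A)).mp h0
    have hoff : ∀ a b : Ω, a ≠ b → ¬ E a b := by
      intro a b hab hEab
      have h := hoffA a b hab hEab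
      rw [hAempty] at h
      exact h
    have hGtop : G = ⊤ := by
      rw [← hE]
      rcases hdiagE with hd | hd
      · exact autRel_top_of_eq E (fun a b =>
          ⟨fun h => by_contra fun hne => hoff a b hne h, fun h => h ▸ hd a⟩)
      · refine autRel_top_of_empty E (fun a b => ?_)
        rcases eq_or_ne a b with rfl | hne
        · exact hd a
        · exact hoff a b hne
    have h4 : (Set.univ : Set Q).ncard = 4 := by rw [Set.ncard_univ]; exact hrank
    by_cases hsing : ∀ a b : Ω, a = b
    · have hall : ∀ q : Q, q = q0 := by
        intro q
        induction q using Quotient.inductionOn' with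
        | h p =>
          rw [show p = (a₀, a₀) from Prod.ext (hsing p.1 a₀) (hsing p.2 a₀)]
      have hsub : (Set.univ : Set Q) ⊆ {q0} := fun q _ => hall q
      have := Set.ncard_le_ncard hsub (Set.toFinite _)
      rw [h4, Set.ncard_singleton] at this
      omega
    · push_neg at hsing
      obtain ⟨b₀, c₀, hbc⟩ := hsing
      have hall : ∀ q : Q, q = q0 ∨ q = Quotient.mk'' (b₀, c₀) := by
        intro q
        induction q using Quotient.inductionOn' with
        | h p =>
          rcases eq_or_ne p.1 p.2 with he | hne
          · left
            rw [show p = (p.1, p.1) from Prod.ext rfl he.symm]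
            exact hdiag p.1
          · right
            obtain ⟨σ, hσ1, hσ2⟩ := exists_perm_two b₀ c₀ p.1 p.2 hbc hne
            rw [Quotient.eq'', MulAction.orbitRel_apply]
            refine ⟨⟨σ, by rw [hGtop]; trivial⟩, ?_⟩
            exact Prod.ext hσ1 hσ2
      have hsub : (Set.univ : Set Q) ⊆ {q0, Quotient.mk'' (b₀, c₀)} := fun q _ => hall q
      have h2 := Set.ncard_le_ncard hsub (Set.toFinite _)
      have h3 := Set.ncard_insert_le q0 ({Quotient.mk'' (b₀, c₀)} : Set Q)
      rw [h4] at h2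
      rw [Set.ncard_singleton] at h3
      omega
  · -- A is a singleton {q1}: q1.orbit is the required orbital
    obtain ⟨q1, hq1⟩ := Set.ncard_eq_one.mp h1
    have hq1mem : q1 ∈ A := by rw [hq1]; exact Set.mem_singleton q1
    obtain ⟨hq1ne, hq1sub⟩ := hq1mem
    refine ⟨q1.orbit, ⟨Quotient.out q1,
      MulAction.orbitRel.Quotient.orbit_eq_orbit_out q1 Quotient.out_eq'⟩, ?_, ?_⟩
    · intro a ha
      rw [MulAction.orbitRel.Quotient.mem_orbit] at ha
      exact hq1ne (ha ▸ hdiag a ▸ rfl)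
    · have hdiagnot : ∀ a : Ω, ((a, a) : Ω × Ω) ∉ q1.orbit := by
        intro a ha
        rw [MulAction.orbitRel.Quotient.mem_orbit] at ha
        exact hq1ne (by rw [← ha, hdiag a])
      have hEiff : ∀ a b : Ω, a ≠ b → (E a b ↔ (a, b) ∈ q1.orbit) := by
        intro a b hab
        constructor
        · intro hEab
          have h := hoffA a b hab hEab
          rw [hq1] at h
          rw [MulAction.orbitRel.Quotient.mem_orbit]
          exact h
        · intro hO
          exact hq1sub hO
      rcases hdiagE with hd | hd
      · have heq : E = fun a b => a = b ∨ (a, b) ∈ q1.orbit := by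
          funext a b
          apply propext
          rcases eq_or_ne a b with rfl | hab
          · exact iff_of_true (hd a) (Or.inl rfl)
          · rw [hEiff a b hab]
            exact ⟨Or.inr, fun h => h.elim (fun e => absurd e hab) id⟩
        rw [heq] at hE
        exact ((autRel_diag_or (fun a b => ((a, b) : Ω × Ω) ∈ q1.orbit) hdiagnot).symm).trans hE
      · have heq : (fun a b => ((a, b) : Ω × Ω) ∈ q1.orbit) = E := by
          funext a b
          apply propext
          rcases eq_or_ne a b with rfl | hab
          · exact iff_of_false (hdiagnot a) (hd a)
          · exact (hEiff a b hab).symm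
        rw [heq]
        exact hE
end Aux


/-- If a primitive 2-closed permutation group of rank 4 is the automorphism group of some
graph or digraph, then it is the automorphism group of one of its nontrivial orbital
digraphs. -/
theorem aut_of_orbital_of_rank_four {Ω : Type*} [Fintype Ω] (G : Subgroup (Equiv.Perm Ω))
    (hprim : IsPrimitivePerm G) (hclosed : twoClosure G = G)
    (hrank : permRank G = 4)
    (h : ∃ E : Ω → Ω → Prop, AutRel E = G) :
    ∃ O : Set (Ω × Ω), (∃ x : Ω × Ω, O = MulAction.orbit G x) ∧
      (∀ a : Ω, (a, a) ∉ O) ∧ AutRel (fun a b => (a, b) ∈ O) = G := by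
  classical
  obtain ⟨E, hE⟩ := h
  have htrans := hprim.1
  rcases isEmpty_or_nonempty Ω with hempty | hne
  · exfalso
    have : IsEmpty (MulAction.orbitRel.Quotient G (Ω × Ω)) :=
      ⟨fun q => Quotient.inductionOn' q (fun p => hempty.false p.1)⟩
    rw [permRank, Nat.card_of_isEmpty] at hrank
    exact absurd hrank (by norm_num)
  obtain ⟨a₀⟩ := hne
  set Q := MulAction.orbitRel.Quotient G (Ω × Ω) with hQdef
  set q0 : Q := Quotient.mk'' (a₀, a₀) with hq0
  set A : Set Q := {q | q ≠ q0 ∧ q.orbit ⊆ {p : Ω × Ω | E p.1 p.2}} with hAdef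
  set B : Set Q := {q | q ≠ q0 ∧ q.orbit ⊆ {p : Ω × Ω | ¬ E p.1 p.2}} with hBdef
  have hEg : ∀ (g : G) (a b : Ω), E a b ↔ E ((g : Equiv.Perm Ω) a) ((g : Equiv.Perm Ω) b) := by
    intro g
    have : (g : Equiv.Perm Ω) ∈ AutRel E := by rw [hE]; exact g.2
    exact this
  have hdisj : Disjoint A B := by
    rw [Set.disjoint_left]
    rintro q ⟨_, hqA⟩ ⟨_, hqB⟩
    obtain ⟨p, hp⟩ := MulAction.orbitRel.Quotient.nonempty_orbit q
    exact (hqB hp) (hqA hp)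
  have hunion : A ∪ B = {q0}ᶜ := by
    apply Set.Subset.antisymm
    · rintro q (⟨hne, _⟩ | ⟨hne, _⟩) <;> exact hne
    · intro q hq
      obtain ⟨p, hp⟩ := MulAction.orbitRel.Quotient.nonempty_orbit q
      have hqp : q = Quotient.mk'' p := (MulAction.orbitRel.Quotient.mem_orbit.mp hp).symm
      by_cases hEp : E p.1 p.2
      · left
        refine ⟨hq, ?_⟩
        rw [hqp, MulAction.orbitRel.Quotient.orbit_mk]
        rintro x ⟨g, rfl⟩
        exact (hEg g p.1 p.2).mp hEp
      · right
        refine ⟨hq, ?_⟩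
        rw [hqp, MulAction.orbitRel.Quotient.orbit_mk]
        rintro x ⟨g, rfl⟩
        exact fun hx => hEp ((hEg g p.1 p.2).mpr hx)
  have hcompl : ({q0}ᶜ : Set Q).ncard = 3 := by
    have hc := Set.ncard_add_ncard_compl ({q0} : Set Q)
    rw [Set.ncard_singleton] at hc
    have h4 : Nat.card Q = 4 := hrank
    omega
  have hsum : A.ncard + B.ncard = 3 := by
    rw [← Set.ncard_union_eq hdisj (Set.toFinite A) (Set.toFinite B), hunion, hcompl]
  have hAB : A.ncard ≤ 1 ∨ B.ncard ≤ 1 := by omega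
  rcases hAB with hA | hB
  · exact half G htrans a₀ E hE hrank hA
  · exact half G htrans a₀ (fun a b => ¬ E a b) ((autRel_compl E).trans hE) hrank hB
end

section
/- Let Ω be a finite set with |Ω| ≥ 4096 and let G be a primitive 2-closed permutation group on Ω with exactly 4 orbits on Ω × Ω which is not the automorphism group of any graph or digraph (for every binary relation E on Ω, Aut(E) ≠ G). Then for every nontrivial orbital O of G, the group Aut(O) (where O is regarded as a binary relation on Ω) is a primitive permutation group on Ω having exactly 3 orbits on Ω × Ω. -/
open MulAction

/-! `Aut(O)` contains `G`, so it is primitive and each of its orbitals is a union of orbitals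
of `G`. It still separates the diagonal, `O`, and the pairs outside both, so its rank is at
least 3. If it merged no two orbitals of `G` it would lie in `G^(2) = G`, making `G = Aut(O)`;
hence two orbitals merge and the rank drops below 4. -/

section PermGroups

variable {Ω : Type*} {G H : Subgroup (Equiv.Perm Ω)}

theorem orbit_subset_orbit_of_le (hGH : G ≤ H) (p : Ω × Ω) : orbit G p ⊆ orbit H p := by
  rintro q ⟨g, rfl⟩
  exact ⟨⟨g, hGH g.2⟩, rfl⟩

theorem IsPrimitivePerm.mono (hG : IsPrimitivePerm G) (hGH : G ≤ H) : IsPrimitivePerm H := by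
  obtain ⟨htrans, hblocks⟩ := hG
  refine ⟨⟨fun a b => ?_⟩, fun B hB => hblocks B fun g₁ g₂ =>
    hB (g₁ := ⟨g₁, hGH g₁.2⟩) (g₂ := ⟨g₂, hGH g₂.2⟩)⟩
  obtain ⟨g, hg⟩ := htrans.exists_smul_eq a b
  exact ⟨⟨g, hGH g.2⟩, hg⟩

def orbitalMap (hGH : G ≤ H) : orbitRel.Quotient G (Ω × Ω) → orbitRel.Quotient H (Ω × Ω) :=
  Quotient.map' id fun _ _ h => orbit_subset_orbit_of_le hGH _ h

theorem orbitalMap_surjective (hGH : G ≤ H) : Function.Surjective (orbitalMap hGH) :=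
  Quotient.ind fun p => ⟨⟦p⟧, rfl⟩

theorem le_twoClosure_of_injective_orbitalMap (hGH : G ≤ H)
    (hinj : Function.Injective (orbitalMap hGH)) : H ≤ twoClosure G := by
  intro σ hσ p
  have hH : orbitalMap hGH ⟦σ • p⟧ = orbitalMap hGH ⟦p⟧ := Quotient.sound ⟨⟨σ, hσ⟩, rfl⟩
  exact Quotient.exact (hinj hH)

theorem permRank_lt_of_not_le_twoClosure (hGH : G ≤ H) (hG : permRank G ≠ 0)
    (hH : ¬ H ≤ twoClosure G) : permRank H < permRank G := by
  have : Finite (orbitRel.Quotient G (Ω × Ω)) := Nat.finite_of_card_ne_zero hG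
  have : Finite (orbitRel.Quotient H (Ω × Ω)) := Finite.of_surjective _ (orbitalMap_surjective hGH)
  have := Fintype.ofFinite (orbitRel.Quotient G (Ω × Ω))
  have := Fintype.ofFinite (orbitRel.Quotient H (Ω × Ω))
  simp only [permRank, Nat.card_eq_fintype_card]
  exact Fintype.card_lt_of_surjective_not_injective _ (orbitalMap_surjective hGH)
    (mt (le_twoClosure_of_injective_orbitalMap hGH) hH)

theorem le_autRel_orbit (G : Subgroup (Equiv.Perm Ω)) (x : Ω × Ω) :
    G ≤ AutRel (fun a b => (a, b) ∈ orbit G x) := fun σ hσ a b => by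
  change _ ↔ (⟨σ, hσ⟩ : G) • (a, b) ∈ orbit G x
  rw [← orbit_eq_iff, orbit_smul, orbit_eq_iff]

theorem mem_of_mem_orbit_autRel {E : Ω → Ω → Prop} {p q : Ω × Ω}
    (hq : q ∈ orbit (AutRel E) p) (hp : E p.1 p.2) : E q.1 q.2 := by
  obtain ⟨σ, rfl⟩ := hq
  exact (σ.2 p.1 p.2).1 hp

theorem fst_eq_snd_iff_of_mem_orbit {p q : Ω × Ω} (hq : q ∈ orbit H p) :
    q.1 = q.2 ↔ p.1 = p.2 := by
  obtain ⟨σ, rfl⟩ := hq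
  exact (σ : Equiv.Perm Ω).injective.eq_iff

theorem diag_mem_orbit_diag [IsPretransitive G Ω] (a b : Ω) : (b, b) ∈ orbit G (a, a) := by
  obtain ⟨g, hg⟩ := exists_smul_eq G a b
  exact ⟨g, by simp [hg]⟩

theorem exists_notMem_orbit_of_two_lt_permRank (hG : 2 < permRank G) (p q : Ω × Ω) :
    ∃ y, y ∉ orbit G p ∧ y ∉ orbit G q := by
  by_contra! hcover
  have hsurj : Function.Surjective fun b : Bool =>
      cond b (⟦p⟧ : orbitRel.Quotient G (Ω × Ω)) ⟦q⟧ := by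
    rintro ⟨y⟩
    by_cases hy : y ∈ orbit G p
    · exact ⟨true, (Quotient.sound hy).symm⟩
    · exact ⟨false, (Quotient.sound (hcover y hy)).symm⟩
  have : permRank G ≤ 2 := (Nat.card_le_card_of_surjective _ hsurj).trans_eq (by simp)
  omega

theorem three_le_permRank_of_le_autRel_orbit [IsPretransitive G Ω] (hG : 2 < permRank G)
    (hGH : G ≤ H) {x : Ω × Ω} (hHx : H ≤ AutRel (fun a b => (a, b) ∈ orbit G x)) (hx : x.1 ≠ x.2) :
    3 ≤ permRank H := by
  obtain ⟨⟨y₁, y₂⟩, hy_diag, hyx⟩ := exists_notMem_orbit_of_two_lt_permRank hG (x.1, x.1) x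
  have hy : y₁ ≠ y₂ := by
    rintro rfl
    exact hy_diag (diag_mem_orbit_diag _ _)
  have : Finite (orbitRel.Quotient G (Ω × Ω)) := Nat.finite_of_card_ne_zero (ne_zero_of_lt hG)
  have : Finite (orbitRel.Quotient H (Ω × Ω)) := Finite.of_surjective _ (orbitalMap_surjective hGH)
  have := Fintype.ofFinite (orbitRel.Quotient H (Ω × Ω))
  rw [permRank, Nat.card_eq_fintype_card]
  refine Fintype.two_lt_card_iff.2 ⟨⟦(x.1, x.1)⟧, ⟦x⟧, ⟦(y₁, y₂)⟧, ?_, ?_, ?_⟩ <;>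
    intro h <;> have h := Quotient.exact h
  · exact hx ((fst_eq_snd_iff_of_mem_orbit h).1 rfl)
  · exact hy ((fst_eq_snd_iff_of_mem_orbit h).1 rfl)
  · exact hyx (mem_of_mem_orbit_autRel (orbit_subset_orbit_of_le hHx _ (mem_orbit_symm.1 h))
      (mem_orbit_self x))

end PermGroups

theorem aut_orbital_primitive_rank_three_general {Ω : Type*} (G : Subgroup (Equiv.Perm Ω))
    (hprim : IsPrimitivePerm G) (hclosed : twoClosure G = G)
    (hrank : permRank G = 4)
    (hnotaut : ∀ E : Ω → Ω → Prop, AutRel E ≠ G) :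
    ∀ O : Set (Ω × Ω), (∃ x : Ω × Ω, O = MulAction.orbit G x) →
      (∀ a : Ω, (a, a) ∉ O) →
      IsPrimitivePerm (AutRel (fun a b => (a, b) ∈ O)) ∧
        permRank (AutRel (fun a b => (a, b) ∈ O)) = 3 := by
  rintro O ⟨x, rfl⟩ hdiag
  have hGA := le_autRel_orbit G x
  have hx : x.1 ≠ x.2 := fun h =>
    hdiag x.1 (by rw [show (x.1, x.1) = x from Prod.ext rfl h]; exact mem_orbit_self x)
  have hA : ¬ AutRel (fun a b => (a, b) ∈ orbit G x) ≤ twoClosure G := fun h =>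
    hnotaut _ (le_antisymm (h.trans hclosed.le) hGA)
  have hlt := permRank_lt_of_not_le_twoClosure hGA (by omega) hA
  have : IsPretransitive G Ω := hprim.1
  have hge := three_le_permRank_of_le_autRel_orbit (by omega) hGA le_rfl hx
  exact ⟨hprim.mono hGA, by omega⟩

/-- For a primitive 2-closed rank-4 group of degree at least 4096 that is not the
automorphism group of any graph or digraph, the automorphism group of every nontrivial
orbital digraph is primitive of rank 3. -/
theorem aut_orbital_primitive_rank_three {Ω : Type*} [Fintype Ω]
    (hcard : 4096 ≤ Fintype.card Ω) (G : Subgroup (Equiv.Perm Ω))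
    (hprim : IsPrimitivePerm G) (hclosed : twoClosure G = G)
    (hrank : permRank G = 4)
    (hnotaut : ∀ E : Ω → Ω → Prop, AutRel E ≠ G) :
    ∀ O : Set (Ω × Ω), (∃ x : Ω × Ω, O = MulAction.orbit G x) →
      (∀ a : Ω, (a, a) ∉ O) →
      IsPrimitivePerm (AutRel (fun a b => (a, b) ∈ O)) ∧
        permRank (AutRel (fun a b => (a, b) ∈ O)) = 3 :=
  aut_orbital_primitive_rank_three_general G hprim hclosed hrank hnotaut
end

section
/- Let Ω be a finite set with |Ω| ≥ 4096 and let G be a primitive 2-closed permutation group on Ω with exactly 4 orbits on Ω × Ω which is not the automorphism group of any graph or digraph (for every binary relation E on Ω, Aut(E) ≠ G). Then every nontrivial orbital O of G is self-paired, i.e., (a,b) ∈ O implies (b,a) ∈ O, and the corresponding orbital graph has diameter 2: for all a,b ∈ Ω with a ≠ b and (a,b) ∉ O, there exists c ∈ Ω with (a,c) ∈ O and (c,b) ∈ O. -/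
open MulAction Pointwise

private lemma four_classes {Q : Type*} [Finite Q] (h : Nat.card Q ≤ 4)
    {a b c x y : Q} (hab : a ≠ b) (hac : a ≠ c) (hbc : b ≠ c)
    (hxa : x ≠ a) (hxb : x ≠ b) (hxc : x ≠ c)
    (hya : y ≠ a) (hyb : y ≠ b) (hyc : y ≠ c) : x = y := by
  by_contra hxy
  have hinj : Function.Injective ![a, b, c, x, y] := by
    intro i j hij
    fin_cases i <;> fin_cases j <;> simp_all
  have h5 := Nat.card_le_card_of_injective _ hinj
  simp [Nat.card_eq_fintype_card] at h5
  omega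

/-- For a primitive 2-closed rank-4 group of degree at least 4096 that is not the
automorphism group of any graph or digraph, every nontrivial orbital is self-paired and
the corresponding orbital graph has diameter 2. -/
theorem orbitals_selfPaired_diam_two {Ω : Type*} [Fintype Ω]
    (hcard : 4096 ≤ Fintype.card Ω) (G : Subgroup (Equiv.Perm Ω))
    (hprim : IsPrimitivePerm G) (hclosed : twoClosure G = G)
    (hrank : permRank G = 4)
    (hnotaut : ∀ E : Ω → Ω → Prop, AutRel E ≠ G) :
    ∀ O : Set (Ω × Ω), (∃ x : Ω × Ω, O = MulAction.orbit G x) →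
      (∀ a : Ω, (a, a) ∉ O) →
      (∀ a b : Ω, (a, b) ∈ O → (b, a) ∈ O) ∧
        (∀ a b : Ω, a ≠ b → (a, b) ∉ O → ∃ c : Ω, (a, c) ∈ O ∧ (c, b) ∈ O) := by
  classical
  intro O hOex hdiag
  obtain ⟨x₀, hO⟩ := hOex
  have htrans := hprim.1
  have hx₀O : x₀ ∈ O := hO ▸ MulAction.mem_orbit_self x₀
  have horbmem : ∀ p ∈ O, MulAction.orbit G p = O := by
    intro p hp
    rw [hO] at hp ⊢
    exact MulAction.orbit_eq_iff.mpr hp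
  have hGO : ∀ (g : G) (p : Ω × Ω), p ∈ O → g • p ∈ O := by
    intro g p hp
    rw [← horbmem p hp]
    exact MulAction.mem_orbit p g
  have hsmulp : ∀ (g : G) (p : Ω × Ω),
      g • p = ((g : Equiv.Perm Ω) p.1, (g : Equiv.Perm Ω) p.2) := fun g p => rfl
  have hGO2 : ∀ (g : G) (u v : Ω), (u, v) ∈ O →
      ((g : Equiv.Perm Ω) u, (g : Equiv.Perm Ω) v) ∈ O := by
    intro g u v h
    have := hGO g (u, v) h
    rwa [hsmulp] at this
  have hGO2' : ∀ (g : G) (u v : Ω),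
      ((g : Equiv.Perm Ω) u, (g : Equiv.Perm Ω) v) ∈ O → (u, v) ∈ O := by
    intro g u v h
    have := hGO2 g⁻¹ _ _ h
    simpa using this
  have hx₀ne : x₀.1 ≠ x₀.2 := by
    intro h
    exact hdiag x₀.1 (by rw [show ((x₀.1, x₀.1) : Ω × Ω) = x₀ from Prod.ext rfl h]; exact hx₀O)
  -- diagonal orbits
  have horbdiag : ∀ u : Ω, MulAction.orbit G (u, u) = {p : Ω × Ω | p.1 = p.2} := by
    intro u
    ext q
    constructor
    · rintro ⟨g, rfl⟩
      show (g • (u, u)).1 = (g • (u, u)).2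
      rw [hsmulp]
    · intro hq
      obtain ⟨g, hg⟩ := htrans.exists_smul_eq u q.1
      refine ⟨g, ?_⟩
      show g • (u, u) = q
      rw [hsmulp]
      exact Prod.ext (by exact hg) (by rw [show (q.1 = q.2) from hq] at hg; exact hg)
  -- quotient machinery
  have hfin : Finite (MulAction.orbitRel.Quotient G (Ω × Ω)) := Quotient.finite _
  have hcard4 : Nat.card (MulAction.orbitRel.Quotient G (Ω × Ω)) ≤ 4 := le_of_eq hrank
  set mkq : Ω × Ω → MulAction.orbitRel.Quotient G (Ω × Ω) := Quotient.mk'' with hmkqdef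
  have hmkq : ∀ p q : Ω × Ω, mkq p = mkq q ↔ p ∈ MulAction.orbit G q := by
    intro p q
    rw [hmkqdef]
    rw [Quotient.eq'']
    exact MulAction.orbitRel_apply
  -- part 1 : self-paired
  have hsp : ∀ a b : Ω, (a, b) ∈ O → (b, a) ∈ O := by
    by_contra hns
    push_neg at hns
    obtain ⟨a, b, habO, hbaO⟩ := hns
    set OT : Set (Ω × Ω) := {p | (p.2, p.1) ∈ O} with hOTdef
    have hOTorb : ∀ p ∈ OT, MulAction.orbit G p = OT := by
      intro p hp
      ext q
      constructor
      · rintro ⟨g, rfl⟩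
        show ((g • p).2, (g • p).1) ∈ O
        have := hGO2 g p.2 p.1 hp
        rw [hsmulp]
        exact this
      · intro hq
        have hq' : (q.2, q.1) ∈ MulAction.orbit G (p.2, p.1) := by
          rw [horbmem (p.2, p.1) hp]; exact hq
        obtain ⟨g, hg⟩ := hq'
        have hg2 : ((g : Equiv.Perm Ω) p.2, (g : Equiv.Perm Ω) p.1) = (q.2, q.1) := hg
        exact ⟨g, Prod.ext (congrArg Prod.snd hg2) (congrArg Prod.fst hg2)⟩
    have hOswap : (x₀.2, x₀.1) ∉ O := by
      intro h
      have h1 : MulAction.orbit G (x₀.2, x₀.1) = O := horbmem _ h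
      have h2 : MulAction.orbit G (x₀.2, x₀.1) = OT := by
        apply hOTorb
        show ((x₀.2, x₀.1).2, (x₀.2, x₀.1).1) ∈ O
        simpa using hx₀O
      have : O = OT := h1 ▸ h2
      have : (a, b) ∈ OT := this ▸ habO
      exact hbaO this
    have hOTO : ∀ p, p ∈ OT → p ∉ O := by
      intro p hpOT hpO
      have h1 : MulAction.orbit G p = O := horbmem _ hpO
      have h2 : MulAction.orbit G p = OT := hOTorb _ hpOT
      have hx : x₀ ∈ OT := by rw [← h2, h1]; exact hx₀O
      exact hOswap hx
    have hOTdiag : ∀ u : Ω, (u, u) ∉ OT := fun u h => hdiag u h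
    -- distinctness of the three classes
    have hqd1 : mkq (x₀.1, x₀.1) ≠ mkq x₀ := by
      rw [ne_eq, hmkq, horbmem _ hx₀O]
      intro h; exact hdiag x₀.1 h
    have hqd2 : mkq (x₀.1, x₀.1) ≠ mkq (x₀.2, x₀.1) := by
      rw [ne_eq, hmkq, hOTorb (x₀.2, x₀.1) (by show ((x₀.2, x₀.1).2, (x₀.2, x₀.1).1) ∈ O; simpa using hx₀O)]
      exact hOTdiag x₀.1
    have hqd3 : mkq x₀ ≠ mkq (x₀.2, x₀.1) := by
      rw [ne_eq, hmkq, hOTorb (x₀.2, x₀.1) (by show ((x₀.2, x₀.1).2, (x₀.2, x₀.1).1) ∈ O; simpa using hx₀O)]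
      intro h
      exact hOTO x₀ h hx₀O
    have hrest : ∀ p q : Ω × Ω, p ∉ {r : Ω × Ω | r.1 = r.2} → p ∉ O → p ∉ OT →
        q ∉ {r : Ω × Ω | r.1 = r.2} → q ∉ O → q ∉ OT → q ∈ MulAction.orbit G p := by
      intro p q hp1 hp2 hp3 hq1 hq2 hq3
      have h := four_classes hcard4 hqd1 hqd2 hqd3
        (x := mkq q) (y := mkq p)
        (by rw [ne_eq, hmkq, horbdiag]; exact hq1)
        (by rw [ne_eq, hmkq, horbmem _ hx₀O]; exact hq2)
        (by rw [ne_eq, hmkq, hOTorb (x₀.2, x₀.1) (by show ((x₀.2, x₀.1).2, (x₀.2, x₀.1).1) ∈ O; simpa using hx₀O)]; exact hq3)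
        (by rw [ne_eq, hmkq, horbdiag]; exact hp1)
        (by rw [ne_eq, hmkq, horbmem _ hx₀O]; exact hp2)
        (by rw [ne_eq, hmkq, hOTorb (x₀.2, x₀.1) (by show ((x₀.2, x₀.1).2, (x₀.2, x₀.1).1) ∈ O; simpa using hx₀O)]; exact hp3)
      rw [hmkq] at h
      exact h
    -- AutRel of O equals G, contradiction
    refine hnotaut (fun u v => (u, v) ∈ O) ?_
    apply le_antisymm
    · intro σ hσ
      rw [← hclosed]
      have hσ' : ∀ u v : Ω, (u, v) ∈ O ↔ (σ u, σ v) ∈ O := hσ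
      intro p
      have hps : σ • p = (σ p.1, σ p.2) := rfl
      by_cases h1 : p.1 = p.2
      · have : MulAction.orbit G p = {r : Ω × Ω | r.1 = r.2} := by
          rw [show p = (p.1, p.1) from Prod.ext rfl h1.symm]
          exact horbdiag p.1
        rw [this, hps]
        show σ p.1 = σ p.2
        rw [h1]
      · by_cases h2 : p ∈ O
        · rw [horbmem p h2, hps]
          exact (hσ' p.1 p.2).mp h2
        · by_cases h3 : p ∈ OT
          · rw [hOTorb p h3, hps]
            show (σ p.2, σ p.1) ∈ O
            exact (hσ' p.2 p.1).mp h3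
          · apply hrest p (σ • p) h1 h2 h3
            · rw [hps]
              intro h
              exact h1 (σ.injective h)
            · rw [hps]
              intro h
              exact h2 ((hσ' p.1 p.2).mpr h)
            · rw [hps]
              intro h
              exact h3 ((hσ' p.2 p.1).mpr h)
    · intro g hg
      show ∀ u v : Ω, (u, v) ∈ O ↔ (g u, g v) ∈ O
      intro u v
      exact ⟨hGO2 ⟨g, hg⟩ u v, hGO2' ⟨g, hg⟩ u v⟩
  refine ⟨hsp, ?_⟩
  -- part 2 : diameter 2
  intro a b hab habO
  by_contra hnc
  push_neg at hnc
  -- the orbital graph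
  let Gr : SimpleGraph Ω :=
    { Adj := fun u v => (u, v) ∈ O
      symm := ⟨fun u v h => hsp u v h⟩
      loopless := ⟨fun u h => hdiag u h⟩ }
  have hAdj : ∀ u v : Ω, Gr.Adj u v ↔ (u, v) ∈ O := fun u v => Iff.rfl
  have hΩne : Nonempty Ω := by
    have : 0 < Fintype.card Ω := by omega
    exact Fintype.card_pos_iff.mp this
  -- connectivity
  have hmap : ∀ (g : G) (u v : Ω), Gr.Reachable u v →
      Gr.Reachable (g • u) (g • v) := by
    intro g u v h
    exact h.map ⟨fun x => g • x, fun {x y} hxy => hGO2 g x y hxy⟩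
  have hreach : ∀ u v : Ω, Gr.Reachable u v := by
    intro u v
    have hB : MulAction.IsBlock G {w | Gr.Reachable u w} := by
      intro g₁ g₂ hne
      rw [Set.disjoint_left]
      intro w hw1 hw2
      apply hne
      have hgB : ∀ (g : G), g • {w | Gr.Reachable u w}
          = {w | Gr.Reachable (g • u) w} := by
        intro g
        ext z
        rw [Set.mem_smul_set_iff_inv_smul_mem]
        constructor
        · intro hz
          have := hmap g u (g⁻¹ • z) hz
          simpa using this
        · intro hz
          have := hmap g⁻¹ _ z hz
          simpa using this
      rw [hgB g₁] at hw1
      rw [hgB g₂] at hw2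
      rw [hgB g₁, hgB g₂]
      have h12 : Gr.Reachable (g₁ • u) (g₂ • u) :=
        hw1.trans hw2.symm
      ext z
      exact ⟨fun hz => (h12.symm.trans hz : Gr.Reachable _ z),
        fun hz => (h12.trans hz : Gr.Reachable _ z)⟩
    have htriv := hprim.2 _ hB
    rcases htriv with hss | huniv
    · exfalso
      obtain ⟨g, hg⟩ := htrans.exists_smul_eq x₀.1 u
      have hadj : Gr.Adj u (g • x₀.2) := by
        have h0 : (g • x₀.1, g • x₀.2) ∈ O := hGO2 g x₀.1 x₀.2 (by exact hx₀O)
        rw [hg] at h0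
        exact h0
      have h1 : u ∈ {w | Gr.Reachable u w} := SimpleGraph.Reachable.refl u
      have h2 : g • x₀.2 ∈ {w | Gr.Reachable u w} := hadj.reachable
      have := hss h2 h1
      exact hadj.ne' this
    · have : v ∈ {w | Gr.Reachable u w} := by rw [huniv]; trivial
      exact this
  have hconn : Gr.Connected := by
    rw [SimpleGraph.connected_iff]
    exact ⟨hreach, hΩne⟩
  -- D2 and O2
  set D2 : Set (Ω × Ω) := {p | ∃ c, (p.1, c) ∈ O ∧ (c, p.2) ∈ O} with hD2def
  have hD2inv : ∀ (g : G) (p : Ω × Ω), p ∈ D2 → g • p ∈ D2 := by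
    intro g p hp
    obtain ⟨c, hc1, hc2⟩ := hp
    refine ⟨(g : Equiv.Perm Ω) c, ?_, ?_⟩
    · exact hGO2 g p.1 c hc1
    · exact hGO2 g c p.2 hc2
  set O2 : Set (Ω × Ω) := MulAction.orbit G (a, b) with hO2def
  have habO2 : (a, b) ∈ O2 := MulAction.mem_orbit_self _
  have hO2D2 : ∀ p ∈ O2, p ∉ D2 := by
    intro p hp hpD2
    obtain ⟨g, rfl⟩ := hp
    obtain ⟨c, hc1, hc2⟩ := hpD2
    have hc1' : ((g : Equiv.Perm Ω) a, c) ∈ O := hc1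
    have hc2' : (c, (g : Equiv.Perm Ω) b) ∈ O := hc2
    have ha1 : (a, (g : Equiv.Perm Ω)⁻¹ c) ∈ O :=
      hGO2' g a ((g : Equiv.Perm Ω)⁻¹ c) (by simpa using hc1')
    have ha2 : ((g : Equiv.Perm Ω)⁻¹ c, b) ∈ O :=
      hGO2' g ((g : Equiv.Perm Ω)⁻¹ c) b (by simpa using hc2')
    exact hnc _ ha1 ha2
  have habDg : (a, b) ∉ {r : Ω × Ω | r.1 = r.2} := hab
  -- class distinctness for part 2
  have hqd1 : mkq (a, a) ≠ mkq x₀ := by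
    rw [ne_eq, hmkq, horbmem _ hx₀O]
    intro h; exact hdiag a h
  have hqd2 : mkq (a, a) ≠ mkq (a, b) := by
    rw [ne_eq, hmkq, ← hO2def]
    intro h
    have : MulAction.orbit G (a, a) = O2 := by rw [hO2def]; exact MulAction.orbit_eq_iff.mpr h
    rw [horbdiag a] at this
    have : (a, b) ∈ {r : Ω × Ω | r.1 = r.2} := by rw [this]; exact habO2
    exact hab this
  have hqd3 : mkq x₀ ≠ mkq (a, b) := by
    rw [ne_eq, hmkq, ← hO2def]
    intro h
    have h1 : MulAction.orbit G x₀ = O2 := by rw [hO2def]; exact MulAction.orbit_eq_iff.mpr h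
    have hOO2 : O = O2 := by rw [hO]; exact h1
    exact habO (by rw [hOO2]; exact habO2)
  have hO2orb : ∀ p ∈ O2, MulAction.orbit G p = O2 := by
    intro p hp
    rw [hO2def] at hp ⊢
    exact MulAction.orbit_eq_iff.mpr hp
  have hrest2 : ∀ p q : Ω × Ω, p ∉ {r : Ω × Ω | r.1 = r.2} → p ∉ O → p ∉ O2 →
      q ∉ {r : Ω × Ω | r.1 = r.2} → q ∉ O → q ∉ O2 → q ∈ MulAction.orbit G p := by
    intro p q hp1 hp2 hp3 hq1 hq2 hq3
    have h := four_classes hcard4 hqd1 hqd2 hqd3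
      (x := mkq q) (y := mkq p)
      (by rw [ne_eq, hmkq, horbdiag]; exact hq1)
      (by rw [ne_eq, hmkq, horbmem _ hx₀O]; exact hq2)
      (by rw [ne_eq, hmkq, ← hO2def]; intro h; exact hq3 (by rw [← hO2orb (a,b) habO2]; exact h))
      (by rw [ne_eq, hmkq, horbdiag]; exact hp1)
      (by rw [ne_eq, hmkq, horbmem _ hx₀O]; exact hp2)
      (by rw [ne_eq, hmkq, ← hO2def]; intro h; exact hp3 (by rw [← hO2orb (a,b) habO2]; exact h))
    rw [hmkq] at h
    exact h
  by_cases hcase : ∃ w : Ω × Ω, w ∈ D2 ∧ w ∉ {r : Ω × Ω | r.1 = r.2} ∧ w ∉ O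
  · -- leftover orbit is exactly D2 minus diag and O; AutRel O = G, contradiction
    obtain ⟨w, hwD2, hwDg, hwO⟩ := hcase
    have hwO2 : w ∉ O2 := fun h => hO2D2 w h hwD2
    have hRD2 : ∀ p : Ω × Ω, p ∉ {r : Ω × Ω | r.1 = r.2} → p ∉ O → p ∉ O2 → p ∈ D2 := by
      intro p hp1 hp2 hp3
      have : p ∈ MulAction.orbit G w := hrest2 w p hwDg hwO hwO2 hp1 hp2 hp3
      obtain ⟨g, rfl⟩ := this
      exact hD2inv g w hwD2
    refine hnotaut (fun u v => (u, v) ∈ O) ?_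
    apply le_antisymm
    · intro σ hσ
      rw [← hclosed]
      have hσ' : ∀ u v : Ω, (u, v) ∈ O ↔ (σ u, σ v) ∈ O := hσ
      have hσD2 : ∀ p : Ω × Ω, p ∈ D2 ↔ (σ p.1, σ p.2) ∈ D2 := by
        intro p
        constructor
        · rintro ⟨c, hc1, hc2⟩
          exact ⟨σ c, (hσ' p.1 c).mp hc1, (hσ' c p.2).mp hc2⟩
        · rintro ⟨c, hc1, hc2⟩
          refine ⟨σ⁻¹ c, ?_, ?_⟩
          · apply (hσ' p.1 (σ⁻¹ c)).mpr
            simpa using hc1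
          · apply (hσ' (σ⁻¹ c) p.2).mpr
            simpa using hc2
      intro p
      have hps : σ • p = (σ p.1, σ p.2) := rfl
      by_cases h1 : p.1 = p.2
      · have : MulAction.orbit G p = {r : Ω × Ω | r.1 = r.2} := by
          rw [show p = (p.1, p.1) from Prod.ext rfl h1.symm]
          exact horbdiag p.1
        rw [this, hps]
        show σ p.1 = σ p.2
        rw [h1]
      · by_cases h2 : p ∈ O
        · rw [horbmem p h2, hps]
          exact (hσ' p.1 p.2).mp h2
        · by_cases h3 : p ∈ O2
          · -- σ • p avoids diag, O, and the leftover orbit, so lies in O2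
            have hs1 : (σ p.1, σ p.2) ∉ {r : Ω × Ω | r.1 = r.2} := by
              intro h
              exact h1 (σ.injective h)
            have hs2 : (σ p.1, σ p.2) ∉ O := fun h => h2 ((hσ' p.1 p.2).mpr h)
            have hs3 : (σ p.1, σ p.2) ∉ D2 := by
              intro h
              exact hO2D2 p h3 ((hσD2 p).mpr h)
            have hs4 : (σ p.1, σ p.2) ∈ O2 := by
              by_contra hs4
              exact hs3 (hRD2 _ hs1 hs2 hs4)
            rw [hO2orb p h3]
            exact hs4
          · -- leftover orbit
            have hpD2 : p ∈ D2 := hRD2 p h1 h2 h3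
            have hσpD2 : (σ p.1, σ p.2) ∈ D2 := (hσD2 p).mp hpD2
            apply hrest2 p (σ • p) h1 h2 h3
            · rw [hps]; intro h; exact h1 (σ.injective h)
            · rw [hps]; intro h; exact h2 ((hσ' p.1 p.2).mpr h)
            · rw [hps]; intro h; exact hO2D2 _ h hσpD2
    · intro g hg
      show ∀ u v : Ω, (u, v) ∈ O ↔ (g u, g v) ∈ O
      intro u v
      exact ⟨hGO2 ⟨g, hg⟩ u v, hGO2' ⟨g, hg⟩ u v⟩
  · -- no pair outside diag ∪ O has a common neighbor: contradiction with distance geometry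
    push_neg at hcase
    -- hcase : ∀ w ∈ D2, w ∉ diag → w ∈ O
    have hd0 : Gr.dist a b ≠ 0 := by
      intro h
      exact hab ((hreach a b).dist_eq_zero_iff.mp h)
    have hd1 : Gr.dist a b ≠ 1 := by
      intro h
      exact habO (SimpleGraph.dist_eq_one_iff_adj.mp h)
    have hd2 : Gr.dist a b ≠ 2 := by
      intro h
      obtain ⟨w, hw⟩ := (hreach a b).exists_walk_length_eq_dist
      rw [h] at hw
      cases w with
      | nil => simp at hw
      | cons h₁ w₁ =>
        cases w₁ with
        | nil => simp at hw
        | cons h₂ w₂ =>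
          simp [SimpleGraph.Walk.length_cons] at hw
          have := SimpleGraph.Walk.Nil.eq hw
          subst this
          exact hnc _ h₁ h₂
    obtain ⟨w, hw⟩ := (hreach a b).exists_walk_length_eq_dist
    cases w with
    | nil => simp at hw; exact hab rfl
    | cons h₁ w₁ =>
      cases w₁ with
      | nil => simp at hw; omega
      | cons h₂ w₂ =>
        rename_i c x2
        simp only [SimpleGraph.Walk.length_cons] at hw
        have hle2 : Gr.dist a x2 ≤ 2 := by
          have := Gr.dist_le (SimpleGraph.Walk.cons h₁ (SimpleGraph.Walk.cons h₂ SimpleGraph.Walk.nil))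
          simpa using this
        have hlew : Gr.dist x2 b ≤ w₂.length := Gr.dist_le w₂
        have htri : Gr.dist a b ≤ Gr.dist a x2 + Gr.dist x2 b := hconn.dist_triangle
        have hdx2 : Gr.dist a x2 = 2 := by omega
        have hx2a : x2 ≠ a := by
          intro h
          subst h
          rw [SimpleGraph.dist_self] at hdx2
          omega
        have hax2O : (a, x2) ∉ O := by
          intro h
          have : Gr.dist a x2 = 1 := SimpleGraph.dist_eq_one_iff_adj.mpr h
          omega
        have hax2D2 : (a, x2) ∈ D2 := ⟨c, h₁, h₂⟩
        exact hax2O (hcase (a, x2) hax2D2 (fun h => hx2a (Eq.symm h)))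
end

section
/- Let Ω be a finite set and let G ≤ H be primitive permutation groups on Ω with soc(G) ≠ soc(H) (compared as subgroups of Sym(Ω)). Let X be the subgroup of Sym(Ω) generated by soc(H) and G (since soc(H) is normal in H and G ≤ H, X = soc(H)·G ≤ H). Then soc(X) = soc(H), and G is a proper subgroup of X. -/
open MulAction

section Socle

/-- A minimal normal subgroup: a nontrivial normal subgroup which is minimal among
nontrivial normal subgroups. -/
def IsMinimalNormal {K : Type*} [Group K] (N : Subgroup K) : Prop :=
  N.Normal ∧ N ≠ ⊥ ∧ ∀ M : Subgroup K, M.Normal → M ≠ ⊥ → M ≤ N → M = N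

/-- The socle of a group: the subgroup generated by all minimal normal subgroups. -/
def socleGroup (K : Type*) [Group K] : Subgroup K :=
  sSup {N : Subgroup K | IsMinimalNormal N}

/-- The socle of a permutation group `K ≤ Sym(Ω)`, regarded as a subgroup of `Sym(Ω)`. -/
def socIn {Ω : Type*} (K : Subgroup (Equiv.Perm Ω)) : Subgroup (Equiv.Perm Ω) :=
  (socleGroup K).map K.subtype

end Socle


namespace SocAux

variable {Q : Type*} [Group Q]

/-- `M` is normalized by `K` and contained in `K` (ambient normality). -/
def Nrml (K M : Subgroup Q) : Prop :=
  M ≤ K ∧ ∀ k ∈ K, ∀ m ∈ M, k * m * k⁻¹ ∈ M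

/-- ambient "minimal normal subgroup of K". -/
def MinN (K M : Subgroup Q) : Prop :=
  Nrml K M ∧ M ≠ ⊥ ∧ ∀ M' : Subgroup Q, Nrml K M' → M' ≠ ⊥ → M' ≤ M → M' = M

/-- ambient socle. -/
noncomputable def SS (K : Subgroup Q) : Subgroup Q := sSup {M | MinN K M}

lemma Nrml.conj_mem_iff {K M : Subgroup Q} (h : Nrml K M) {k : Q} (hk : k ∈ K) {m : Q} :
    k * m * k⁻¹ ∈ M ↔ m ∈ M := by
  constructor
  · intro hm
    have := h.2 k⁻¹ (inv_mem hk) _ hm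
    simpa [mul_assoc] using this
  · exact h.2 k hk m

lemma nrml_self (K : Subgroup Q) : Nrml K K :=
  ⟨le_rfl, fun k hk m hm => mul_mem (mul_mem hk hm) (inv_mem hk)⟩

lemma nrml_inf {K M M' : Subgroup Q} (h : Nrml K M) (h' : Nrml K M') : Nrml K (M ⊓ M') :=
  ⟨inf_le_left.trans h.1, fun k hk m hm => ⟨h.2 k hk m hm.1, h'.2 k hk m hm.2⟩⟩

lemma commute_of_disjoint {K M M' : Subgroup Q} (h : Nrml K M) (h' : Nrml K M')
    (hd : M ⊓ M' = ⊥) : ∀ a ∈ M, ∀ b ∈ M', a * b = b * a := by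
  intro a ha b hb
  have hc : a * b * a⁻¹ * b⁻¹ ∈ M ⊓ M' := by
    refine Subgroup.mem_inf.mpr ⟨?_, ?_⟩
    · have h1 : b * a⁻¹ * b⁻¹ ∈ M := h.2 b (h'.1 hb) a⁻¹ (inv_mem ha)
      have := mul_mem ha h1
      simpa [mul_assoc] using this
    · have h1 : a * b * a⁻¹ ∈ M' := h'.2 a (h.1 ha) b hb
      exact mul_mem h1 (inv_mem hb)
  rw [hd, Subgroup.mem_bot] at hc
  have : a * b * a⁻¹ * b⁻¹ * b * a = b * a := by rw [hc]; group
  calc a * b = a * b * a⁻¹ * b⁻¹ * b * a := by group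
  _ = b * a := this

lemma exists_minN_le [Finite Q] {K C : Subgroup Q} (hC : Nrml K C) (hne : C ≠ ⊥) :
    ∃ M, MinN K M ∧ M ≤ C := by
  have hwf : WellFounded ((· < ·) : Subgroup Q → Subgroup Q → Prop) :=
    (Finite.to_wellFoundedLT).wf
  obtain ⟨M, hM, hmin⟩ := hwf.has_min {M | Nrml K M ∧ M ≠ ⊥ ∧ M ≤ C} ⟨C, hC, hne, le_rfl⟩
  refine ⟨M, ⟨hM.1, hM.2.1, ?_⟩, hM.2.2⟩
  intro M' hM' hne' hle
  by_contra hne2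
  exact hmin M' ⟨hM', hne', hle.trans hM.2.2⟩ (lt_of_le_of_ne hle hne2)

lemma SS_le (K : Subgroup Q) : SS K ≤ K :=
  sSup_le fun _ hM => hM.1.1

lemma minN_le_SS {K M : Subgroup Q} (h : MinN K M) : M ≤ SS K := le_sSup h

lemma SS_ne_bot [Finite Q] {K : Subgroup Q} (hK : K ≠ ⊥) : SS K ≠ ⊥ := by
  obtain ⟨M, hM, -⟩ := exists_minN_le (nrml_self K) hK
  intro h
  exact hM.2.1 (le_bot_iff.mp (h ▸ minN_le_SS hM))

/-! conjugation -/

/-- conjugation of a subgroup -/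
def cnj (σ : Q) (M : Subgroup Q) : Subgroup Q := M.map (MulAut.conj σ).toMonoidHom

lemma mem_cnj {σ : Q} {M : Subgroup Q} {x : Q} : x ∈ cnj σ M ↔ σ⁻¹ * x * σ ∈ M := by
  constructor
  · rintro ⟨m, hm, rfl⟩
    simpa [MulAut.conj, mul_assoc] using hm
  · intro h
    exact ⟨σ⁻¹ * x * σ, h, by simp [MulAut.conj]; group⟩

lemma cnj_cnj (σ τ : Q) (M : Subgroup Q) : cnj σ (cnj τ M) = cnj (σ * τ) M := by
  ext x; simp [mem_cnj, mul_assoc]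

lemma cnj_one (M : Subgroup Q) : cnj 1 M = M := by ext x; simp [mem_cnj]

lemma cnj_inv_cnj (σ : Q) (M : Subgroup Q) : cnj σ⁻¹ (cnj σ M) = M := by
  rw [cnj_cnj, inv_mul_cancel, cnj_one]

lemma cnj_mono {σ : Q} {M M' : Subgroup Q} (h : M ≤ M') : cnj σ M ≤ cnj σ M' := by
  intro x hx; rw [mem_cnj] at *; exact h hx

lemma cnj_le_iff {σ : Q} {M M' : Subgroup Q} : cnj σ M ≤ M' ↔ M ≤ cnj σ⁻¹ M' := by
  constructor
  · intro h
    have := cnj_mono (σ := σ⁻¹) h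
    rwa [cnj_inv_cnj] at this
  · intro h
    have := cnj_mono (σ := σ) h
    rwa [cnj_cnj, mul_inv_cancel, cnj_one] at this

lemma cnj_bot (σ : Q) : cnj σ (⊥ : Subgroup Q) = ⊥ := by
  ext x
  simp only [mem_cnj, Subgroup.mem_bot]
  refine ⟨fun h => ?_, fun h => by simp [h]⟩
  have hx : x = σ * (σ⁻¹ * x * σ) * σ⁻¹ := by group
  rw [hx, h]; simp

lemma cnj_eq_bot_iff {σ : Q} {M : Subgroup Q} : cnj σ M = ⊥ ↔ M = ⊥ := by
  constructor
  · intro h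
    rw [← cnj_inv_cnj σ M, h, cnj_bot]
  · rintro rfl; exact cnj_bot σ

lemma cnj_inj {σ : Q} {M M' : Subgroup Q} (h : cnj σ M = cnj σ M') : M = M' := by
  rw [← cnj_inv_cnj σ M, h, cnj_inv_cnj]

lemma nrml_cnj {σ : Q} {K M : Subgroup Q} (h : Nrml K M) : Nrml (cnj σ K) (cnj σ M) := by
  constructor
  · exact cnj_mono h.1
  · intro k hk m hm
    rw [mem_cnj] at *
    have := h.2 _ hk _ hm
    convert this using 1
    group

lemma minN_cnj {σ : Q} {K M : Subgroup Q} (h : MinN K M) : MinN (cnj σ K) (cnj σ M) := by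
  refine ⟨nrml_cnj h.1, fun hb => h.2.1 (cnj_eq_bot_iff.mp hb), ?_⟩
  intro M' hM' hb hle
  have h1 : MinN K M := h
  have h2 : Nrml K (cnj σ⁻¹ M') := by
    have := nrml_cnj (σ := σ⁻¹) hM'
    rwa [cnj_inv_cnj] at this
  have h3 : cnj σ⁻¹ M' ≠ ⊥ := fun hb2 => hb (cnj_eq_bot_iff.mp hb2)
  have h4 : cnj σ⁻¹ M' ≤ M := by
    have := cnj_mono (σ := σ⁻¹) hle
    rwa [cnj_inv_cnj] at this
  have := h1.2.2 _ h2 h3 h4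
  rw [← this, cnj_cnj, mul_inv_cancel, cnj_one]

lemma cnj_SS (σ : Q) (K : Subgroup Q) : SS (cnj σ K) = cnj σ (SS K) := by
  apply le_antisymm
  · apply sSup_le
    intro M hM
    have h2 : MinN K (cnj σ⁻¹ M) := by
      have := minN_cnj (σ := σ⁻¹) hM
      rwa [cnj_inv_cnj] at this
    have := cnj_mono (σ := σ) (minN_le_SS h2)
    rwa [cnj_cnj, mul_inv_cancel, cnj_one] at this
  · rw [cnj_le_iff]
    apply sSup_le
    intro M hM
    rw [← cnj_le_iff]
    exact minN_le_SS (minN_cnj hM)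

lemma cnj_eq_self_of_mem {K : Subgroup Q} {k : Q} (hk : k ∈ K) : cnj k K = K := by
  ext x
  rw [mem_cnj]
  constructor
  · intro h
    have := mul_mem (mul_mem hk h) (inv_mem hk)
    simpa [mul_assoc] using this
  · intro h
    exact mul_mem (mul_mem (inv_mem hk) h) hk

lemma Nrml.cnj_eq_self {K M : Subgroup Q} (h : Nrml K M) {k : Q} (hk : k ∈ K) :
    cnj k M = M := by
  ext x
  rw [mem_cnj]
  constructor
  · intro hx
    have := h.2 k hk _ hx
    convert this using 1; group
  · intro hx
    have := h.2 k⁻¹ (inv_mem hk) _ hx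
    convert this using 1; group

lemma nrml_SS_of_nrml {K M : Subgroup Q} (h : Nrml K M) : Nrml K (SS M) := by
  constructor
  · exact (SS_le M).trans h.1
  · intro k hk m hm
    have h1 : cnj k (SS M) = SS M := by
      rw [← cnj_SS, h.cnj_eq_self hk]
    rw [← h1, mem_cnj]
    convert hm using 1; group

lemma nrml_SS (K : Subgroup Q) : Nrml K (SS K) := nrml_SS_of_nrml (nrml_self K)

/-- distinct minimal normals intersect trivially -/
lemma minN_disjoint {K M M' : Subgroup Q} (h : MinN K M) (h' : MinN K M') (hne : M ≠ M') :
    M ⊓ M' = ⊥ := by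
  by_contra hb
  have h1 : M ⊓ M' = M := h.2.2 _ (nrml_inf h.1 h'.1) hb inf_le_left
  have h2 : M ≤ M' := h1 ▸ inf_le_right
  exact hne (h'.2.2 M h.1 h.2.1 h2)

/-- the socle is its own socle: `SS (SS K) = SS K`. -/
lemma SS_SS [Finite Q] (K : Subgroup Q) : SS (SS K) = SS K := by
  apply le_antisymm (SS_le _)
  apply sSup_le
  intro M hM
  -- SS M = M
  have hSSM : SS M = M := by
    refine hM.2.2 _ (nrml_SS_of_nrml hM.1) (SS_ne_bot hM.2.1) (SS_le M)
  -- every minimal normal P of M is minimal normal in SS K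
  have key : ∀ P : Subgroup Q, MinN M P → MinN (SS K) P := by
    intro P hP
    have hPle : P ≤ SS K := hP.1.1.trans (minN_le_SS hM)
    -- SS K normalizes P
    have hnorm : SS K ≤ Subgroup.normalizer (P : Set Q) := by
      apply sSup_le
      intro M' hM'
      by_cases hMM : M' = M
      · subst hMM
        intro m hm
        rw [Subgroup.mem_normalizer_iff]
        intro x
        constructor
        · intro hx
          exact hP.1.2 m hm x hx
        · intro hx
          have := hP.1.2 m⁻¹ (inv_mem hm) _ hx
          simpa [mul_assoc] using this
      · have hdisj : M' ⊓ M = ⊥ := minN_disjoint hM' hM hMM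
        have hcomm := commute_of_disjoint hM'.1 hM.1 hdisj
        intro a ha
        rw [Subgroup.mem_normalizer_iff]
        intro x
        constructor
        · intro hx
          have := hcomm a ha x (hP.1.1 hx)
          rw [this]
          simpa using hx
        · intro hx
          have h2 : a * (a * x * a⁻¹) = (a * x * a⁻¹) * a := hcomm a ha _ (hP.1.1 hx)
          have h3 : a * x * a⁻¹ = x := by
            have h4 : (a * x * a⁻¹) * a = a * x := by group
            rw [h4] at h2
            exact mul_left_cancel h2
          rw [← h3]; exact hx
    refine ⟨⟨hPle, ?_⟩, hP.2.1, ?_⟩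
    · intro k hk m hm
      have := (Subgroup.mem_normalizer_iff.mp (hnorm hk) m).mp hm
      simpa [mul_assoc] using this
    · intro P' hP' hb hle
      refine hP.2.2 P' ⟨hle.trans hP.1.1, ?_⟩ hb hle
      intro k hk m hm
      exact hP'.2 k (minN_le_SS hM hk) m hm
  calc M = SS M := hSSM.symm
  _ ≤ SS (SS K) := sSup_le fun P hP => minN_le_SS (key P hP)

/-! ### Dictionary between `socIn` and `SS` -/

variable {Ω : Type*}

lemma nrml_map {K : Subgroup (Equiv.Perm Ω)} {N : Subgroup ↥K} (hN : N.Normal) :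
    Nrml K (N.map K.subtype) := by
  refine ⟨Subgroup.map_subtype_le N, ?_⟩
  rintro k hk m ⟨n, hn, rfl⟩
  exact ⟨⟨k, hk⟩ * n * ⟨k, hk⟩⁻¹, hN.conj_mem n hn ⟨k, hk⟩, rfl⟩

lemma map_ne_bot {K : Subgroup (Equiv.Perm Ω)} {N : Subgroup ↥K} (hN : N ≠ ⊥) :
    N.map K.subtype ≠ ⊥ := by
  intro h
  rw [Subgroup.map_eq_bot_iff, Subgroup.ker_subtype, le_bot_iff] at h
  exact hN h

lemma minN_map {K : Subgroup (Equiv.Perm Ω)} {N : Subgroup ↥K} (hN : IsMinimalNormal N) :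
    MinN K (N.map K.subtype) := by
  refine ⟨nrml_map hN.1, map_ne_bot hN.2.1, ?_⟩
  intro M' hM' hb' hle'
  have hM'K : M' ≤ K := hM'.1
  have h1 : (M'.subgroupOf K).Normal :=
    (Subgroup.normal_subgroupOf_iff hM'K).mpr fun h k hh hk => hM'.2 k hk h hh
  have h2 : (M'.subgroupOf K).map K.subtype = M' := by
    rw [Subgroup.subgroupOf_map_subtype, inf_eq_left.mpr hM'K]
  have h3 : M'.subgroupOf K ≠ ⊥ := by
    intro h
    rw [← h2, h, Subgroup.map_bot] at hb'
    exact hb' rfl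
  have h4 : M'.subgroupOf K ≤ N := by
    intro x hx
    have : (x : Equiv.Perm Ω) ∈ N.map K.subtype := hle' hx
    obtain ⟨n, hn, hnx⟩ := this
    have : n = x := Subtype.ext hnx
    rwa [← this]
  have := hN.2.2 _ h1 h3 h4
  rw [← h2, this]

lemma minN_subgroupOf {K M : Subgroup (Equiv.Perm Ω)} (hM : MinN K M) :
    IsMinimalNormal (M.subgroupOf K) ∧ (M.subgroupOf K).map K.subtype = M := by
  have hMK : M ≤ K := hM.1.1
  have h2 : (M.subgroupOf K).map K.subtype = M := by
    rw [Subgroup.subgroupOf_map_subtype, inf_eq_left.mpr hMK]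
  have h1 : (M.subgroupOf K).Normal :=
    (Subgroup.normal_subgroupOf_iff hMK).mpr fun h k hh hk => hM.1.2 k hk h hh
  have h3 : M.subgroupOf K ≠ ⊥ := by
    intro h
    rw [← h2, h, Subgroup.map_bot] at hM
    exact hM.2.1 rfl
  refine ⟨⟨h1, h3, ?_⟩, h2⟩
  intro N' hN'n hN'b hN'le
  have hb' : N'.map K.subtype ≠ ⊥ := map_ne_bot hN'b
  have hle' : N'.map K.subtype ≤ M := by
    rw [← h2]
    exact Subgroup.map_mono hN'le
  have := hM.2.2 _ (nrml_map hN'n) hb' hle'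
  apply Subgroup.map_injective K.subtype_injective
  rw [this, h2]

lemma socIn_eq_SS (K : Subgroup (Equiv.Perm Ω)) : socIn K = SS K := by
  have h1 : socIn K = ⨆ N ∈ {N : Subgroup ↥K | IsMinimalNormal N}, N.map K.subtype :=
    (Subgroup.gc_map_comap K.subtype).l_sSup
  rw [h1, SS]
  apply le_antisymm
  · exact iSup₂_le fun N hN => le_sSup (minN_map hN)
  · apply sSup_le
    intro M hM
    obtain ⟨hmin, hmap⟩ := minN_subgroupOf hM
    calc M = (M.subgroupOf K).map K.subtype := hmap.symm
    _ ≤ _ := le_iSup₂ (f := fun (N : Subgroup ↥K) (_ : N ∈ {N : Subgroup ↥K | IsMinimalNormal N}) => N.map K.subtype) _ hmin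

/-! ### Permutation-theoretic lemmas -/

section Perm

variable {Ω : Type*} [Fintype Ω]

/-- elementwise transitivity -/
def Trns (K : Subgroup (Equiv.Perm Ω)) : Prop := ∀ x y : Ω, ∃ k ∈ K, k x = y

lemma trns_of_primitive {K : Subgroup (Equiv.Perm Ω)} (h : IsPrimitivePerm K) : Trns K := by
  intro x y
  obtain ⟨g, hg⟩ := h.1.exists_smul_eq x y
  exact ⟨↑g, g.2, hg⟩

lemma ne_bot_of_trns [Nontrivial Ω] {K : Subgroup (Equiv.Perm Ω)} (h : Trns K) : K ≠ ⊥ := by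
  obtain ⟨x, y, hxy⟩ := exists_pair_ne Ω
  obtain ⟨k, hk, hkxy⟩ := h x y
  intro hb
  rw [hb, Subgroup.mem_bot] at hk
  rw [hk] at hkxy
  exact hxy hkxy

lemma trns_of_nrml {K N : Subgroup (Equiv.Perm Ω)} (hK : IsPrimitivePerm K)
    (hN : Nrml K N) (hb : N ≠ ⊥) : Trns N := by
  haveI hnormal : (N.subgroupOf K).Normal :=
    (Subgroup.normal_subgroupOf_iff hN.1).mpr fun h k hh hk => hN.2 k hk h hh
  have horb : ∀ x : Ω, MulAction.IsTrivialBlock (MulAction.orbit (N.subgroupOf K) x) :=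
    fun x => hK.2 _ (MulAction.IsBlock.orbit_of_normal x)
  by_cases hall : ∀ x : Ω, (MulAction.orbit (N.subgroupOf K) x).Subsingleton
  · exfalso
    apply hb
    ext σ
    simp only [Subgroup.mem_bot]
    constructor
    · intro hσ
      ext z
      have hmem : (⟨⟨σ, hN.1 hσ⟩, by rwa [Subgroup.mem_subgroupOf]⟩ : N.subgroupOf K) • z ∈
          MulAction.orbit (N.subgroupOf K) z := MulAction.mem_orbit _ _
      exact (hall z) hmem (MulAction.mem_orbit_self z)
    · rintro rfl
      exact one_mem N
  · push_neg at hall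
    obtain ⟨x₀, hx₀⟩ := hall
    have huniv : MulAction.orbit (N.subgroupOf K) x₀ = Set.univ := (horb x₀).resolve_left hx₀.not_subsingleton
    intro x y
    have hx : x ∈ MulAction.orbit (N.subgroupOf K) x₀ := huniv ▸ Set.mem_univ x
    have hy : y ∈ MulAction.orbit (N.subgroupOf K) x₀ := huniv ▸ Set.mem_univ y
    obtain ⟨gx, hgx⟩ := hx
    obtain ⟨gy, hgy⟩ := hy
    have hgxN : ((gx : ↥K) : Equiv.Perm Ω) ∈ N := Subgroup.mem_subgroupOf.mp gx.2
    have hgyN : ((gy : ↥K) : Equiv.Perm Ω) ∈ N := Subgroup.mem_subgroupOf.mp gy.2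
    refine ⟨((gy : ↥K) : Equiv.Perm Ω) * ((gx : ↥K) : Equiv.Perm Ω)⁻¹,
      mul_mem hgyN (inv_mem hgxN), ?_⟩
    have hgx' : ((gx : ↥K) : Equiv.Perm Ω) x₀ = x := hgx
    have hgy' : ((gy : ↥K) : Equiv.Perm Ω) x₀ = y := hgy
    simp only [Equiv.Perm.mul_apply]
    rw [← hgx', show ∀ (e : Equiv.Perm Ω) z, e⁻¹ (e z) = z from fun e z => e.symm_apply_apply z, hgy']

lemma eq_one_of_commute_fix {N : Subgroup (Equiv.Perm Ω)} (hT : Trns N) {c : Equiv.Perm Ω}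
    (hc : ∀ n ∈ N, n * c = c * n) {x : Ω} (hx : c x = x) : c = 1 := by
  ext y
  obtain ⟨n, hn, rfl⟩ := hT x y
  have h1 := hc n hn
  have : c (n x) = n (c x) := by
    calc c (n x) = (c * n) x := rfl
    _ = (n * c) x := by rw [h1]
    _ = n (c x) := rfl
  rw [this, hx]
  rfl

lemma cent_le_SS [Nontrivial Ω] {K : Subgroup (Equiv.Perm Ω)} (hK : IsPrimitivePerm K) :
    K ⊓ Subgroup.centralizer (SS K : Set (Equiv.Perm Ω)) ≤ SS K := by
  classical
  set C := K ⊓ Subgroup.centralizer (SS K : Set (Equiv.Perm Ω)) with hCdef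
  by_cases hCbot : C = ⊥
  · rw [hCbot]; exact bot_le
  have hCnrml : Nrml K C := by
    refine ⟨inf_le_left, ?_⟩
    intro k hk c hc
    obtain ⟨hc1, hc2⟩ := Subgroup.mem_inf.mp hc
    refine Subgroup.mem_inf.mpr ⟨mul_mem (mul_mem hk hc1) (inv_mem hk), ?_⟩
    rw [Subgroup.mem_centralizer_iff]
    intro m hm
    have hm' : k⁻¹ * m * k ∈ SS K := by
      have := (nrml_SS K).2 k⁻¹ (inv_mem hk) m hm
      simpa [mul_assoc] using this
    have hcomm := Subgroup.mem_centralizer_iff.mp hc2 _ hm'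
    calc m * (k * c * k⁻¹) = k * ((k⁻¹ * m * k) * c) * k⁻¹ := by group
    _ = k * (c * (k⁻¹ * m * k)) * k⁻¹ := by rw [hcomm]
    _ = (k * c * k⁻¹) * m := by group
  obtain ⟨W, hW, hWC⟩ := exists_minN_le hCnrml hCbot
  have hWS : W ≤ SS K := minN_le_SS hW
  have hWT : Trns W := trns_of_nrml hK hW.1 hW.2.1
  have hsemi : ∀ c ∈ C, ∀ x : Ω, c x = x → c = 1 := by
    intro c hc x hx
    exact eq_one_of_commute_fix hWT
      (fun w hw => Subgroup.mem_centralizer_iff.mp (Subgroup.mem_inf.mp hc).2 w (hWS hw)) hx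
  obtain ⟨x⟩ := (inferInstance : Nonempty Ω)
  have hinj : Function.Injective (fun c : ↥C => (c : Equiv.Perm Ω) x) := by
    intro c c' hcc
    have hmem : ((c' : Equiv.Perm Ω)⁻¹ * (c : Equiv.Perm Ω)) ∈ C :=
      mul_mem (inv_mem c'.2) c.2
    have hfix : ((c' : Equiv.Perm Ω)⁻¹ * (c : Equiv.Perm Ω)) x = x := by
      simp only [Equiv.Perm.mul_apply]
      rw [show (c : Equiv.Perm Ω) x = (c' : Equiv.Perm Ω) x from hcc]
      exact Equiv.symm_apply_apply _ _
    have h1 := hsemi _ hmem _ hfix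
    have : (c' : Equiv.Perm Ω) = (c : Equiv.Perm Ω) := by
      have := congrArg (fun σ => (c' : Equiv.Perm Ω) * σ) h1
      simpa [mul_assoc] using this.symm
    exact Subtype.ext this.symm
  have hsurj : Function.Surjective (fun w : ↥W => (w : Equiv.Perm Ω) x) := by
    intro y
    obtain ⟨n, hn, hnx⟩ := hWT x y
    exact ⟨⟨n, hn⟩, hnx⟩
  have hcard1 : Nat.card ↥C ≤ Nat.card Ω := Nat.card_le_card_of_injective _ hinj
  have hcard2 : Nat.card Ω ≤ Nat.card ↥W := Nat.card_le_card_of_surjective _ hsurj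
  have hWeqC : W = C := by
    have hsub : (W : Set (Equiv.Perm Ω)) ⊆ (C : Set (Equiv.Perm Ω)) := hWC
    have hcc : (C : Set (Equiv.Perm Ω)).ncard ≤ (W : Set (Equiv.Perm Ω)).ncard := by
      rw [← Nat.card_coe_set_eq, ← Nat.card_coe_set_eq]
      exact le_trans hcard1 hcard2
    exact SetLike.coe_injective (Set.eq_of_subset_of_ncard_le hsub hcc (Set.toFinite _))
  rw [← hWeqC]
  exact hWS

lemma primitive_of_le {G K : Subgroup (Equiv.Perm Ω)} (hGK : G ≤ K)
    (hG : IsPrimitivePerm G) : IsPrimitivePerm K := by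
  constructor
  · constructor
    intro x y
    obtain ⟨g, hg⟩ := hG.1.exists_smul_eq x y
    exact ⟨⟨↑g, hGK g.2⟩, hg⟩
  · intro B hB
    apply hG.2
    intro g₁ g₂ hne
    exact hB (g₁ := ⟨↑g₁, hGK g₁.2⟩) (g₂ := ⟨↑g₂, hGK g₂.2⟩) hne

end Perm

end SocAux

open SocAux in
/-- If `G ≤ H` are primitive permutation groups on a finite set with different socles,
then `X = soc(H)·G` has the same socle as `H` and properly contains `G`. -/
theorem socle_of_join_socle {Ω : Type*} [Fintype Ω] (G H : Subgroup (Equiv.Perm Ω))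
    (hGH : G ≤ H) (hG : IsPrimitivePerm G) (hH : IsPrimitivePerm H)
    (hsoc : socIn G ≠ socIn H) :
    socIn (socIn H ⊔ G) = socIn H ∧ G < socIn H ⊔ G := by
  classical
  rcases subsingleton_or_nontrivial Ω with hΩ | hΩ
  · exfalso
    apply hsoc
    have hGHeq : G = H := by
      ext σ
      have h1 : σ = 1 := Equiv.ext fun z => Subsingleton.elim _ _
      rw [h1]
      simp [one_mem]
    rw [hGHeq]
  · simp only [socIn_eq_SS] at hsoc ⊢
    have hGtrans := trns_of_primitive hG
    have hGbot : G ≠ ⊥ := ne_bot_of_trns hGtrans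
    have hHbot : H ≠ ⊥ := ne_bot_of_trns (trns_of_primitive hH)
    have hNleH : SS H ≤ H := SS_le H
    have hGX : G ≤ SS H ⊔ G := le_sup_right
    have hXleH : SS H ⊔ G ≤ H := sup_le hNleH hGH
    have hXprim : IsPrimitivePerm (SS H ⊔ G) := primitive_of_le hGX hG
    have hXbot : SS H ⊔ G ≠ ⊥ := fun h => hGbot (le_bot_iff.mp (h ▸ hGX))
    have hNbot : SS H ≠ ⊥ := SS_ne_bot hHbot
    have hNnrmlX : Nrml (SS H ⊔ G) (SS H) :=
      ⟨le_sup_left, fun k hk m hm => (nrml_SS H).2 k (hXleH hk) m hm⟩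
    have hSXnrml : Nrml (SS H ⊔ G) (SS (SS H ⊔ G)) := nrml_SS _
    -- soc(X) ≤ soc(H)
    have hle : SS (SS H ⊔ G) ≤ SS H := by
      apply sSup_le
      intro M hM
      by_cases hd : M ⊓ SS H = ⊥
      · exfalso
        have hcomm := commute_of_disjoint hM.1 hNnrmlX hd
        have hMle : M ≤ H ⊓ Subgroup.centralizer (SS H : Set (Equiv.Perm Ω)) := by
          intro a ha
          refine Subgroup.mem_inf.mpr ⟨hXleH (hM.1.1 ha),
            Subgroup.mem_centralizer_iff.mpr fun n hn => (hcomm a ha n hn).symm⟩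
        have hMN : M ≤ SS H := hMle.trans (cent_le_SS hH)
        have hMbot : M = ⊥ := by
          rw [← hd]
          exact le_antisymm (le_inf le_rfl hMN) inf_le_left
        exact hM.2.1 hMbot
      · have h1 := hM.2.2 _ (nrml_inf hM.1 hNnrmlX) hd inf_le_left
        rw [← h1]
        exact inf_le_right
    -- soc(H) ≤ soc(X)
    have hge : SS H ≤ SS (SS H ⊔ G) := by
      have hSN : SS (SS H) = SS H := SS_SS H
      have hSnrmlN : Nrml (SS H) (SS (SS H ⊔ G)) :=
        ⟨hle, fun n hn m hm => hSXnrml.2 n ((le_sup_left : SS H ≤ SS H ⊔ G) hn) m hm⟩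
      conv_lhs => rw [← hSN]
      apply sSup_le
      intro T hT
      by_cases hd : T ⊓ SS (SS H ⊔ G) = ⊥
      · have hcomm := commute_of_disjoint hT.1 hSnrmlN hd
        have hTle : T ≤ (SS H ⊔ G) ⊓
            Subgroup.centralizer (SS (SS H ⊔ G) : Set (Equiv.Perm Ω)) := by
          intro a ha
          refine Subgroup.mem_inf.mpr ⟨(le_sup_left : SS H ≤ SS H ⊔ G) (hT.1.1 ha),
            Subgroup.mem_centralizer_iff.mpr fun n hn => (hcomm a ha n hn).symm⟩
        exact hTle.trans (cent_le_SS hXprim)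
      · have h1 := hT.2.2 _ (nrml_inf hT.1 hSnrmlN) hd inf_le_left
        rw [← h1]
        exact inf_le_right
    have hXS : SS (SS H ⊔ G) = SS H := le_antisymm hle hge
    refine ⟨hXS, lt_of_le_of_ne hGX ?_⟩
    intro hEq
    apply hsoc
    rw [hEq, hXS]
end

section
/- Let p be a prime, d ≥ 1, and let V = (ZMod p)^d. Let H be a nontrivial subgroup of GL(V), the group of linear automorphisms of V, and suppose that H has exactly three orbits on V \ {0}, each of the same cardinality (p^d − 1)/3. Then the subgroup G of Sym(V) generated by all translations x ↦ x + v (v ∈ V) together with (the permutations of V induced by) the elements of H is a primitive permutation group on V. -/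
open MulAction

/-!
A block of the affine group containing `0` is mapped onto itself by the translations by its own
elements, so it is an additive subgroup `W`, and by `H`, which fixes `0`. Hence `W \ {0}` is a
union of `H`-orbits, all of size `m = (p ^ d - 1) / 3`, so `m ∣ |W| - 1`, while `|W| ∣ p ^ d`.
As `H` is nontrivial, `m ≥ 2`; writing `|W| - 1 = t * m` with `t ≤ 3`, the cases `t = 1, 2` are
ruled out by elementary arithmetic, so `|W| = 1` or `W = V`.
-/
open Pointwise

theorem Nat.eq_one_or_eq_of_dvd_of_three_mul_eq {a b m : ℕ} (hab : a ∣ b)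
    (hm : 3 * m = b - 1) (hm2 : 2 ≤ m) (hdvd : m ∣ a - 1) : a = 1 ∨ a = b := by
  obtain ⟨q, rfl⟩ := hab
  obtain ⟨t, ht⟩ := hdvd
  obtain ⟨a, rfl⟩ := Nat.exists_eq_add_one_of_ne_zero (n := a) <| by
    rintro rfl; simp at hm; omega
  obtain ⟨q, rfl⟩ := Nat.exists_eq_add_one_of_ne_zero (n := q) <| by
    rintro rfl; simp at hm; omega
  rw [add_tsub_cancel_right] at ht
  replace hm : 3 * m = a * q + a + q := by rw [hm]; ring_nf; omega
  have ht3 : t ≤ 3 := by nlinarith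
  interval_cases t
  · omega
  · -- `3 * (a + 1) = b + 2` with `a + 1 ∣ b` leaves only `a + 1 = 2`, `b = 4`, `m = 1`
    have : q < 2 := by nlinarith
    interval_cases q <;> omega
  · have : q < 1 := by nlinarith
    interval_cases q; omega
  · right; nlinarith

theorem MulAction.dvd_card_of_forall_card_orbit_eq {G X : Type*} [Group G] [MulAction G X]
    [Finite X] {m : ℕ} (h : ∀ x : X, Nat.card (orbit G x) = m) : m ∣ Nat.card X := by
  have := Fintype.ofFinite (orbitRel.Quotient G X)
  rw [Nat.card_congr (selfEquivSigmaOrbits G X), Nat.card_sigma]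
  exact Finset.dvd_sum fun ω _ ↦ (h _).symm ▸ dvd_rfl

theorem SubMulAction.dvd_card_of_forall_ncard_orbit_eq {G X : Type*} [Group G] [MulAction G X]
    (S : SubMulAction G X) [Finite S] {m : ℕ} (h : ∀ x ∈ S, (orbit G x).ncard = m) :
    m ∣ Nat.card S :=
  MulAction.dvd_card_of_forall_card_orbit_eq fun x ↦ by
    rw [← h x x.2, ← val_image_orbit, Set.ncard_image_of_injective _ Subtype.val_injective,
      Nat.card_coe_set_eq]

section AffineBlocks

variable {V : Type*} [AddGroup V] {G : Subgroup (Equiv.Perm V)}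

theorem isPretransitive_of_forall_addRight_mem (htr : ∀ a, Equiv.addRight a ∈ G) :
    IsPretransitive G V :=
  ⟨fun x y ↦ ⟨⟨Equiv.addRight (-x + y), htr _⟩, by simp⟩⟩

theorem MulAction.IsBlock.apply_mem_of_map_zero {B : Set V} (hB : IsBlock G B) (h0 : 0 ∈ B)
    {σ : Equiv.Perm V} (hσ : σ ∈ G) (hσ0 : σ 0 = 0) {x : V} (hx : x ∈ B) : σ x ∈ B := by
  have hfix : (⟨σ, hσ⟩ : G) • B = B := hB.smul_eq_of_mem h0 (by
    rw [Subgroup.mk_smul, Equiv.Perm.smul_def, hσ0]; exact h0)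
  rw [← hfix]
  exact Set.smul_mem_smul_set hx

theorem MulAction.IsBlock.addRight_smul_eq (htr : ∀ a, Equiv.addRight a ∈ G) {B : Set V}
    (hB : IsBlock G B) (h0 : 0 ∈ B) {y : V} (hy : y ∈ B) :
    (⟨Equiv.addRight y, htr y⟩ : G) • B = B :=
  hB.smul_eq_of_mem h0 (by simpa [Subgroup.mk_smul] using hy)

theorem MulAction.IsBlock.add_mem (htr : ∀ a, Equiv.addRight a ∈ G) {B : Set V}
    (hB : IsBlock G B) (h0 : 0 ∈ B) {x y : V} (hx : x ∈ B) (hy : y ∈ B) : x + y ∈ B := by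
  rw [← hB.addRight_smul_eq htr h0 hy]
  exact Set.smul_mem_smul_set hx

theorem MulAction.IsBlock.neg_mem (htr : ∀ a, Equiv.addRight a ∈ G) {B : Set V}
    (hB : IsBlock G B) (h0 : 0 ∈ B) {y : V} (hy : y ∈ B) : -y ∈ B := by
  rw [← hB.addRight_smul_eq htr h0 hy] at h0
  obtain ⟨w, hw, hw0 : w + y = 0⟩ := h0
  rwa [← eq_neg_of_add_eq_zero_left hw0]

def MulAction.IsBlock.addSubgroup (htr : ∀ a, Equiv.addRight a ∈ G) {B : Set V}
    (hB : IsBlock G B) (h0 : 0 ∈ B) : AddSubgroup V where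
  carrier := B
  add_mem' := hB.add_mem htr h0
  zero_mem' := h0
  neg_mem' := hB.neg_mem htr h0

theorem isPrimitivePerm_of_forall_isTrivialBlock_of_zero_mem
    (htr : ∀ a, Equiv.addRight a ∈ G)
    (h : ∀ B : Set V, IsBlock G B → 0 ∈ B → IsTrivialBlock B) : IsPrimitivePerm G := by
  have := isPretransitive_of_forall_addRight_mem htr
  have := IsPreprimitive.of_isTrivialBlock_base (G := G) (0 : V) fun h0 hB ↦ h _ hB h0
  exact ⟨inferInstance, fun _ hB ↦ hB.subsingleton_or_eq_univ⟩

end AffineBlocks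

section InvariantSubgroups

variable {R V : Type*} [Semiring R] [AddCommGroup V] [Module R V] [Finite V]
  {H : Subgroup (V ≃ₗ[R] V)}

theorem exists_ne_zero_two_le_ncard_orbit (hne : H ≠ ⊥) :
    ∃ v : V, v ≠ 0 ∧ 2 ≤ (orbit H v).ncard := by
  obtain ⟨⟨h, hh⟩, hh1⟩ := Subgroup.ne_bot_iff_exists_ne_one.mp hne
  obtain ⟨v, hv⟩ : ∃ v, h v ≠ v := by
    by_contra! hfix
    exact hh1 (Subtype.ext (LinearEquiv.ext hfix))
  refine ⟨v, fun h0 ↦ hv (by simp [h0]), (Set.one_lt_ncard_iff (Set.toFinite _)).mpr ?_⟩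
  exact ⟨(⟨h, hh⟩ : H) • v, v, mem_orbit _ _, mem_orbit_self v, hv⟩

def nonzeroSubMulAction (W : AddSubgroup V) (hW : ∀ h ∈ H, ∀ x ∈ W, h x ∈ W) :
    SubMulAction H V where
  carrier := (W : Set V) \ {0}
  smul_mem' := fun ⟨h, hh⟩ x ⟨hx, hx0⟩ ↦
    ⟨hW h hh x hx, fun h0 ↦ hx0 (h.map_eq_zero_iff.mp h0)⟩

theorem dvd_card_sub_one_of_forall_ncard_orbit_eq {W : AddSubgroup V}
    (hW : ∀ h ∈ H, ∀ x ∈ W, h x ∈ W) {m : ℕ} (horb : ∀ v : V, v ≠ 0 → (orbit H v).ncard = m) :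
    m ∣ Nat.card W - 1 := by
  have hcard : Nat.card (nonzeroSubMulAction W hW) = Nat.card W - 1 :=
    calc Nat.card (nonzeroSubMulAction W hW)
      _ = ((W : Set V) \ {0}).ncard := Nat.card_coe_set_eq _
      _ = Nat.card W - 1 := by
        rw [Set.ncard_sdiff_singleton_of_mem W.zero_mem, ← Nat.card_coe_set_eq]; rfl
  rw [← hcard]
  exact SubMulAction.dvd_card_of_forall_ncard_orbit_eq _ fun x hx ↦ horb x hx.2

theorem AddSubgroup.eq_bot_or_eq_top_of_forall_three_mul_ncard_orbit (hne : H ≠ ⊥)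
    (horb : ∀ v : V, v ≠ 0 → 3 * (orbit H v).ncard = Nat.card V - 1) {W : AddSubgroup V}
    (hW : ∀ h ∈ H, ∀ x ∈ W, h x ∈ W) : W = ⊥ ∨ W = ⊤ := by
  obtain ⟨v, hv, hm2⟩ := exists_ne_zero_two_le_ncard_orbit hne
  have horb_eq : ∀ w : V, w ≠ 0 → (orbit H w).ncard = (orbit H v).ncard := fun w hw ↦
    Nat.eq_of_mul_eq_mul_left three_pos ((horb w hw).trans (horb v hv).symm)
  rcases Nat.eq_one_or_eq_of_dvd_of_three_mul_eq W.card_addSubgroup_dvd_card (horb v hv) hm2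
    (dvd_card_sub_one_of_forall_ncard_orbit_eq hW horb_eq) with h | h
  · exact Or.inl (W.eq_bot_of_card_eq h)
  · exact Or.inr (W.card_eq_iff_eq_top.mp h)

end InvariantSubgroups

theorem affine_primitive_of_three_equal_orbits_general (p : ℕ) [Fact p.Prime] (d : ℕ)
    (H : Subgroup ((Fin d → ZMod p) ≃ₗ[ZMod p] (Fin d → ZMod p)))
    (hne : H ≠ ⊥)
    (horbsize : ∀ v : Fin d → ZMod p, v ≠ 0 →
        3 * {w : Fin d → ZMod p | ∃ h ∈ H, h v = w}.ncard = p ^ d - 1) :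
    IsPrimitivePerm (Subgroup.closure
      ((Set.range fun a : Fin d → ZMod p => Equiv.addRight a) ∪
        {σ : Equiv.Perm (Fin d → ZMod p) | ∃ h ∈ H, σ = h.toEquiv})) := by
  have horb : ∀ v : Fin d → ZMod p, v ≠ 0 →
      3 * (orbit H v).ncard = Nat.card (Fin d → ZMod p) - 1 := by
    intro v hv
    convert horbsize v hv using 3
    · ext w; simp [mem_orbit_iff]
    · simp [Nat.card_eq_fintype_card, ZMod.card]
  have htr : ∀ a, Equiv.addRight a ∈ Subgroup.closure
      ((Set.range fun a : Fin d → ZMod p => Equiv.addRight a) ∪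
        {σ : Equiv.Perm (Fin d → ZMod p) | ∃ h ∈ H, σ = h.toEquiv}) :=
    fun a ↦ Subgroup.subset_closure (Or.inl ⟨a, rfl⟩)
  refine isPrimitivePerm_of_forall_isTrivialBlock_of_zero_mem htr fun B hB h0 ↦ ?_
  set W := hB.addSubgroup htr h0
  have hW : ∀ h ∈ H, ∀ x ∈ W, h x ∈ W := fun h hh _ ↦
    hB.apply_mem_of_map_zero h0 (Subgroup.subset_closure (Or.inr ⟨h, hh, rfl⟩)) h.map_zero
  have hBW : B = W := rfl
  rcases AddSubgroup.eq_bot_or_eq_top_of_forall_three_mul_ncard_orbit hne horb hW with hW | hW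
  · left
    rw [hBW, hW, AddSubgroup.coe_bot]
    exact Set.subsingleton_singleton
  · right
    rw [hBW, hW, AddSubgroup.coe_top]

/-- If a nontrivial group `H ≤ GL(V)` of linear automorphisms of `V = (ZMod p)^d` has
exactly three orbits on `V \ {0}`, each of cardinality `(p^d - 1)/3`, then the affine
group generated by the translations of `V` together with `H` is primitive on `V`. -/
theorem affine_primitive_of_three_equal_orbits (p : ℕ) [Fact p.Prime] (d : ℕ)
    (hd : 1 ≤ d)
    (H : Subgroup ((Fin d → ZMod p) ≃ₗ[ZMod p] (Fin d → ZMod p)))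
    (hne : H ≠ ⊥)
    (horbnum : {s : Set (Fin d → ZMod p) | ∃ v : Fin d → ZMod p, v ≠ 0 ∧
        s = {w : Fin d → ZMod p | ∃ h ∈ H, h v = w}}.ncard = 3)
    (horbsize : ∀ v : Fin d → ZMod p, v ≠ 0 →
        3 * {w : Fin d → ZMod p | ∃ h ∈ H, h v = w}.ncard = p ^ d - 1) :
    IsPrimitivePerm (Subgroup.closure
      ((Set.range fun a : Fin d → ZMod p => Equiv.addRight a) ∪
        {σ : Equiv.Perm (Fin d → ZMod p) | ∃ h ∈ H, σ = h.toEquiv})) :=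
  affine_primitive_of_three_equal_orbits_general p d H hne horbsize
end

section
/- Let p be a prime and let V be a finite-dimensional vector space over ZMod p with an internal direct sum decomposition V = V1 ⊕ V2 where V1 and V2 have equal dimension. Let G0 ≤ GL(V) be a subgroup such that every element of G0 maps the set {V1, V2} of subspaces to itself, and suppose that B = (V1 ∪ V2) \ {0} is a single G0-orbit. Then the graph Γ with vertex set V in which distinct u, v are adjacent if and only if u − v ∈ B (the orbital graph of the affine group V ⋊ G0 arising from the suborbit B) is isomorphic, as a simple graph, to the Hamming graph H(2, |V1|): the graph on V1 × V2 in which two distinct pairs are adjacent if and only if they agree in exactly one coordinate. -/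
/-!
Decomposing `V = V₁ ⊕ V₂` identifies `V` with `V₁ × V₂`. Under this identification
`u - v ∈ V₁` says exactly that `u` and `v` have the same `V₂`-coordinate, and `u - v ∈ V₂`
that they have the same `V₁`-coordinate; so two distinct vectors are adjacent in the orbital
graph iff their images agree in exactly one coordinate, which is adjacency in `H(2, |V₁|)`.
-/

/-- The orbital graph of an affine group arising from the suborbit
`B = (V₁ ∪ V₂) \ {0}`: distinct `u, v` are adjacent iff `u - v ∈ B`. -/
def diffGraph {p : ℕ} {V : Type*} [AddCommGroup V] [Module (ZMod p) V]
    (V1 V2 : Submodule (ZMod p) V) : SimpleGraph V where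
  Adj u v := u - v ∈ (((V1 : Set V) ∪ (V2 : Set V)) \ {0})
  symm := by
    constructor
    intro u v h
    obtain ⟨h1, h2⟩ := h
    have h2' : v - u ∉ ({0} : Set V) := by
      simp only [Set.mem_singleton_iff] at h2 ⊢
      intro hc
      apply h2
      have huv : u - v = -(v - u) := by abel
      rw [huv, hc, neg_zero]
    refine ⟨?_, h2'⟩
    have key : v - u = -(u - v) := by abel
    rw [key]
    rcases h1 with h1 | h1
    · exact Or.inl (V1.neg_mem h1)
    · exact Or.inr (V2.neg_mem h1)
  loopless := by
    constructor
    intro v h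
    exact h.2 (by simp)

/-- The Hamming graph `H(2, k)` on pairs: two distinct pairs are adjacent iff they
agree in exactly one coordinate. -/
def hammingTwo (α β : Type*) : SimpleGraph (α × β) where
  Adj x y := (x.1 = y.1 ∧ x.2 ≠ y.2) ∨ (x.1 ≠ y.1 ∧ x.2 = y.2)
  symm := by
    constructor
    intro x y h
    rcases h with ⟨h1, h2⟩ | ⟨h1, h2⟩
    · exact Or.inl ⟨h1.symm, h2.symm⟩
    · exact Or.inr ⟨h1.symm, h2.symm⟩
  loopless := by
    constructor
    intro x h
    rcases h with ⟨_, h⟩ | ⟨h, _⟩ <;> exact h rfl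

namespace Submodule

variable {R E : Type*} [Ring R] [AddCommGroup E] [Module R E] {p q : Submodule R E}

theorem sub_mem_left_iff_prodEquivOfIsCompl_symm_snd_eq (h : IsCompl p q) (u v : E) :
    u - v ∈ p ↔
      ((prodEquivOfIsCompl p q h).symm u).2 = ((prodEquivOfIsCompl p q h).symm v).2 := by
  rw [← prodEquivOfIsCompl_symm_apply_snd_eq_zero p q h, map_sub, Prod.snd_sub, sub_eq_zero]

theorem sub_mem_right_iff_prodEquivOfIsCompl_symm_fst_eq (h : IsCompl p q) (u v : E) :
    u - v ∈ q ↔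
      ((prodEquivOfIsCompl p q h).symm u).1 = ((prodEquivOfIsCompl p q h).symm v).1 := by
  rw [← prodEquivOfIsCompl_symm_apply_fst_eq_zero p q h, map_sub, Prod.fst_sub, sub_eq_zero]

end Submodule

section

variable {p : ℕ} {V : Type*} [AddCommGroup V] [Module (ZMod p) V] {V1 V2 : Submodule (ZMod p) V}

theorem diffGraph_adj_iff (u v : V) :
    (diffGraph V1 V2).Adj u v ↔ (u - v ∈ V1 ∨ u - v ∈ V2) ∧ u ≠ v := by
  simp [diffGraph, sub_eq_zero]

noncomputable def diffGraphIsoHammingTwo (hcompl : IsCompl V1 V2) :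
    diffGraph V1 V2 ≃g hammingTwo V1 V2 where
  toEquiv := (Submodule.prodEquivOfIsCompl V1 V2 hcompl).symm.toEquiv
  map_rel_iff' {u v} := by
    rw [diffGraph_adj_iff, Submodule.sub_mem_left_iff_prodEquivOfIsCompl_symm_snd_eq hcompl,
      Submodule.sub_mem_right_iff_prodEquivOfIsCompl_symm_fst_eq hcompl,
      ← (Submodule.prodEquivOfIsCompl V1 V2 hcompl).symm.injective.ne_iff, Ne, Prod.ext_iff]
    simp only [hammingTwo, LinearEquiv.coe_toEquiv]
    tauto

end

theorem orbital_graph_iso_hamming_general (p : ℕ) {V : Type*} [AddCommGroup V]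
    [Module (ZMod p) V]
    (V1 V2 : Submodule (ZMod p) V) (hcompl : IsCompl V1 V2) :
    Nonempty (diffGraph V1 V2 ≃g hammingTwo V1 V2) :=
  ⟨diffGraphIsoHammingTwo hcompl⟩

/-- If `G₀ ≤ GL(V)` stabilises `{V₁, V₂}` where `V = V₁ ⊕ V₂` with `dim V₁ = dim V₂`,
and `(V₁ ∪ V₂) \ {0}` is a single `G₀`-orbit, then the corresponding orbital graph of
the affine group `V ⋊ G₀` is isomorphic to the Hamming graph `H(2, |V₁|)`. -/
theorem orbital_graph_iso_hamming (p : ℕ) [Fact p.Prime] {V : Type*} [AddCommGroup V]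
    [Module (ZMod p) V] [FiniteDimensional (ZMod p) V]
    (V1 V2 : Submodule (ZMod p) V) (hcompl : IsCompl V1 V2)
    (hdim : Module.finrank (ZMod p) V1 = Module.finrank (ZMod p) V2)
    (G0 : Subgroup (V ≃ₗ[ZMod p] V))
    (hstab : ∀ g ∈ G0,
      (V1.map (g : V →ₗ[ZMod p] V) = V1 ∧ V2.map (g : V →ₗ[ZMod p] V) = V2) ∨
      (V1.map (g : V →ₗ[ZMod p] V) = V2 ∧ V2.map (g : V →ₗ[ZMod p] V) = V1))
    (hB : ∃ v : V, (((V1 : Set V) ∪ (V2 : Set V)) \ {0}) = {w : V | ∃ g ∈ G0, g v = w}) :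
    Nonempty (diffGraph V1 V2 ≃g hammingTwo V1 V2) :=
  orbital_graph_iso_hamming_general p V1 V2 hcompl
end

section
/- Let p be a prime and let V be a finite-dimensional vector space over ZMod p with an internal direct sum decomposition V = V1 ⊕ V2 where V1 and V2 both have dimension m ≥ 1. Let H ≤ GL(V) be a subgroup such that: (i) every element of H maps the set {V1, V2} of subspaces to itself; (ii) H acts irreducibly on V (the only H-invariant subspaces of V are 0 and V); and (iii) H has exactly three orbits on V \ {0}. Then (V1 ∪ V2) \ {0} is a single H-orbit. -/
/-! `V₁ ∪ V₂` is `H`-invariant, and some `g₀ ∈ H` swaps `V₁` and `V₂`, since otherwise `V₁` would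
be a proper nonzero invariant subspace. So `(V₁ ∪ V₂) \ {0}` and its complement in `V \ {0}` are
nonempty unions of orbits; if the former contained two orbits, the complement would be a single
orbit. Then for nonzero `u, v ∈ V₁` we get `u + g₀ u = h (v + g₀ v)` with `h ∈ H`, and since `h`
fixes or swaps `V₁` and `V₂`, comparing `V₁`-components gives `u = h v` or `u = h (g₀ v)`. Hence
`V₁ \ {0}`, and with it `V₂ \ {0} = g₀ (V₁ \ {0})`, lies in the orbit of `v`. -/

open MulAction

namespace MulAction

variable {M α : Type*} [Monoid M] [MulAction M α]

theorem orbit_subset_of_smul_mem {S : Set α} (hS : ∀ (g : M), ∀ x ∈ S, g • x ∈ S) {x : α}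
    (hx : x ∈ S) : orbit M x ⊆ S := by
  rintro _ ⟨g, rfl⟩
  exact hS g x hx

theorem orbit_eq_of_ncard_image_orbit_eq_three {A S : Set α}
    (hS : ∀ (g : M), ∀ x ∈ S, g • x ∈ S) (hA : (orbit M '' A).ncard = 3) {x y z w : α}
    (hx : x ∈ A ∩ S) (hy : y ∈ A ∩ S) (hxy : orbit M x ≠ orbit M y) (hz : z ∈ A \ S)
    (hw : w ∈ A \ S) : orbit M w = orbit M z := by
  have orbit_ne {a b : α} (ha : a ∈ S) (hb : b ∉ S) : orbit M a ≠ orbit M b := fun h =>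
    hb (orbit_subset_of_smul_mem hS ha (h ▸ mem_orbit_self b))
  have hthree : orbit M '' A = {orbit M x, orbit M y, orbit M z} := by
    refine (Set.eq_of_subset_of_ncard_le ?_ ?_ (Set.finite_of_ncard_pos (by omega))).symm
    · simp only [Set.insert_subset_iff, Set.singleton_subset_iff]
      exact ⟨⟨x, hx.1, rfl⟩, ⟨y, hy.1, rfl⟩, ⟨z, hz.1, rfl⟩⟩
    · rw [hA, Set.ncard_eq_three.mpr ⟨_, _, _, hxy, orbit_ne hx.2 hz.2, orbit_ne hy.2 hz.2, rfl⟩]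
  have hw_mem : orbit M w ∈ orbit M '' A := ⟨w, hw.1, rfl⟩
  rw [hthree] at hw_mem
  rcases hw_mem with h | h | h
  · exact absurd h.symm (orbit_ne hx.2 hw.2)
  · exact absurd h.symm (orbit_ne hy.2 hw.2)
  · exact h

end MulAction

theorem LinearEquiv.orbit_subgroup_eq {R V : Type*} [Semiring R] [AddCommMonoid V] [Module R V]
    (H : Subgroup (V ≃ₗ[R] V)) (v : V) :
    orbit H v = {w : V | ∃ g ∈ H, g v = w} := by
  ext w
  simp [mem_orbit_iff, Subgroup.smul_def, LinearEquiv.smul_def]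

namespace Submodule

theorem apply_mem_of_map_eq {R V : Type*} [Semiring R] [AddCommMonoid V] [Module R V]
    {V₁ V₂ : Submodule R V} {g : V ≃ₗ[R] V} (hg : V₁.map (g : V →ₗ[R] V) = V₂) {x : V}
    (hx : x ∈ V₁) : g x ∈ V₂ :=
  hg ▸ mem_map_of_mem hx

variable {R V : Type*} [Ring R] [AddCommGroup V] [Module R V] {V₁ V₂ : Submodule R V}

theorem eq_of_add_eq_add_of_disjoint (h : Disjoint V₁ V₂) {a b c d : V} (ha : a ∈ V₁)
    (hb : b ∈ V₂) (hc : c ∈ V₁) (hd : d ∈ V₂) (habcd : a + b = c + d) : a = c := by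
  refine sub_eq_zero.mp (disjoint_def.mp h _ (sub_mem ha hc) ?_)
  rw [sub_eq_sub_iff_add_eq_add.mpr (habcd.trans (add_comm c d))]
  exact sub_mem hd hb

theorem add_notMem_union_of_disjoint (h : Disjoint V₁ V₂) {a b : V} (ha : a ∈ V₁) (hb : b ∈ V₂)
    (ha0 : a ≠ 0) (hb0 : b ≠ 0) : a + b ∉ (V₁ : Set V) ∪ V₂ := by
  rintro (hab | hab)
  · exact hb0 (disjoint_def.mp h b (by simpa using sub_mem hab ha) hb)
  · exact ha0 (disjoint_def.mp h a ha (by simpa using sub_mem hab hb))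

def PreservesPair (V₁ V₂ : Submodule R V) (g : V ≃ₗ[R] V) : Prop :=
  (V₁.map (g : V →ₗ[R] V) = V₁ ∧ V₂.map (g : V →ₗ[R] V) = V₂) ∨
    (V₁.map (g : V →ₗ[R] V) = V₂ ∧ V₂.map (g : V →ₗ[R] V) = V₁)

namespace PreservesPair

variable {g : V ≃ₗ[R] V}

theorem apply_mem_union (hg : PreservesPair V₁ V₂ g) {x : V} (hx : x ∈ (V₁ : Set V) ∪ V₂) :
    g x ∈ (V₁ : Set V) ∪ V₂ := by
  rcases hg with ⟨h₁, h₂⟩ | ⟨h₁, h₂⟩ <;> rcases hx with hx | hx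
  · exact .inl (apply_mem_of_map_eq h₁ hx)
  · exact .inr (apply_mem_of_map_eq h₂ hx)
  · exact .inr (apply_mem_of_map_eq h₁ hx)
  · exact .inl (apply_mem_of_map_eq h₂ hx)

theorem eq_or_eq_of_add_eq_add (hg : PreservesPair V₁ V₂ g) (h : Disjoint V₁ V₂) {a b c d : V}
    (ha : a ∈ V₁) (hb : b ∈ V₂) (hc : c ∈ V₁) (hd : d ∈ V₂) (habcd : a + b = g c + g d) :
    a = g c ∨ a = g d := by
  rcases hg with ⟨h₁, h₂⟩ | ⟨h₁, h₂⟩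
  · exact .inl (eq_of_add_eq_add_of_disjoint h ha hb (apply_mem_of_map_eq h₁ hc)
      (apply_mem_of_map_eq h₂ hd) habcd)
  · exact .inr (eq_of_add_eq_add_of_disjoint h ha hb (apply_mem_of_map_eq h₂ hd)
      (apply_mem_of_map_eq h₁ hc) (habcd.trans (add_comm _ _)))

end PreservesPair

variable (H : Subgroup (V ≃ₗ[R] V))

theorem exists_swap_of_irreducible (hH : ∀ g ∈ H, PreservesPair V₁ V₂ g)
    (hirr : ∀ W : Submodule R V, (∀ g ∈ H, ∀ w ∈ W, g w ∈ W) → W = ⊥ ∨ W = ⊤)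
    (hbot : V₁ ≠ ⊥) (htop : V₁ ≠ ⊤) :
    ∃ g ∈ H, V₁.map (g : V →ₗ[R] V) = V₂ ∧ V₂.map (g : V →ₗ[R] V) = V₁ := by
  by_contra! hswap
  have hinv : ∀ g ∈ H, ∀ w ∈ V₁, g w ∈ V₁ := by
    intro g hg w hw
    rcases hH g hg with ⟨h₁, -⟩ | ⟨h₁, h₂⟩
    · exact apply_mem_of_map_eq h₁ hw
    · exact absurd h₂ (hswap g hg h₁)
  exact (hirr V₁ hinv).elim hbot htop

variable {H}

theorem mem_orbit_of_add_apply_mem_orbit (hH : ∀ g ∈ H, PreservesPair V₁ V₂ g)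
    (hV : Disjoint V₁ V₂) {g₀ : V ≃ₗ[R] V} (hg₀ : g₀ ∈ H) (hg₀₁ : V₁.map (g₀ : V →ₗ[R] V) = V₂)
    {u v : V} (hu : u ∈ V₁) (hv : v ∈ V₁) (h : u + g₀ u ∈ orbit H (v + g₀ v)) :
    u ∈ orbit H v := by
  obtain ⟨h, hh⟩ := h
  simp only [Subgroup.smul_def, LinearEquiv.smul_def, map_add] at hh
  rcases (hH h h.2).eq_or_eq_of_add_eq_add hV hu (apply_mem_of_map_eq hg₀₁ hu) hv
    (apply_mem_of_map_eq hg₀₁ hv) hh.symm with e | e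
  · exact ⟨h, e.symm⟩
  · exact ⟨h * ⟨g₀, hg₀⟩, e.symm⟩

theorem union_diff_zero_eq_orbit (hH : ∀ g ∈ H, PreservesPair V₁ V₂ g) {g₀ : V ≃ₗ[R] V}
    (hg₀ : g₀ ∈ H) (hg₀₂ : V₂.map (g₀ : V →ₗ[R] V) = V₁) {v : V} (hv : v ∈ V₁) (hv0 : v ≠ 0)
    (hV₁ : ∀ u ∈ V₁, u ≠ 0 → u ∈ orbit H v) :
    ((V₁ : Set V) ∪ V₂) \ {0} = orbit H v := by
  ext u
  constructor
  · rintro ⟨hu | hu, hu0⟩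
    · exact hV₁ u hu hu0
    · have hmem := hV₁ (g₀ u) (apply_mem_of_map_eq hg₀₂ hu) (g₀.map_ne_zero_iff.mpr hu0)
      exact orbit_eq_iff.mp ((orbit_smul (⟨g₀, hg₀⟩ : H) u).symm.trans (orbit_eq_iff.mpr hmem))
  · rintro ⟨g, rfl⟩
    exact ⟨(hH g g.2).apply_mem_union (.inl hv), (g : V ≃ₗ[R] V).map_ne_zero_iff.mpr hv0⟩

end Submodule

open Submodule in
/-- If `H ≤ GL(V)` stabilises `{V₁, V₂}` where `V = V₁ ⊕ V₂` with
`dim V₁ = dim V₂ = m ≥ 1`, acts irreducibly on `V`, and has exactly three orbits on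
`V \ {0}`, then `(V₁ ∪ V₂) \ {0}` is a single `H`-orbit. -/
theorem union_diff_zero_is_orbit (p : ℕ) [Fact p.Prime] {V : Type*} [AddCommGroup V]
    [Module (ZMod p) V] [FiniteDimensional (ZMod p) V] (m : ℕ) (hm : 1 ≤ m)
    (V1 V2 : Submodule (ZMod p) V) (hcompl : IsCompl V1 V2)
    (hd1 : Module.finrank (ZMod p) V1 = m) (hd2 : Module.finrank (ZMod p) V2 = m)
    (H : Subgroup (V ≃ₗ[ZMod p] V))
    (hstab : ∀ g ∈ H,
      (V1.map (g : V →ₗ[ZMod p] V) = V1 ∧ V2.map (g : V →ₗ[ZMod p] V) = V2) ∨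
      (V1.map (g : V →ₗ[ZMod p] V) = V2 ∧ V2.map (g : V →ₗ[ZMod p] V) = V1))
    (hirr : ∀ W : Submodule (ZMod p) V, (∀ g ∈ H, ∀ w ∈ W, g w ∈ W) → W = ⊥ ∨ W = ⊤)
    (horb : {s : Set V | ∃ v : V, v ≠ 0 ∧ s = {w : V | ∃ g ∈ H, g v = w}}.ncard = 3) :
    ∃ v : V, (((V1 : Set V) ∪ (V2 : Set V)) \ {0}) = {w : V | ∃ g ∈ H, g v = w} := by
  have hV₁ : V1 ≠ ⊥ := one_le_finrank_iff.mp (hd1 ▸ hm)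
  have hV₂ : V2 ≠ ⊥ := one_le_finrank_iff.mp (hd2 ▸ hm)
  obtain ⟨g₀, hg₀, hg₀₁, hg₀₂⟩ := exists_swap_of_irreducible H hstab hirr hV₁
    (fun h => hV₂ (eq_bot_of_top_isCompl (h ▸ hcompl)))
  obtain ⟨v, hv, hv0⟩ := exists_mem_ne_zero_of_ne_bot hV₁
  have horbits : (orbit H '' ({0}ᶜ : Set V)).ncard = 3 := by
    convert horb using 2
    ext s
    simp [LinearEquiv.orbit_subgroup_eq, eq_comm]
  have hsum_mem {x : V} (hx : x ∈ V1) (hx0 : x ≠ 0) :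
      x + g₀ x ∈ ({0}ᶜ : Set V) \ (V1 ∪ V2) := by
    have hnot := add_notMem_union_of_disjoint hcompl.disjoint hx (apply_mem_of_map_eq hg₀₁ hx)
      hx0 (g₀.map_ne_zero_iff.mpr hx0)
    exact ⟨fun h => hnot (.inl (h ▸ V1.zero_mem)), hnot⟩
  have hS (g : H) (x : V) (hx : x ∈ (V1 : Set V) ∪ V2) : g • x ∈ (V1 : Set V) ∪ V2 :=
    PreservesPair.apply_mem_union (hstab g g.2) hx
  have hV₁_orbit : ∀ u ∈ V1, u ≠ 0 → u ∈ orbit H v := by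
    intro u hu hu0
    by_contra hnot
    have hdiag : orbit H (u + g₀ u) = orbit H (v + g₀ v) :=
      orbit_eq_of_ncard_image_orbit_eq_three hS horbits ⟨hv0, .inl hv⟩ ⟨hu0, .inl hu⟩
        (fun h => hnot (h ▸ mem_orbit_self u)) (hsum_mem hv hv0) (hsum_mem hu hu0)
    exact hnot (mem_orbit_of_add_apply_mem_orbit hstab hcompl.disjoint hg₀ hg₀₁ hu hv
      (orbit_eq_iff.mp hdiag))
  exact ⟨v, LinearEquiv.orbit_subgroup_eq H v ▸
    union_diff_zero_eq_orbit hstab hg₀ hg₀₂ hv hv0 hV₁_orbit⟩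
end

section
/- Let p be a prime and let V be a finite-dimensional vector space over ZMod p with an internal direct sum decomposition V = V1 ⊕ V2 where V1 and V2 both have dimension m ≥ 1. Let H ≤ GL(V) be a subgroup such that every element of H maps the set {V1, V2} of subspaces to itself, and suppose that (V1 ∪ V2) \ {0} is a single H-orbit. Then the cardinality of every H-orbit on V \ {0} is divisible by p^m − 1. -/
open MulAction

/-- If `H ≤ GL(V)` stabilises `{V₁, V₂}` where `V = V₁ ⊕ V₂` with
`dim V₁ = dim V₂ = m ≥ 1`, and `(V₁ ∪ V₂) \ {0}` is a single `H`-orbit, then every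
`H`-orbit on `V \ {0}` has cardinality divisible by `p^m - 1`. -/
theorem orbit_card_dvd (p : ℕ) [Fact p.Prime] {V : Type*} [AddCommGroup V]
    [Module (ZMod p) V] [FiniteDimensional (ZMod p) V] (m : ℕ) (hm : 1 ≤ m)
    (V1 V2 : Submodule (ZMod p) V) (hcompl : IsCompl V1 V2)
    (hd1 : Module.finrank (ZMod p) V1 = m) (hd2 : Module.finrank (ZMod p) V2 = m)
    (H : Subgroup (V ≃ₗ[ZMod p] V))
    (hstab : ∀ g ∈ H,
      (V1.map (g : V →ₗ[ZMod p] V) = V1 ∧ V2.map (g : V →ₗ[ZMod p] V) = V2) ∨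
      (V1.map (g : V →ₗ[ZMod p] V) = V2 ∧ V2.map (g : V →ₗ[ZMod p] V) = V1))
    (hB : ∃ v : V, (((V1 : Set V) ∪ (V2 : Set V)) \ {0}) = {w : V | ∃ g ∈ H, g v = w}) :
    ∀ v : V, v ≠ 0 → (p ^ m - 1) ∣ {w : V | ∃ g ∈ H, g v = w}.ncard := by
  classical
  haveI : Finite V := Module.finite_of_finite (ZMod p)
  set q := p ^ m - 1 with hqdef
  -- map of a submodule under a product of linear equivalences
  have hmul : ∀ (e f : V ≃ₗ[ZMod p] V) (W : Submodule (ZMod p) V),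
      W.map ((e * f : V ≃ₗ[ZMod p] V) : V →ₗ[ZMod p] V)
        = (W.map (f : V →ₗ[ZMod p] V)).map (e : V →ₗ[ZMod p] V) := by
    intro e f W
    rw [LinearEquiv.coe_toLinearMap_mul, Module.End.mul_eq_comp, Submodule.map_comp]
  have hinv : ∀ (e : V ≃ₗ[ZMod p] V) (W W' : Submodule (ZMod p) V),
      W.map (e : V →ₗ[ZMod p] V) = W' →
      W'.map ((e⁻¹ : V ≃ₗ[ZMod p] V) : V →ₗ[ZMod p] V) = W := by
    intro e W W' h
    rw [← h, ← hmul, inv_mul_cancel]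
    simp
  -- the subgroup of H preserving both V1 and V2
  let K : Subgroup ↥H :=
    { carrier := {g : ↥H |
        V1.map ((g : V ≃ₗ[ZMod p] V) : V →ₗ[ZMod p] V) = V1 ∧
        V2.map ((g : V ≃ₗ[ZMod p] V) : V →ₗ[ZMod p] V) = V2}
      one_mem' := by simp
      mul_mem' := by
        rintro a b ⟨ha1, ha2⟩ ⟨hb1, hb2⟩
        constructor
        · rw [Subgroup.coe_mul, hmul, hb1, ha1]
        · rw [Subgroup.coe_mul, hmul, hb2, ha2]
      inv_mem' := by
        rintro a ⟨ha1, ha2⟩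
        constructor
        · rw [Subgroup.coe_inv]; exact hinv _ _ _ ha1
        · rw [Subgroup.coe_inv]; exact hinv _ _ _ ha2 }
  have ksmul : ∀ (k : ↥K) (w : V),
      k • w = ((k : ↥H) : V ≃ₗ[ZMod p] V) w := fun _ _ => rfl
  have hsmul : ∀ (g : ↥H) (w : V),
      g • w = (g : V ≃ₗ[ZMod p] V) w := fun _ _ => rfl
  have hdisj : ∀ x : V, x ∈ V1 → x ∈ V2 → x = 0 :=
    fun x h1 h2 => (Submodule.disjoint_def.mp hcompl.disjoint) x h1 h2
  obtain ⟨v₀, hv₀⟩ := hB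
  -- transitivity of K on W \ {0} for W ∈ {V1, V2}
  have htrans : ∀ (W : Submodule (ZMod p) V), (W = V1 ∨ W = V2) →
      ∀ a ∈ W, a ≠ 0 → ∀ b ∈ W, b ≠ 0 → ∃ k : ↥H, k ∈ K ∧
        (k : V ≃ₗ[ZMod p] V) a = b := by
    intro W hWor a haW ha0 b hbW hb0
    have haB : a ∈ (((V1 : Set V) ∪ (V2 : Set V)) \ {0}) := by
      refine ⟨?_, ha0⟩
      rcases hWor with rfl | rfl
      · exact Or.inl haW
      · exact Or.inr haW
    have hbB : b ∈ (((V1 : Set V) ∪ (V2 : Set V)) \ {0}) := by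
      refine ⟨?_, hb0⟩
      rcases hWor with rfl | rfl
      · exact Or.inl hbW
      · exact Or.inr hbW
    rw [hv₀] at haB hbB
    obtain ⟨g, hgH, hga⟩ := haB
    obtain ⟨h, hhH, hhb⟩ := hbB
    refine ⟨⟨h, hhH⟩ * (⟨g, hgH⟩ : ↥H)⁻¹, ?_, ?_⟩
    swap
    · have : (g⁻¹ : V ≃ₗ[ZMod p] V) a = v₀ := by
        rw [← hga]; exact g.symm_apply_apply v₀
      show ((⟨h, hhH⟩ * (⟨g, hgH⟩ : ↥H)⁻¹ : ↥H) : V ≃ₗ[ZMod p] V) a = b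
      rw [Subgroup.coe_mul, Subgroup.coe_inv]
      show h ((g⁻¹ : V ≃ₗ[ZMod p] V) a) = b
      rw [this, hhb]
    · -- show it lies in K
      set k : ↥H := ⟨h, hhH⟩ * (⟨g, hgH⟩ : ↥H)⁻¹ with hk
      have hkab : (k : V ≃ₗ[ZMod p] V) a = b := by
        rw [hk, Subgroup.coe_mul, Subgroup.coe_inv]
        show h ((g⁻¹ : V ≃ₗ[ZMod p] V) a) = b
        rw [show (g⁻¹ : V ≃ₗ[ZMod p] V) a = v₀ by
          rw [← hga]; exact g.symm_apply_apply v₀, hhb]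
      rcases hstab (k : V ≃ₗ[ZMod p] V) k.2 with hP | ⟨hQ1, hQ2⟩
      · exact hP
      · exfalso
        apply hb0
        rcases hWor with rfl | rfl
        · have : b ∈ V2 := by
            rw [← hQ1, ← hkab]; exact Submodule.mem_map_of_mem haW
          exact hdisj b hbW this
        · have : b ∈ V1 := by
            rw [← hQ2, ← hkab]; exact Submodule.mem_map_of_mem haW
          exact hdisj b this hbW
  -- orbits of K on W \ {0}
  have horbW : ∀ (W : Submodule (ZMod p) V), (W = V1 ∨ W = V2) →
      ∀ a ∈ W, a ≠ 0 → orbit ↥K a = (W : Set V) \ {0} := by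
    intro W hWor a haW ha0
    ext w
    constructor
    · rintro ⟨k, rfl⟩
      show ((k : ↥H) : V ≃ₗ[ZMod p] V) a ∈ (W : Set V) \ {0}
      have hWmap : W.map (((k : ↥H) : V ≃ₗ[ZMod p] V) : V →ₗ[ZMod p] V) = W := by
        rcases hWor with rfl | rfl
        · exact k.2.1
        · exact k.2.2
      refine ⟨?_, ?_⟩
      · rw [← hWmap]; exact Submodule.mem_map_of_mem haW
      · simp only [Set.mem_singleton_iff]
        rw [LinearEquiv.map_eq_zero_iff]
        exact ha0
    · rintro ⟨hwW, hw0⟩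
      obtain ⟨k, hkK, hka⟩ := htrans W hWor a haW ha0 w hwW hw0
      exact ⟨⟨k, hkK⟩, hka⟩
  -- cardinality of W \ {0}
  have hcardW : ∀ (W : Submodule (ZMod p) V), Module.finrank (ZMod p) W = m →
      ((W : Set V) \ {0}).ncard = q := by
    intro W hd
    haveI : Fintype V := Fintype.ofFinite V
    haveI : Fintype ↥W := Fintype.ofFinite ↥W
    have hcard : Fintype.card ↥W = p ^ m := by
      rw [Module.card_eq_pow_finrank (K := ZMod p) (V := ↥W), ZMod.card, hd]
    have h0W : (0 : V) ∈ (W : Set V) := W.zero_mem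
    rw [Set.ncard_diff_singleton_of_mem h0W]
    have : (W : Set V).ncard = p ^ m := by
      rw [← Nat.card_coe_set_eq, SetLike.coe_sort_coe, Nat.card_eq_fintype_card, hcard]
    rw [this]
  -- key: every K-orbit on V \ {0} has cardinality divisible by q
  have key : ∀ w : V, w ≠ 0 → q ∣ (orbit ↥K w).ncard := by
    intro w hw0
    have hwtop : w ∈ V1 ⊔ V2 := by rw [hcompl.sup_eq_top]; trivial
    obtain ⟨w1, hw1, w2, hw2, hsum⟩ := Submodule.mem_sup.mp hwtop
    -- components are preserved by elements of K fixing w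
    have hfix : ∀ k : ↥K, k • w = w →
        ((k : ↥H) : V ≃ₗ[ZMod p] V) w1 = w1 ∧
        ((k : ↥H) : V ≃ₗ[ZMod p] V) w2 = w2 := by
      intro k hk
      set e := ((k : ↥H) : V ≃ₗ[ZMod p] V) with he
      have he1 : e w1 ∈ V1 := by
        rw [show V1 = V1.map (e : V →ₗ[ZMod p] V) from k.2.1.symm]
        exact Submodule.mem_map_of_mem hw1
      have he2 : e w2 ∈ V2 := by
        rw [show V2 = V2.map (e : V →ₗ[ZMod p] V) from k.2.2.symm]
        exact Submodule.mem_map_of_mem hw2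
      have heq : e w1 + e w2 = w1 + w2 := by
        rw [← map_add, hsum]
        rw [ksmul] at hk
        rw [hk]
      have hdiffmem : e w1 - w1 ∈ V1 := V1.sub_mem he1 hw1
      have hdiffmem2 : e w1 - w1 ∈ V2 := by
        have : e w1 - w1 = w2 - e w2 := by
          have := heq
          abel_nf
          linear_combination (norm := abel) heq
        rw [this]
        exact V2.sub_mem hw2 he2
      have h0 : e w1 - w1 = 0 := hdisj _ hdiffmem hdiffmem2
      have h1 : e w1 = w1 := by
        have := sub_eq_zero.mp h0; exact this
      refine ⟨h1, ?_⟩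
      have : e w2 = w1 + w2 - e w1 := by
        rw [← heq]; abel
      rw [this, h1]; abel
    by_cases hw1ne : w1 = (0 : V)
    · -- then w = w2 ∈ V2 \ {0}
      have hwW : w ∈ V2 := by rw [← hsum, hw1ne, zero_add]; exact hw2
      have : orbit ↥K w = (V2 : Set V) \ {0} := horbW V2 (Or.inr rfl) w hwW hw0
      rw [this, hcardW V2 hd2]
    · -- stabilizer argument via w1
      have hstab_le : stabilizer ↥K w ≤ stabilizer ↥K w1 := by
        intro k hk
        have := (hfix k hk).1
        rw [mem_stabilizer_iff, ksmul, this]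
      have hidx1 : (stabilizer ↥K w1).index = q := by
        rw [index_stabilizer, horbW V1 (Or.inl rfl) w1 hw1 hw1ne, hcardW V1 hd1]
      rw [← index_stabilizer]
      rw [← hidx1]
      exact Subgroup.index_dvd_of_le hstab_le
  intro v hv
  -- identify the set with the orbit of H
  have hset : {w : V | ∃ g ∈ H, g v = w} = orbit ↥H v := by
    ext w
    constructor
    · rintro ⟨g, hg, rfl⟩; exact ⟨⟨g, hg⟩, rfl⟩
    · rintro ⟨g, rfl⟩; exact ⟨↑g, g.2, rfl⟩
  rw [hset]
  by_cases hall : ∀ g : ↥H, g ∈ K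
  · have : orbit ↥H v = orbit ↥K v := by
      ext w
      constructor
      · rintro ⟨g, rfl⟩; exact ⟨⟨g, hall g⟩, rfl⟩
      · rintro ⟨k, rfl⟩; exact ⟨(k : ↥H), rfl⟩
    rw [this]
    exact key v hv
  · push_neg at hall
    obtain ⟨t, htK⟩ := hall
    have htQ : V1.map ((t : V ≃ₗ[ZMod p] V) : V →ₗ[ZMod p] V) = V2 ∧
        V2.map ((t : V ≃ₗ[ZMod p] V) : V →ₗ[ZMod p] V) = V1 := by
      rcases hstab (t : V ≃ₗ[ZMod p] V) t.2 with hP | hQ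
      · exact absurd hP htK
      · exact hQ
    have htinv : V1.map (((t⁻¹ : ↥H) : V ≃ₗ[ZMod p] V) : V →ₗ[ZMod p] V) = V2 ∧
        V2.map (((t⁻¹ : ↥H) : V ≃ₗ[ZMod p] V) : V →ₗ[ZMod p] V) = V1 := by
      constructor
      · rw [Subgroup.coe_inv]; exact hinv _ _ _ htQ.2
      · rw [Subgroup.coe_inv]; exact hinv _ _ _ htQ.1
    -- the orbit decomposes in at most two K-orbits
    have horb : orbit ↥H v = orbit ↥K v ∪ orbit ↥K (t • v) := by
      ext w
      constructor
      · rintro ⟨g, rfl⟩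
        rcases hstab (g : V ≃ₗ[ZMod p] V) g.2 with hP | hQ
        · exact Or.inl ⟨⟨g, hP⟩, rfl⟩
        · refine Or.inr ⟨⟨g * t⁻¹, ?_, ?_⟩, ?_⟩
          · rw [Subgroup.coe_mul, hmul, htinv.1, hQ.2]
          · rw [Subgroup.coe_mul, hmul, htinv.2, hQ.1]
          · show (g * t⁻¹ : ↥H) • (t • v) = g • v
            rw [smul_smul, inv_mul_cancel_right]
      · rintro (⟨k, rfl⟩ | ⟨k, rfl⟩)
        · exact ⟨(k : ↥H), rfl⟩
        · refine ⟨(k : ↥H) * t, ?_⟩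
          show ((k : ↥H) * t) • v = (k : ↥K) • (t • v)
          rw [mul_smul]
          rfl
    rw [horb]
    have htv0 : t • v ≠ 0 := by
      rw [hsmul]
      simp only [ne_eq, LinearEquiv.map_eq_zero_iff]
      exact hv
    by_cases heq : orbit ↥K v = orbit ↥K (t • v)
    · rw [← heq, Set.union_self]
      exact key v hv
    · have hdisjorb : Disjoint (orbit ↥K v) (orbit ↥K (t • v)) := by
        rw [Set.disjoint_left]
        intro x hx1 hx2
        apply heq
        rw [← orbit_eq_iff.mpr hx1, ← orbit_eq_iff.mpr hx2]
      rw [Set.ncard_union_eq hdisjorb (Set.toFinite _) (Set.toFinite _)]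
      exact dvd_add (key v hv) (key (t • v) htv0)
end

section
/- Let m ≥ 2, let W = (ZMod 3)^m and V = W × W (so |V| = 3^{2m}). Let L be the set of permutations of V of the form (y1, y2) ↦ (ε1·g(y1), ε2·g(y2)) or (y1, y2) ↦ (ε1·g(y2), ε2·g(y1)), where ε1, ε2 ∈ {1, −1} ⊆ ZMod 3 and g ∈ GL(W); L is a subgroup of Sym(V) (it is the central product D8 ∘ GL_m(3) preserving the tensor decomposition V = X ⊗ Y with dim X = 2, with D8 preserving a direct sum decomposition of X). Let 𝒢(m) ≤ Sym(V) be the subgroup generated by L together with all translations v ↦ v + u (u ∈ V). Then 𝒢(m) is a primitive permutation group on V, 𝒢(m) has exactly 4 orbits on V × V (rank 4), 𝒢(m) is 2-closed, and 𝒢(m) is not the automorphism group of any graph or digraph on V (for every binary relation E on V, Aut(E) ≠ 𝒢(m)). -/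
set_option synthInstance.maxHeartbeats 1000000
set_option maxHeartbeats 1600000


open MulAction

/-- The linear part `D₈ ∘ GL_m(3)` of the group `𝒢(m)`: permutations of
`V = W × W` (`W = (ZMod 3)^m`) of the form `(y₁, y₂) ↦ (ε₁·g(y₁), ε₂·g(y₂))` or
`(y₁, y₂) ↦ (ε₁·g(y₂), ε₂·g(y₁))` with `ε₁, ε₂ ∈ {1, -1}` and `g ∈ GL(W)`. -/
def tensorPartThree (m : ℕ) :
    Set (Equiv.Perm ((Fin m → ZMod 3) × (Fin m → ZMod 3))) :=
  {σ | ∃ (ε₁ ε₂ : ZMod 3) (g : (Fin m → ZMod 3) ≃ₗ[ZMod 3] (Fin m → ZMod 3)),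
    (ε₁ = 1 ∨ ε₁ = -1) ∧ (ε₂ = 1 ∨ ε₂ = -1) ∧
    ((∀ y : (Fin m → ZMod 3) × (Fin m → ZMod 3), σ y = (ε₁ • g y.1, ε₂ • g y.2)) ∨
      (∀ y : (Fin m → ZMod 3) × (Fin m → ZMod 3), σ y = (ε₁ • g y.2, ε₂ • g y.1)))}

/-- The group `𝒢(m) = V ⋊ (D₈ ∘ GL_m(3)) ≤ AGL_{2m}(3)`: generated by the linear part
together with all translations of `V`. -/
def gCal (m : ℕ) : Subgroup (Equiv.Perm ((Fin m → ZMod 3) × (Fin m → ZMod 3))) :=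
  Subgroup.closure (tensorPartThree m ∪
    Set.range fun u : (Fin m → ZMod 3) × (Fin m → ZMod 3) => Equiv.addRight u)


-- ### Auxiliary development


namespace GCalAux

abbrev Wm (m : ℕ) := Fin m → ZMod 3
abbrev Vm (m : ℕ) := Wm m × Wm m

variable {m : ℕ}

/-- class of a vector in V -/
def cls (z : Vm m) : Fin 4 :=
  if z.1 = 0 ∧ z.2 = 0 then 0
  else if z.1 = 0 ∨ z.2 = 0 then 1
  else if z.2 = z.1 ∨ z.2 = -z.1 then 2 else 3

lemma cls_eq_zero_iff (z : Vm m) : cls z = 0 ↔ z.1 = 0 ∧ z.2 = 0 := by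
  unfold cls; split_ifs with h1 h2 h3 <;> simp_all

lemma cls_eq_one_iff (z : Vm m) :
    cls z = 1 ↔ ((z.1 = 0 ∧ z.2 ≠ 0) ∨ (z.1 ≠ 0 ∧ z.2 = 0)) := by
  unfold cls; split_ifs with h1 h2 h3 <;> simp_all <;> tauto

lemma cls_eq_two_iff (z : Vm m) :
    cls z = 2 ↔ (z.1 ≠ 0 ∧ z.2 ≠ 0 ∧ (z.2 = z.1 ∨ z.2 = -z.1)) := by
  unfold cls; split_ifs with h1 h2 h3 <;> simp_all <;> tauto

lemma cls_eq_three_iff (z : Vm m) :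
    cls z = 3 ↔ (z.1 ≠ 0 ∧ z.2 ≠ 0 ∧ z.2 ≠ z.1 ∧ z.2 ≠ -z.1) := by
  unfold cls; split_ifs with h1 h2 h3 <;> simp_all <;> tauto

lemma cls_zero : cls (0 : Vm m) = 0 := by rw [cls_eq_zero_iff]; simp

end GCalAux

namespace GCalAux
variable {m : ℕ}

-- pointwise transfer helpers (char 3)
lemma w_add_self (a : Wm m) : a + a = -a := by
  funext i
  have h : ∀ x : ZMod 3, x + x = -x := by decide
  exact h (a i)

lemma w_neg_eq_self_iff {a : Wm m} : -a = a ↔ a = 0 := by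
  constructor
  · intro h
    funext i
    have h3 : ∀ x : ZMod 3, -x = x → x = 0 := by decide
    exact h3 (a i) (congrFun h i)
  · rintro rfl; simp

lemma w_key1 (a b : Wm m) : -(a + b) + (b - a) = a := by
  funext i
  have h : ∀ x y : ZMod 3, -(x + y) + (y - x) = x := by decide
  simpa using h (a i) (b i)

lemma w_key2 (a b : Wm m) : -(a + b) - (b - a) = b := by
  funext i
  have h : ∀ x y : ZMod 3, -(x + y) - (y - x) = y := by decide
  simpa using h (a i) (b i)

-- signs
lemma sign_smul_eq_zero_iff {ε : ZMod 3} (hε : ε = 1 ∨ ε = -1) {x : Wm m} :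
    ε • x = 0 ↔ x = 0 := by
  rcases hε with rfl | rfl <;> simp

lemma cls_cases (z : Vm m) : cls z = 0 ∨ cls z = 1 ∨ cls z = 2 ∨ cls z = 3 := by
  have h : ∀ j : Fin 4, j = 0 ∨ j = 1 ∨ j = 2 ∨ j = 3 := by decide
  exact h _

lemma or_pm_comm {x y : Wm m} : (y = x ∨ y = -x) ↔ (x = y ∨ x = -y) := by
  constructor
  · rintro (rfl | rfl) <;> simp
  · rintro (rfl | rfl) <;> simp

lemma cls_swap (z : Vm m) : cls (z.2, z.1) = cls z := by
  rcases z with ⟨x, y⟩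
  rcases cls_cases ((x, y) : Vm m) with h | h | h | h <;> rw [h]
  · rw [cls_eq_zero_iff] at h ⊢; tauto
  · rw [cls_eq_one_iff] at h ⊢; tauto
  · rw [cls_eq_two_iff] at h ⊢
    simp only at h ⊢
    exact ⟨h.2.1, h.1, or_pm_comm.mp h.2.2⟩
  · rw [cls_eq_three_iff] at h ⊢
    simp only at h ⊢
    have := or_pm_comm (m := m) (x := x) (y := y)
    tauto


section Lbasics
variable {m : ℕ}

def pairPerm (g : Wm m ≃ₗ[ZMod 3] Wm m) : Equiv.Perm (Vm m) :=
  Equiv.prodCongr g.toEquiv g.toEquiv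

lemma pairPerm_apply (g : Wm m ≃ₗ[ZMod 3] Wm m) (z : Vm m) :
    pairPerm g z = (g z.1, g z.2) := rfl

lemma pairPerm_mem (g : Wm m ≃ₗ[ZMod 3] Wm m) : pairPerm g ∈ tensorPartThree m :=
  ⟨1, 1, g, Or.inl rfl, Or.inl rfl, Or.inl fun y => by simp [pairPerm_apply]⟩

def swapPerm : Equiv.Perm (Vm m) := Equiv.prodComm _ _

lemma swapPerm_apply (z : Vm m) : (swapPerm z : Vm m) = (z.2, z.1) := rfl

lemma swapPerm_mem : (swapPerm : Equiv.Perm (Vm m)) ∈ tensorPartThree m :=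
  ⟨1, 1, LinearEquiv.refl _ _, Or.inl rfl, Or.inl rfl,
    Or.inr fun y => by simp [swapPerm_apply]⟩

def signPerm : Equiv.Perm (Vm m) := Equiv.prodCongr (Equiv.refl _) (Equiv.neg _)

lemma signPerm_apply (z : Vm m) : (signPerm z : Vm m) = (z.1, -z.2) := rfl

lemma signPerm_mem : (signPerm : Equiv.Perm (Vm m)) ∈ tensorPartThree m :=
  ⟨1, -1, LinearEquiv.refl _ _, Or.inl rfl, Or.inr rfl,
    Or.inl fun y => by simp [signPerm_apply]⟩

lemma one_mem_L : (1 : Equiv.Perm (Vm m)) ∈ tensorPartThree m :=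
  ⟨1, 1, LinearEquiv.refl _ _, Or.inl rfl, Or.inl rfl,
    Or.inl fun y => by simp⟩

lemma L_apply_sub {σ : Equiv.Perm (Vm m)} (hσ : σ ∈ tensorPartThree m) (u v : Vm m) :
    σ u - σ v = σ (u - v) := by
  obtain ⟨ε₁, ε₂, g, h1, h2, hf | hf⟩ := hσ <;>
  · simp only [hf, Prod.fst_sub, Prod.snd_sub, Prod.mk_sub_mk, map_sub, smul_sub]

lemma L_zero {σ : Equiv.Perm (Vm m)} (hσ : σ ∈ tensorPartThree m) : σ 0 = 0 := by
  obtain ⟨ε₁, ε₂, g, h1, h2, hf | hf⟩ := hσ <;> simp [hf]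

lemma sign_cond_iff {ε₁ ε₂ : ZMod 3} (h1 : ε₁ = 1 ∨ ε₁ = -1) (h2 : ε₂ = 1 ∨ ε₂ = -1)
    (g : Wm m ≃ₗ[ZMod 3] Wm m) (x y : Wm m) :
    (ε₂ • g y = ε₁ • g x ∨ ε₂ • g y = -(ε₁ • g x)) ↔ (y = x ∨ y = -x) := by
  have hinj := g.injective.eq_iff (a := y) (b := x)
  have hinj2 : (g y = -(g x)) ↔ (y = -x) := by
    rw [← map_neg g, (g.injective.eq_iff)]
  rcases h1 with rfl | rfl <;> rcases h2 with rfl | rfl <;>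
    simp only [one_smul, neg_smul, neg_neg, neg_inj, neg_eq_iff_eq_neg] <;>
    tauto

lemma cls_pair_smul {ε₁ ε₂ : ZMod 3} (h1 : ε₁ = 1 ∨ ε₁ = -1) (h2 : ε₂ = 1 ∨ ε₂ = -1)
    (g : Wm m ≃ₗ[ZMod 3] Wm m) (z : Vm m) :
    cls ((ε₁ • g z.1, ε₂ • g z.2) : Vm m) = cls z := by
  have e1 : ε₁ • g z.1 = 0 ↔ z.1 = 0 := by
    rw [sign_smul_eq_zero_iff h1, LinearEquiv.map_eq_zero_iff]
  have e2 : ε₂ • g z.2 = 0 ↔ z.2 = 0 := by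
    rw [sign_smul_eq_zero_iff h2, LinearEquiv.map_eq_zero_iff]
  have e3 := sign_cond_iff h1 h2 g z.1 z.2
  rcases cls_cases z with h | h | h | h <;> rw [h]
  · rw [cls_eq_zero_iff] at h
    exact (cls_eq_zero_iff _).mpr ⟨e1.mpr h.1, e2.mpr h.2⟩
  · rw [cls_eq_one_iff] at h
    rcases h with ⟨ha, hb⟩ | ⟨ha, hb⟩
    · exact (cls_eq_one_iff _).mpr (Or.inl ⟨e1.mpr ha, fun hh => hb (e2.mp hh)⟩)
    · exact (cls_eq_one_iff _).mpr (Or.inr ⟨fun hh => ha (e1.mp hh), e2.mpr hb⟩)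
  · rw [cls_eq_two_iff] at h
    exact (cls_eq_two_iff _).mpr
      ⟨fun hh => h.1 (e1.mp hh), fun hh => h.2.1 (e2.mp hh), e3.mpr h.2.2⟩
  · rw [cls_eq_three_iff] at h
    have hno : ¬(ε₂ • g z.2 = ε₁ • g z.1 ∨ ε₂ • g z.2 = -(ε₁ • g z.1)) := fun hh => by
      rcases e3.mp hh with h' | h'
      exacts [h.2.2.1 h', h.2.2.2 h']
    exact (cls_eq_three_iff _).mpr
      ⟨fun hh => h.1 (e1.mp hh), fun hh => h.2.1 (e2.mp hh),
        fun hh => hno (Or.inl hh), fun hh => hno (Or.inr hh)⟩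

lemma cls_L {σ : Equiv.Perm (Vm m)} (hσ : σ ∈ tensorPartThree m) (z : Vm m) :
    cls (σ z) = cls z := by
  obtain ⟨ε₁, ε₂, g, h1, h2, hf | hf⟩ := hσ
  · rw [hf]; exact cls_pair_smul h1 h2 g z
  · rw [hf]
    have := cls_pair_smul h1 h2 g ((z.2, z.1) : Vm m)
    simp only at this
    rw [this, cls_swap]

/-- the subgroup of permutations preserving classes of differences -/
def clsPres (m : ℕ) : Subgroup (Equiv.Perm (Vm m)) where
  carrier := {σ | ∀ u v : Vm m, cls (σ u - σ v) = cls (u - v)}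
  one_mem' := by intro u v; simp
  mul_mem' := by
    intro σ τ hσ hτ u v
    have h1 := hσ (τ u) (τ v)
    have h2 := hτ u v
    simpa [Equiv.Perm.mul_apply] using h1.trans h2
  inv_mem' := by
    intro σ hσ u v
    have := hσ (σ⁻¹ u) (σ⁻¹ v)
    simpa using this.symm

lemma L_mem_gCal {σ : Equiv.Perm (Vm m)} (hσ : σ ∈ tensorPartThree m) : σ ∈ gCal m :=
  Subgroup.subset_closure (Or.inl hσ)

lemma addRight_mem_gCal (u : Vm m) : Equiv.addRight u ∈ gCal m :=
  Subgroup.subset_closure (Or.inr ⟨u, rfl⟩)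

lemma gCal_le_clsPres : gCal m ≤ clsPres m := by
  rw [gCal, Subgroup.closure_le]
  rintro σ (hσ | ⟨u, rfl⟩)
  · intro a b
    rw [L_apply_sub hσ, cls_L hσ]
  · intro a b
    simp only [Equiv.coe_addRight]
    rw [add_sub_add_right_eq_sub]

lemma gCal_diff {σ : Equiv.Perm (Vm m)} (hσ : σ ∈ gCal m) (u v : Vm m) :
    cls (σ u - σ v) = cls (u - v) := gCal_le_clsPres hσ u v

end Lbasics


section Transitivity
variable {m : ℕ}

lemma exists_reindexed_basis {s : Set (Wm m)}
    (hs : LinearIndependent (ZMod 3) ((↑) : s → Wm m)) :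
    ∃ (b : Module.Basis (Fin m) (ZMod 3) (Wm m)) (f : s → Fin m),
      Function.Injective f ∧ ∀ v : s, b (f v) = (v : Wm m) := by
  classical
  replace hs : LinearIndepOn (ZMod 3) id s := hs
  let B : Module.Basis (hs.extend (Set.subset_univ s)) (ZMod 3) (Wm m) := Module.Basis.extend hs
  haveI : Fintype (hs.extend (Set.subset_univ s)) := (Set.toFinite _).fintype
  have hcard : Fintype.card (hs.extend (Set.subset_univ s)) = m := by
    rw [← Module.finrank_eq_card_basis B]
    simp [Module.finrank_pi]
  let e := Fintype.equivFinOfCardEq hcard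
  refine ⟨B.reindex e, fun v => e ⟨(v : Wm m), hs.subset_extend _ v.2⟩, ?_, ?_⟩
  · intro v w hvw
    have h2 := e.injective hvw
    exact Subtype.ext (by simpa using h2)
  · intro v
    rw [Module.Basis.reindex_apply]
    simp only [Equiv.symm_apply_apply]
    exact Module.Basis.extend_apply_self hs _

lemma mem_span_single {x y : Wm m} :
    y ∈ Submodule.span (ZMod 3) ({x} : Set (Wm m)) ↔ (y = 0 ∨ y = x ∨ y = -x) := by
  rw [Submodule.mem_span_singleton]
  constructor
  · rintro ⟨a, rfl⟩
    have h3 : ∀ a : ZMod 3, a = 0 ∨ a = 1 ∨ a = -1 := by decide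
    rcases h3 a with rfl | rfl | rfl
    · left; simp
    · right; left; simp
    · right; right; simp
  · rintro (rfl | rfl | rfl)
    exacts [⟨0, by simp⟩, ⟨1, by simp⟩, ⟨-1, by simp⟩]

lemma exists_glequiv_single {x x' : Wm m} (hx : x ≠ 0) (hx' : x' ≠ 0) :
    ∃ g : Wm m ≃ₗ[ZMod 3] Wm m, g x = x' := by
  obtain ⟨b, f, _, hb⟩ := exists_reindexed_basis (LinearIndepOn.singleton (R := ZMod 3) (v := id) hx)
  obtain ⟨b', f', _, hb'⟩ := exists_reindexed_basis (LinearIndepOn.singleton (R := ZMod 3) (v := id) hx')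
  set i := f ⟨x, rfl⟩
  set i' := f' ⟨x', rfl⟩
  refine ⟨b.equiv b' (Equiv.swap i i'), ?_⟩
  have : b i = x := hb _
  rw [← this, Module.Basis.equiv_apply, Equiv.swap_apply_left]
  exact hb' _

lemma pair_indep {x y : Wm m} (hx : x ≠ 0) (hy : y ≠ 0) (h1 : y ≠ x) (h2 : y ≠ -x) :
    LinearIndependent (ZMod 3) ((↑) : ({x, y} : Set (Wm m)) → Wm m) := by
  have hxy : x ∉ ({y} : Set (Wm m)) := by
    simp only [Set.mem_singleton_iff]
    exact fun h => h1 h.symm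
  rw [linearIndependent_subtype_iff, show ({x, y} : Set (Wm m)) = insert x {y} from rfl, linearIndepOn_id_insert hxy]
  refine ⟨LinearIndepOn.singleton (v := id) hy, ?_⟩
  rw [mem_span_single]
  push_neg
  refine ⟨hx, fun h => h1 h.symm, fun h => h2 (by rw [h]; simp)⟩

lemma exists_glequiv_pair {x y x' y' : Wm m} (hx : x ≠ 0) (hy : y ≠ 0)
    (h1 : y ≠ x) (h2 : y ≠ -x) (hx' : x' ≠ 0) (hy' : y' ≠ 0)
    (h1' : y' ≠ x') (h2' : y' ≠ -x') :
    ∃ g : Wm m ≃ₗ[ZMod 3] Wm m, g x = x' ∧ g y = y' := by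
  obtain ⟨b, f, hfinj, hb⟩ := exists_reindexed_basis (pair_indep hx hy h1 h2)
  obtain ⟨b', f', hfinj', hb'⟩ := exists_reindexed_basis (pair_indep hx' hy' h1' h2')
  set i := f ⟨x, by simp⟩
  set j := f ⟨y, by simp⟩
  set i' := f' ⟨x', by simp⟩
  set j' := f' ⟨y', by simp⟩
  have hij : i ≠ j := fun h => h1 (by
    have := congrArg Subtype.val (hfinj h); simp at this; exact this.symm)
  have hij' : i' ≠ j' := fun h => h1' (by
    have := congrArg Subtype.val (hfinj' h); simp at this; exact this.symm)
  set τ₁ := Equiv.swap i i'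
  set j₁ := τ₁ j
  have hj₁ : j₁ ≠ i' := by
    intro h
    have h2' : τ₁ j = τ₁ i := by
      rw [Equiv.swap_apply_left]
      exact h
    exact hij (τ₁.injective h2').symm
  set τ₂ := Equiv.swap j₁ j'
  set τ := τ₁.trans τ₂ with hτ
  have hτi : τ i = i' := by
    simp only [hτ, Equiv.trans_apply, τ₁, Equiv.swap_apply_left]
    exact Equiv.swap_apply_of_ne_of_ne (fun h => hj₁ h.symm) hij'
  have hτj : τ j = j' := by
    simp only [hτ, Equiv.trans_apply]
    exact Equiv.swap_apply_left _ _
  refine ⟨b.equiv b' τ, ?_, ?_⟩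
  · have hbx : b i = x := hb _
    rw [← hbx, Module.Basis.equiv_apply, hτi]; exact hb' _
  · have hby : b j = y := hb _
    rw [← hby, Module.Basis.equiv_apply, hτj]; exact hb' _

end Transitivity


section Orbits
variable {m : ℕ}

lemma signPair_apply (g : Wm m ≃ₗ[ZMod 3] Wm m) (z : Vm m) :
    ((pairPerm g).trans signPerm) z = (g z.1, -(g z.2)) := rfl

lemma swapPair_apply (g : Wm m ≃ₗ[ZMod 3] Wm m) (z : Vm m) :
    ((pairPerm g).trans swapPerm) z = (g z.2, g z.1) := rfl

lemma swapPair_mem (g : Wm m ≃ₗ[ZMod 3] Wm m) :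
    (pairPerm g).trans swapPerm ∈ tensorPartThree m :=
  ⟨1, 1, g, Or.inl rfl, Or.inl rfl, Or.inr fun y => by simp [swapPerm_apply, pairPerm_apply]⟩

lemma signPair_mem (g : Wm m ≃ₗ[ZMod 3] Wm m) :
    (pairPerm g).trans signPerm ∈ tensorPartThree m :=
  ⟨1, -1, g, Or.inl rfl, Or.inr rfl, Or.inl fun y => by simp [signPerm_apply, pairPerm_apply]⟩

/-- transitivity of the linear part on each class -/
lemma exists_L_perm {z z' : Vm m} (h : cls z = cls z') :
    ∃ σ : Equiv.Perm (Vm m), σ ∈ tensorPartThree m ∧ σ z = z' := by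
  rcases cls_cases z with h0 | h0 | h0 | h0
  · -- class 0
    rw [h0] at h
    rw [cls_eq_zero_iff] at h0
    have h0' := (cls_eq_zero_iff z').mp h.symm
    refine ⟨1, one_mem_L, ?_⟩
    have hz : z = 0 := Prod.ext h0.1 h0.2
    have hz' : z' = 0 := Prod.ext h0'.1 h0'.2
    simp [hz, hz']
  · -- class 1
    rw [h0] at h
    rw [cls_eq_one_iff] at h0
    have h0' := (cls_eq_one_iff z').mp h.symm
    rcases h0 with ⟨ha, hb⟩ | ⟨ha, hb⟩ <;> rcases h0' with ⟨ha', hb'⟩ | ⟨ha', hb'⟩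
    · -- (0,y) ↦ (0,y')
      obtain ⟨g, hg⟩ := exists_glequiv_single hb hb'
      refine ⟨pairPerm g, pairPerm_mem g, ?_⟩
      rw [pairPerm_apply, ha, map_zero, hg, ← ha']
    · -- (0,y) ↦ (x',0)
      obtain ⟨g, hg⟩ := exists_glequiv_single hb ha'
      refine ⟨(pairPerm g).trans swapPerm, swapPair_mem g, ?_⟩
      rw [swapPair_apply, ha, map_zero, hg, ← hb']
    · -- (x,0) ↦ (0,y')
      obtain ⟨g, hg⟩ := exists_glequiv_single ha hb'
      refine ⟨(pairPerm g).trans swapPerm, swapPair_mem g, ?_⟩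
      rw [swapPair_apply, hb, map_zero, hg, ← ha']
    · -- (x,0) ↦ (x',0)
      obtain ⟨g, hg⟩ := exists_glequiv_single ha ha'
      refine ⟨pairPerm g, pairPerm_mem g, ?_⟩
      rw [pairPerm_apply, hb, map_zero, hg, ← hb']
  · -- class 2
    rw [h0] at h
    rw [cls_eq_two_iff] at h0
    have h0' := (cls_eq_two_iff z').mp h.symm
    obtain ⟨ha, hb, hc⟩ := h0
    obtain ⟨ha', hb', hc'⟩ := h0'
    obtain ⟨g, hg⟩ := exists_glequiv_single ha ha'
    rcases hc with hc | hc <;> rcases hc' with hc' | hc'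
    · refine ⟨pairPerm g, pairPerm_mem g, ?_⟩
      rw [pairPerm_apply, hc, hg]
      exact Prod.ext rfl hc'.symm
    · refine ⟨(pairPerm g).trans signPerm, signPair_mem g, ?_⟩
      rw [signPair_apply, hc, hg]
      exact Prod.ext rfl (by rw [hc'])
    · refine ⟨(pairPerm g).trans signPerm, signPair_mem g, ?_⟩
      rw [signPair_apply, hc, map_neg, hg, neg_neg]
      exact Prod.ext rfl hc'.symm
    · refine ⟨pairPerm g, pairPerm_mem g, ?_⟩
      rw [pairPerm_apply, hc, map_neg, hg]
      exact Prod.ext rfl (by rw [hc'])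
  · -- class 3
    rw [h0] at h
    rw [cls_eq_three_iff] at h0
    have h0' := (cls_eq_three_iff z').mp h.symm
    obtain ⟨ha, hb, hc, hd⟩ := h0
    obtain ⟨ha', hb', hc', hd'⟩ := h0'
    obtain ⟨g, hg1, hg2⟩ := exists_glequiv_pair ha hb hc hd ha' hb' hc' hd'
    refine ⟨pairPerm g, pairPerm_mem g, ?_⟩
    rw [pairPerm_apply, hg1, hg2]

lemma exists_gCal_two {a b a' b' : Vm m} (h : cls (b - a) = cls (b' - a')) :
    ∃ σ : Equiv.Perm (Vm m), σ ∈ gCal m ∧ σ a = a' ∧ σ b = b' := by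
  obtain ⟨ℓ, hℓ, hz⟩ := exists_L_perm h
  refine ⟨Equiv.addRight a' * ℓ * Equiv.addRight (-a), ?_, ?_, ?_⟩
  · exact Subgroup.mul_mem _ (Subgroup.mul_mem _ (addRight_mem_gCal a') (L_mem_gCal hℓ))
      (addRight_mem_gCal (-a))
  · show ℓ (a + -a) + a' = a'
    rw [add_neg_cancel, L_zero hℓ, zero_add]
  · show ℓ (b + -a) + a' = b'
    rw [← sub_eq_add_neg, hz, sub_add_cancel]

lemma subgroup_smul_pair (σ : gCal m) (p : Vm m × Vm m) :
    σ • p = ((σ : Equiv.Perm (Vm m)) p.1, (σ : Equiv.Perm (Vm m)) p.2) := rfl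

lemma orbit_gCal (p : Vm m × Vm m) :
    orbit (gCal m) p = {q : Vm m × Vm m | cls (q.2 - q.1) = cls (p.2 - p.1)} := by
  ext q
  constructor
  · rintro ⟨σ, rfl⟩
    show cls ((σ : Equiv.Perm (Vm m)) p.2 - (σ : Equiv.Perm (Vm m)) p.1) = cls (p.2 - p.1)
    exact gCal_diff σ.2 p.2 p.1
  · intro hq
    obtain ⟨σ, hσ, h1, h2⟩ := exists_gCal_two (hq : cls (q.2 - q.1) = cls (p.2 - p.1)).symm
    exact ⟨⟨σ, hσ⟩, by show (⟨σ, hσ⟩ : gCal m) • p = q; rw [subgroup_smul_pair]; exact Prod.ext h1 h2⟩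

end Orbits


section Rank
variable {m : ℕ}

def d0 (m : ℕ) : Wm m := fun i => if (i : ℕ) = 0 then 1 else 0
def d1 (m : ℕ) : Wm m := fun i => if (i : ℕ) = 1 then 1 else 0

lemma d0_ne (hm : 2 ≤ m) : d0 m ≠ 0 := by
  intro h
  have h0 : 0 < m := by omega
  have := congrFun h ⟨0, h0⟩
  simp [d0] at this

lemma d1_ne (hm : 2 ≤ m) : d1 m ≠ 0 := by
  intro h
  have h1 : 1 < m := by omega
  have := congrFun h ⟨1, h1⟩
  simp [d1] at this

lemma d1_ne_d0 (hm : 2 ≤ m) : d1 m ≠ d0 m := by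
  intro h
  have h0 : 0 < m := by omega
  have := congrFun h ⟨0, h0⟩
  simp [d0, d1] at this

lemma d1_ne_neg_d0 (hm : 2 ≤ m) : d1 m ≠ -(d0 m) := by
  intro h
  have h0 : 0 < m := by omega
  have := congrFun h ⟨0, h0⟩
  rw [Pi.neg_apply] at this
  simp only [d0, d1] at this
  norm_num at this

def rep (hm : 2 ≤ m) : Fin 4 → Vm m :=
  ![(0, 0), (d0 m, 0), (d0 m, d0 m), (d0 m, d1 m)]

lemma cls_rep (hm : 2 ≤ m) : ∀ j : Fin 4, cls (rep hm j) = j := by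
  intro j
  fin_cases j
  · exact (cls_eq_zero_iff _).mpr ⟨rfl, rfl⟩
  · exact (cls_eq_one_iff _).mpr (Or.inr ⟨d0_ne hm, rfl⟩)
  · exact (cls_eq_two_iff _).mpr ⟨d0_ne hm, d0_ne hm, Or.inl rfl⟩
  · exact (cls_eq_three_iff _).mpr ⟨d0_ne hm, d1_ne hm, d1_ne_d0 hm, d1_ne_neg_d0 hm⟩

lemma permRank_gCal (hm : 2 ≤ m) : permRank (gCal m) = 4 := by
  classical
  have hwd : ∀ p q : Vm m × Vm m,
      (MulAction.orbitRel (gCal m) (Vm m × Vm m)).r p q →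
      cls (p.2 - p.1) = cls (q.2 - q.1) := by
    intro p q hpq
    have : p ∈ orbit (gCal m) q := hpq
    rw [orbit_gCal] at this
    exact this
  let F : MulAction.orbitRel.Quotient (gCal m) (Vm m × Vm m) → Fin 4 :=
    Quotient.lift (fun p : Vm m × Vm m => cls (p.2 - p.1)) hwd
  have hsurj : Function.Surjective F := by
    intro j
    refine ⟨Quotient.mk'' ((0, rep hm j) : Vm m × Vm m), ?_⟩
    show cls (rep hm j - 0) = j
    rw [sub_zero, cls_rep hm]
  have hinj : Function.Injective F := by
    intro p q
    induction p using Quotient.inductionOn'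
    induction q using Quotient.inductionOn'
    intro h
    apply Quotient.sound'
    show _ ∈ orbit (gCal m) _
    rw [orbit_gCal]
    exact h
  have : Nat.card (MulAction.orbitRel.Quotient (gCal m) (Vm m × Vm m)) = Nat.card (Fin 4) :=
    Nat.card_eq_of_bijective F ⟨hinj, hsurj⟩
  rw [permRank, this]
  simp

end Rank


section Primitive
open Pointwise
variable {m : ℕ}

lemma gCal_pretransitive : MulAction.IsPretransitive (gCal m) (Vm m) := by
  constructor
  intro a b
  refine ⟨⟨Equiv.addRight (b - a), addRight_mem_gCal _⟩, ?_⟩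
  show a + (b - a) = b
  abel

lemma smul_mem_block {B : Set (Vm m)} (hB : IsBlock (gCal m) B)
    {σ : Equiv.Perm (Vm m)} (hσ : σ ∈ gCal m) {a : Vm m} (ha : a ∈ B)
    (ha' : σ a ∈ B) : ∀ w ∈ B, σ w ∈ B := by
  intro w hw
  have hfix : (⟨σ, hσ⟩ : gCal m) • B = B := by
    apply hB.smul_eq_of_mem (a := a) ha
    exact ha'
  rw [← hfix]
  exact Set.smul_mem_smul_set hw

lemma block_trivial (hm : 2 ≤ m) {B : Set (Vm m)} (hB : IsBlock (gCal m) B) :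
    IsTrivialBlock B := by
  classical
  by_cases hsub : B.Subsingleton
  · exact Or.inl hsub
  right
  rw [Set.not_subsingleton_iff] at hsub
  obtain ⟨a, ha, b, hb, hab⟩ := hsub
  set t : gCal m := ⟨Equiv.addRight (-a), addRight_mem_gCal (-a)⟩ with ht
  set B' := t • B with hB'
  have hB'block : IsBlock (gCal m) B' := hB.translate t
  have h0 : (0 : Vm m) ∈ B' := Set.mem_smul_set.mpr ⟨a, ha, by show a + (-a) = 0; abel⟩
  have hz0 : b + (-a) ∈ B' := Set.mem_smul_set.mpr ⟨b, hb, rfl⟩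
  have hz0ne : b + (-a) ≠ 0 := by
    intro h
    exact hab (add_neg_eq_zero.mp h).symm
  have hadd : ∀ u ∈ B', ∀ w ∈ B', w + u ∈ B' := by
    intro u hu w hw
    refine smul_mem_block hB'block (addRight_mem_gCal u) (a := 0) h0 ?_ w hw
    show (0 : Vm m) + u ∈ B'
    simpa using hu
  have hLinv : ∀ σ ∈ tensorPartThree m, ∀ w ∈ B', σ w ∈ B' := by
    intro σ hσ w hw
    exact smul_mem_block hB'block (L_mem_gCal hσ) h0 (by rw [L_zero hσ]; exact h0) w hw
  set z := b + (-a) with hzdef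
  have hx : ∃ x : Wm m, x ≠ 0 ∧ ((x, 0) : Vm m) ∈ B' := by
    by_cases hz1 : z.1 = 0
    · have hz2 : z.2 ≠ 0 := by
        intro h
        exact hz0ne (Prod.ext hz1 h)
      have hsw := hLinv swapPerm swapPerm_mem z hz0
      rw [swapPerm_apply] at hsw
      refine ⟨z.2, hz2, ?_⟩
      rwa [hz1] at hsw
    · have h1 := hLinv signPerm signPerm_mem z hz0
      rw [signPerm_apply] at h1
      have h2 := hadd _ h1 _ hz0
      have he : (z + ((z.1, -z.2) : Vm m)) = ((-z.1, 0) : Vm m) := by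
        apply Prod.ext
        · exact w_add_self z.1
        · show z.2 + -z.2 = 0
          abel
      rw [he] at h2
      exact ⟨-z.1, neg_ne_zero.mpr hz1, h2⟩
  obtain ⟨x, hxne, hxB⟩ := hx
  have hW1 : ∀ x' : Wm m, ((x', 0) : Vm m) ∈ B' := by
    intro x'
    by_cases h : x' = 0
    · rw [h]; exact h0
    · obtain ⟨g, hg⟩ := exists_glequiv_single hxne h
      have hm2 := hLinv (pairPerm g) (pairPerm_mem g) _ hxB
      rw [pairPerm_apply] at hm2
      simpa [hg] using hm2
  have hW2 : ∀ y' : Wm m, ((0, y') : Vm m) ∈ B' := by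
    intro y'
    have hm2 := hLinv swapPerm swapPerm_mem _ (hW1 y')
    rwa [swapPerm_apply] at hm2
  have hall : ∀ v : Vm m, v ∈ B' := by
    intro v
    have hm2 := hadd _ (hW2 v.2) _ (hW1 v.1)
    have he : (((v.1, 0) : Vm m) + ((0, v.2) : Vm m)) = v := by
      apply Prod.ext
      · show v.1 + 0 = v.1; abel
      · show (0 : Wm m) + v.2 = v.2; abel
    rwa [he] at hm2
  have hBuniv : B' = Set.univ := Set.eq_univ_of_forall hall
  have hBeq : B = t⁻¹ • B' := by rw [hB', inv_smul_smul]
  rw [hBeq, hBuniv, Set.smul_set_univ]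

end Primitive


section NormLinear
variable {m : ℕ}

lemma cls_two_or_three_iff (z : Vm m) :
    (cls z = 2 ∨ cls z = 3) ↔ (z.1 ≠ 0 ∧ z.2 ≠ 0) := by
  constructor
  · rintro (h | h)
    · rw [cls_eq_two_iff] at h; exact ⟨h.1, h.2.1⟩
    · rw [cls_eq_three_iff] at h; exact ⟨h.1, h.2.1⟩
  · rintro ⟨h1, h2⟩
    rcases cls_cases z with h | h | h | h
    · rw [cls_eq_zero_iff] at h; exact absurd h.1 h1
    · rw [cls_eq_one_iff] at h
      rcases h with ⟨h, _⟩ | ⟨_, h⟩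
      exacts [absurd h h1, absurd h h2]
    · exact Or.inl h
    · exact Or.inr h

lemma norm_linear (hm : 2 ≤ m) (f : Vm m → Vm m) (hinj : Function.Injective f)
    (h0 : f 0 = 0) (hf : ∀ u v, cls (f u - f v) = cls (u - v))
    (hW1 : (f (d0 m, 0)).2 = 0)
    (hDel : (f (d0 m, d0 m)).2 = (f (d0 m, d0 m)).1) :
    ∃ g : Wm m ≃ₗ[ZMod 3] Wm m, ∀ v : Vm m, f v = (g v.1, g v.2) := by
  classical
  have hδ : d0 m ≠ 0 := d0_ne hm
  have hc0 : ∀ u, cls (f u) = cls u := by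
    intro u
    have := hf u 0
    rwa [h0, sub_zero, sub_zero] at this
  have hfd0 : (f (d0 m, 0)).1 ≠ 0 := by
    have h1 : cls (f ((d0 m, 0) : Vm m)) = 1 := by
      rw [hc0]
      exact (cls_eq_one_iff _).mpr (Or.inr ⟨hδ, rfl⟩)
    rw [cls_eq_one_iff] at h1
    rcases h1 with ⟨_, hnz⟩ | ⟨hp, _⟩
    · exact absurd hW1 hnz
    · exact hp
  -- C1
  have hx0 : ∀ x : Wm m, x ≠ 0 → (f (x, 0)).2 = 0 ∧ (f (x, 0)).1 ≠ 0 := by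
    intro x hx
    have h1 : cls (f ((x, 0) : Vm m)) = 1 := by
      rw [hc0]
      exact (cls_eq_one_iff _).mpr (Or.inr ⟨hx, rfl⟩)
    rw [cls_eq_one_iff] at h1
    rcases h1 with ⟨hp, hq⟩ | ⟨hp, hq⟩
    · exfalso
      by_cases hxd : x = d0 m
      · rw [hxd] at hq; exact hq hW1
      · have h2 := hf (x, 0) (d0 m, 0)
        have hsub : ((x, 0) : Vm m) - (d0 m, 0) = ((x - d0 m, 0) : Vm m) := by
          apply Prod.ext
          · rfl
          · show (0 : Wm m) - 0 = 0; simp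
        rw [hsub, (cls_eq_one_iff ((x - d0 m, (0 : Wm m)) : Vm m)).mpr (Or.inr ⟨sub_ne_zero.mpr hxd, rfl⟩)] at h2
        rw [cls_eq_one_iff] at h2
        rcases h2 with ⟨h3, _⟩ | ⟨_, h4⟩
        · rw [Prod.fst_sub, hp, zero_sub, neg_eq_zero] at h3
          exact hfd0 h3
        · rw [Prod.snd_sub, hW1, sub_zero] at h4
          exact hq h4
    · exact ⟨hq, hp⟩
  -- C2
  have hy0 : ∀ y : Wm m, y ≠ 0 → (f (0, y)).1 = 0 ∧ (f (0, y)).2 ≠ 0 := by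
    intro y hy
    have h1 : cls (f ((0, y) : Vm m)) = 1 := by
      rw [hc0]
      exact (cls_eq_one_iff _).mpr (Or.inl ⟨rfl, hy⟩)
    rw [cls_eq_one_iff] at h1
    rcases h1 with ⟨hp, hq⟩ | ⟨hp, hq⟩
    · exact ⟨hp, hq⟩
    · exfalso
      have h2 := hf (0, y) (d0 m, 0)
      have hsub : ((0, y) : Vm m) - (d0 m, 0) = ((-d0 m, y) : Vm m) := by
        apply Prod.ext
        · show (0 : Wm m) - d0 m = -d0 m; simp
        · show y - 0 = y; simp
      rw [hsub] at h2
      have hrhs : cls ((-d0 m, y) : Vm m) = 2 ∨ cls ((-d0 m, y) : Vm m) = 3 :=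
        (cls_two_or_three_iff _).mpr ⟨neg_ne_zero.mpr hδ, hy⟩
      rw [← h2] at hrhs
      have := ((cls_two_or_three_iff _).mp hrhs).2
      rw [Prod.snd_sub, hq, hW1, sub_zero] at this
      exact this rfl
  set g1 : Wm m → Wm m := fun x => (f (x, 0)).1 with hg1def
  set g2 : Wm m → Wm m := fun y => (f (0, y)).2 with hg2def
  have hg10 : g1 0 = 0 := by
    show (f ((0 : Wm m), (0 : Wm m))).1 = 0
    have hfz : f ((0 : Wm m), (0 : Wm m)) = 0 := h0
    rw [hfz]; rfl
  have hg20 : g2 0 = 0 := by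
    show (f ((0 : Wm m), (0 : Wm m))).2 = 0
    have hfz : f ((0 : Wm m), (0 : Wm m)) = 0 := h0
    rw [hfz]; rfl
  have hfx0 : ∀ x : Wm m, f (x, 0) = (g1 x, 0) := by
    intro x
    by_cases hx : x = 0
    · subst hx
      have hfz : f ((0 : Wm m), (0 : Wm m)) = 0 := h0
      rw [hfz, hg10]; rfl
    · exact Prod.ext rfl (hx0 x hx).1
  have hf0y : ∀ y : Wm m, f (0, y) = (0, g2 y) := by
    intro y
    by_cases hy : y = 0
    · subst hy
      have hfz : f ((0 : Wm m), (0 : Wm m)) = 0 := h0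
      rw [hfz, hg20]; rfl
    · exact Prod.ext (hy0 y hy).1 rfl
  have hg1ne : ∀ x : Wm m, x ≠ 0 → g1 x ≠ 0 := fun x hx => (hx0 x hx).2
  have hg2ne : ∀ y : Wm m, y ≠ 0 → g2 y ≠ 0 := fun y hy => (hy0 y hy).2
  -- C3
  have hfxy : ∀ x y : Wm m, f (x, y) = (g1 x, g2 y) := by
    intro x y
    by_cases hx : x = 0
    · subst hx; rw [hf0y, hg10]
    by_cases hy : y = 0
    · subst hy; rw [hfx0, hg20]
    have hboth : (f ((x, y) : Vm m)).1 ≠ 0 ∧ (f ((x, y) : Vm m)).2 ≠ 0 := by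
      apply (cls_two_or_three_iff _).mp
      rw [hc0]
      exact (cls_two_or_three_iff _).mpr ⟨hx, hy⟩
    have hfirst : (f ((x, y) : Vm m)).1 = g1 x := by
      have h1 := hf (x, y) (x, 0)
      have hsub : ((x, y) : Vm m) - (x, 0) = ((0, y) : Vm m) :=
        Prod.ext (sub_self x) (sub_zero y)
      rw [hsub, (cls_eq_one_iff (((0 : Wm m), y) : Vm m)).mpr (Or.inl ⟨rfl, hy⟩), hfx0 x] at h1
      rw [cls_eq_one_iff] at h1
      rcases h1 with ⟨ha, _⟩ | ⟨_, hb⟩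
      · rw [Prod.fst_sub] at ha
        exact sub_eq_zero.mp ha
      · exfalso
        rw [Prod.snd_sub] at hb
        simp only [Prod.snd] at hb
        rw [sub_zero] at hb
        exact hboth.2 hb
    have hsecond : (f ((x, y) : Vm m)).2 = g2 y := by
      have h1 := hf (x, y) (0, y)
      have hsub : ((x, y) : Vm m) - (0, y) = ((x, 0) : Vm m) :=
        Prod.ext (sub_zero x) (sub_self y)
      rw [hsub, (cls_eq_one_iff ((x, (0 : Wm m)) : Vm m)).mpr (Or.inr ⟨hx, rfl⟩), hf0y y] at h1
      rw [cls_eq_one_iff] at h1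
      rcases h1 with ⟨ha, _⟩ | ⟨_, hb⟩
      · exfalso
        rw [Prod.fst_sub] at ha
        simp only [Prod.fst] at ha
        rw [sub_zero] at ha
        exact hboth.1 ha
      · rw [Prod.snd_sub] at hb
        exact sub_eq_zero.mp hb
    exact Prod.ext hfirst hsecond
  -- g2 = g1
  have hgd : g2 (d0 m) = g1 (d0 m) := by
    have := hDel
    rw [hfxy] at this
    exact this
  have hg21 : ∀ x : Wm m, g2 x = g1 x := by
    intro x
    by_cases hx : x = 0
    · subst hx; rw [hg10, hg20]
    by_cases hxd : x = d0 m
    · subst hxd; exact hgd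
    have hcls2 : cls ((g1 x, g2 x) : Vm m) = 2 := by
      rw [← hfxy, hc0]
      exact (cls_eq_two_iff _).mpr ⟨hx, hx, Or.inl rfl⟩
    rw [cls_eq_two_iff] at hcls2
    obtain ⟨hA, _, hor⟩ := hcls2
    rcases hor with h | h
    · exact h
    · exfalso
      have h2 := hf (x, x) (d0 m, d0 m)
      rw [hfxy, hfxy] at h2
      have hl : ((x, x) : Vm m) - (d0 m, d0 m) = ((x - d0 m, x - d0 m) : Vm m) := rfl
      rw [hl, (cls_eq_two_iff ((x - d0 m, x - d0 m) : Vm m)).mpr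
        ⟨sub_ne_zero.mpr hxd, sub_ne_zero.mpr hxd, Or.inl rfl⟩] at h2
      rw [cls_eq_two_iff] at h2
      obtain ⟨_, _, hor2⟩ := h2
      simp only [Prod.fst_sub, Prod.snd_sub, Prod.fst, Prod.snd] at hor2
      rw [hgd] at hor2
      rw [show g2 x = -(g1 x) from h] at hor2
      set A := g1 x
      set Bv := g1 (d0 m)
      have hBv : Bv ≠ 0 := hg1ne _ hδ
      rcases hor2 with h3 | h3
      · -- -A - Bv = A - Bv
        have key : (-A - Bv) - (A - Bv) = A := by
          funext i
          have hk : ∀ a b : ZMod 3, (-a - b) - (a - b) = a := by decide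
          simpa using hk (A i) (Bv i)
        rw [h3, sub_self] at key
        exact hA key.symm
      · -- -A - Bv = -(A - Bv)
        have key : (-A - Bv) - (-(A - Bv)) = Bv := by
          funext i
          have hk : ∀ a b : ZMod 3, (-a - b) - (-(a - b)) = b := by decide
          simpa using hk (A i) (Bv i)
        rw [h3, sub_self] at key
        exact hBv key.symm
  have hg1inj : Function.Injective g1 := by
    intro x x' h
    have : f (x, 0) = f (x', 0) := by rw [hfx0, hfx0, h]
    have := hinj this
    exact (Prod.ext_iff.mp this).1
  have hodd : ∀ x : Wm m, g1 (-x) = -(g1 x) := by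
    intro x
    by_cases hx : x = 0
    · subst hx; rw [neg_zero, hg10, neg_zero]
    have hcls2 : cls ((g1 x, g1 (-x)) : Vm m) = 2 := by
      rw [← hg21 (-x), ← hfxy, hc0]
      refine (cls_eq_two_iff _).mpr ⟨hx, neg_ne_zero.mpr hx, Or.inr rfl⟩
    rw [cls_eq_two_iff] at hcls2
    obtain ⟨_, _, hor⟩ := hcls2
    rcases hor with h | h
    · exfalso
      have := hg1inj h
      rw [← w_neg_eq_self_iff] at hx
      exact hx this
    · exact h
  have hmid : ∀ c x : Wm m, x ≠ 0 →
      g1 (c + x) + g1 (c - x) = g1 c + g1 c := by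
    intro c x hx
    have h2 := hf (c + x, c - x) (c, c)
    have hl : ((c + x, c - x) : Vm m) - (c, c) = ((x, -x) : Vm m) := by
      apply Prod.ext
      · show (c + x) - c = x; abel
      · show (c - x) - c = -x; abel
    rw [hl, hfxy, hfxy,
      (cls_eq_two_iff ((x, -x) : Vm m)).mpr ⟨hx, neg_ne_zero.mpr hx, Or.inr rfl⟩] at h2
    rw [cls_eq_two_iff] at h2
    obtain ⟨_, _, hor⟩ := h2
    simp only [Prod.fst_sub, Prod.snd_sub, Prod.fst, Prod.snd] at hor
    rw [hg21, hg21] at hor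
    rcases hor with h | h
    · exfalso
      have h3 : g1 (c - x) = g1 (c + x) := by
        have := congrArg (fun w => w + g1 c) h
        simpa [sub_add_cancel] using this
      have h4 := hg1inj h3
      have h5 : -x = x := by
        have := congrArg (fun w => w - c) h4
        simpa [sub_eq_add_neg, add_comm] using by
          have h6 : (c - x) - c = (c + x) - c := by rw [h4]
          have h7 : (c - x) - c = -x := by abel
          have h8 : (c + x) - c = x := by abel
          rw [h7, h8] at h6
          exact h6
      exact hx (w_neg_eq_self_iff.mp h5)
    · -- g1 (c-x) - g1 c = -(g1 (c+x) - g1 c)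
      set P := g1 (c + x)
      set Q := g1 (c - x)
      set R := g1 c
      funext i
      have hk : ∀ p q r : ZMod 3, q - r = -(p - r) → p + q = r + r := by decide
      have := congrFun h i
      simpa using hk (P i) (Q i) (R i) (by simpa using this)
  have haddg : ∀ a b : Wm m, g1 (a + b) = g1 a + g1 b := by
    intro a b
    by_cases hab : a = b
    · subst hab
      rw [w_add_self a, hodd, w_add_self (g1 a)]
    · have hx : b - a ≠ 0 := sub_ne_zero.mpr fun h => hab h.symm
      have h2 := hmid (-(a + b)) (b - a) hx
      rw [w_key1, w_key2] at h2
      rw [w_add_self (g1 (-(a + b))), hodd (a + b), neg_neg] at h2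
      exact h2.symm
  -- build the linear equiv
  have hsmul : ∀ (c : ZMod 3) (x : Wm m), g1 (c • x) = c • g1 x := by
    intro c x
    have h3 : ∀ c : ZMod 3, c = 0 ∨ c = 1 ∨ c = -1 := by decide
    rcases h3 c with rfl | rfl | rfl
    · simp [hg10]
    · simp
    · simp only [neg_smul, one_smul]
      exact hodd x
  let glin : Wm m →ₗ[ZMod 3] Wm m :=
    { toFun := g1, map_add' := haddg, map_smul' := hsmul }
  have hbij : Function.Bijective glin :=
    (Finite.injective_iff_bijective).mp hg1inj
  refine ⟨LinearEquiv.ofBijective glin hbij, ?_⟩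
  intro v
  have := hfxy v.1 v.2
  rw [Prod.mk.eta] at this
  rw [this, hg21]
  rfl

end NormLinear


section TwoClosure
variable {m : ℕ}

lemma gCal_le_twoClosure : gCal m ≤ twoClosure (gCal m) := by
  intro σ hσ x
  exact ⟨⟨σ, hσ⟩, rfl⟩

lemma twoClosure_le (hm : 2 ≤ m) : twoClosure (gCal m) ≤ gCal m := by
  intro σ hσ
  have hcls : ∀ u v : Vm m, cls (σ u - σ v) = cls (u - v) := by
    intro u v
    have h1 := hσ (v, u)
    rw [orbit_gCal] at h1
    exact h1
  set f₀ : Vm m → Vm m := fun v => σ v - σ 0 with hf₀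
  have hf₀inj : Function.Injective f₀ := by
    intro a b h
    exact σ.injective (sub_left_injective h)
  have hf₀0 : f₀ 0 = 0 := sub_self _
  have hf₀cls : ∀ u v, cls (f₀ u - f₀ v) = cls (u - v) := by
    intro u v
    show cls ((σ u - σ 0) - (σ v - σ 0)) = _
    rw [sub_sub_sub_cancel_right]
    exact hcls u v
  have hf₀c : ∀ z, cls (f₀ z) = cls z := by
    intro z
    have := hf₀cls z 0
    rwa [hf₀0, sub_zero, sub_zero] at this
  have hc1 : cls (f₀ (d0 m, 0)) = 1 := by
    rw [hf₀c]
    exact (cls_eq_one_iff _).mpr (Or.inr ⟨d0_ne hm, rfl⟩)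
  obtain ⟨s₁, hs₁L, hs₁inv, hs₁prop⟩ :
      ∃ s₁ : Equiv.Perm (Vm m), s₁ ∈ tensorPartThree m ∧ (∀ z, s₁ (s₁ z) = z) ∧
        (s₁ (f₀ (d0 m, 0))).2 = 0 := by
    rw [cls_eq_one_iff] at hc1
    rcases hc1 with ⟨hp, _⟩ | ⟨_, hq⟩
    · exact ⟨swapPerm, swapPerm_mem, fun z => rfl, hp⟩
    · exact ⟨1, one_mem_L, fun z => rfl, hq⟩
  set f₁ : Vm m → Vm m := fun v => s₁ (f₀ v) with hf₁
  have hf₁inj : Function.Injective f₁ := fun a b h => hf₀inj (s₁.injective h)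
  have hf₁0 : f₁ 0 = 0 := by
    show s₁ (f₀ 0) = 0
    rw [hf₀0, L_zero hs₁L]
  have hf₁cls : ∀ u v, cls (f₁ u - f₁ v) = cls (u - v) := by
    intro u v
    show cls (s₁ (f₀ u) - s₁ (f₀ v)) = _
    rw [L_apply_sub hs₁L, cls_L hs₁L]
    exact hf₀cls u v
  have hf₁c : ∀ z, cls (f₁ z) = cls z := by
    intro z
    have := hf₁cls z 0
    rwa [hf₁0, sub_zero, sub_zero] at this
  have hc2 : cls (f₁ (d0 m, d0 m)) = 2 := by
    rw [hf₁c]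
    exact (cls_eq_two_iff _).mpr ⟨d0_ne hm, d0_ne hm, Or.inl rfl⟩
  obtain ⟨s₂, hs₂L, hs₂inv, hs₂prop, hs₂pres⟩ :
      ∃ s₂ : Equiv.Perm (Vm m), s₂ ∈ tensorPartThree m ∧ (∀ z, s₂ (s₂ z) = z) ∧
        (s₂ (f₁ (d0 m, d0 m))).2 = (s₂ (f₁ (d0 m, d0 m))).1 ∧
        (∀ z : Vm m, z.2 = 0 → s₂ z = z) := by
    rw [cls_eq_two_iff] at hc2
    obtain ⟨h1, h2, hor⟩ := hc2
    rcases hor with h | h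
    · exact ⟨1, one_mem_L, fun z => rfl, h, fun z hz => rfl⟩
    · refine ⟨signPerm, signPerm_mem, ?_, ?_, ?_⟩
      · intro z
        rw [signPerm_apply, signPerm_apply]
        exact Prod.ext rfl (neg_neg _)
      · rw [signPerm_apply]
        show -(f₁ (d0 m, d0 m)).2 = (f₁ (d0 m, d0 m)).1
        rw [h, neg_neg]
      · intro z hz
        rw [signPerm_apply]
        exact Prod.ext rfl (by rw [hz]; exact neg_zero)
  set f₂ : Vm m → Vm m := fun v => s₂ (f₁ v) with hf₂
  have hf₂inj : Function.Injective f₂ := fun a b h => hf₁inj (s₂.injective h)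
  have hf₂0 : f₂ 0 = 0 := by
    show s₂ (f₁ 0) = 0
    rw [hf₁0, L_zero hs₂L]
  have hf₂cls : ∀ u v, cls (f₂ u - f₂ v) = cls (u - v) := by
    intro u v
    show cls (s₂ (f₁ u) - s₂ (f₁ v)) = _
    rw [L_apply_sub hs₂L, cls_L hs₂L]
    exact hf₁cls u v
  have hW1 : (f₂ (d0 m, 0)).2 = 0 := by
    show (s₂ (f₁ (d0 m, 0))).2 = 0
    rw [hs₂pres _ hs₁prop]
    exact hs₁prop
  obtain ⟨g, hg⟩ := norm_linear hm f₂ hf₂inj hf₂0 hf₂cls hW1 hs₂prop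
  have hσeq : σ = Equiv.addRight (σ 0) * s₁ * s₂ * pairPerm g := by
    apply Equiv.ext
    intro v
    have h1 : pairPerm g v = f₂ v := by rw [hg]; rfl
    show σ v = (s₁ (s₂ (pairPerm g v))) + σ 0
    rw [h1]
    show σ v = s₁ (s₂ (s₂ (f₁ v))) + σ 0
    rw [hs₂inv]
    show σ v = s₁ (s₁ (f₀ v)) + σ 0
    rw [hs₁inv]
    show σ v = (σ v - σ 0) + σ 0
    rw [sub_add_cancel]
  rw [hσeq]
  exact Subgroup.mul_mem _ (Subgroup.mul_mem _ (Subgroup.mul_mem _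
    (addRight_mem_gCal _) (L_mem_gCal hs₁L)) (L_mem_gCal hs₂L))
    (L_mem_gCal (pairPerm_mem g))

lemma twoClosure_gCal (hm : 2 ≤ m) : twoClosure (gCal m) = gCal m :=
  le_antisymm (twoClosure_le hm) gCal_le_twoClosure

end TwoClosure


section Digraph
variable {m : ℕ}

def Amap (m : ℕ) : Equiv.Perm (Vm m) where
  toFun z := (z.1 + z.2, z.1 - z.2)
  invFun z := (-(z.1 + z.2), z.2 - z.1)
  left_inv z := by
    apply Prod.ext
    · show -((z.1 + z.2) + (z.1 - z.2)) = z.1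
      funext i
      have k : ∀ a b : ZMod 3, -((a + b) + (a - b)) = a := by decide
      simpa using k (z.1 i) (z.2 i)
    · show (z.1 - z.2) - (z.1 + z.2) = z.2
      funext i
      have k : ∀ a b : ZMod 3, (a - b) - (a + b) = b := by decide
      simpa using k (z.1 i) (z.2 i)
  right_inv z := by
    apply Prod.ext
    · show -(z.1 + z.2) + (z.2 - z.1) = z.1
      funext i
      have k : ∀ a b : ZMod 3, -(a + b) + (b - a) = a := by decide
      simpa using k (z.1 i) (z.2 i)
    · show -(z.1 + z.2) - (z.2 - z.1) = z.2
      funext i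
      have k : ∀ a b : ZMod 3, -(a + b) - (b - a) = b := by decide
      simpa using k (z.1 i) (z.2 i)

lemma Amap_apply (z : Vm m) : Amap m z = (z.1 + z.2, z.1 - z.2) := rfl

lemma Amap_zero : Amap m 0 = 0 := by
  rw [Amap_apply]
  apply Prod.ext <;> simp

lemma Amap_sub (u v : Vm m) : Amap m u - Amap m v = Amap m (u - v) := by
  rw [Amap_apply, Amap_apply, Amap_apply]
  apply Prod.ext
  · show (u.1 + u.2) - (v.1 + v.2) = (u - v).1 + (u - v).2
    rw [Prod.fst_sub, Prod.snd_sub]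
    abel
  · show (u.1 - u.2) - (v.1 - v.2) = (u - v).1 - (u - v).2
    rw [Prod.fst_sub, Prod.snd_sub]
    abel

lemma cls_Amap_zero {z : Vm m} (h : cls z = 0) : cls (Amap m z) = 0 := by
  rw [cls_eq_zero_iff] at h
  rw [Amap_apply]
  apply (cls_eq_zero_iff _).mpr
  refine ⟨?_, ?_⟩
  · show z.1 + z.2 = 0; rw [h.1, h.2]; simp
  · show z.1 - z.2 = 0; rw [h.1, h.2]; simp

lemma cls_Amap_one {z : Vm m} (h : cls z = 1) : cls (Amap m z) = 2 := by
  rw [cls_eq_one_iff] at h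
  rw [Amap_apply]
  apply (cls_eq_two_iff _).mpr
  rcases h with ⟨h1, h2⟩ | ⟨h1, h2⟩
  · refine ⟨?_, ?_, Or.inr ?_⟩
    · show z.1 + z.2 ≠ 0; rw [h1, zero_add]; exact h2
    · show z.1 - z.2 ≠ 0; rw [h1, zero_sub]; exact neg_ne_zero.mpr h2
    · show z.1 - z.2 = -(z.1 + z.2); rw [h1, zero_sub, zero_add]
  · refine ⟨?_, ?_, Or.inl ?_⟩
    · show z.1 + z.2 ≠ 0; rw [h2, add_zero]; exact h1
    · show z.1 - z.2 ≠ 0; rw [h2, sub_zero]; exact h1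
    · show z.1 - z.2 = z.1 + z.2; rw [h2, sub_zero, add_zero]

lemma cls_Amap_two {z : Vm m} (h : cls z = 2) : cls (Amap m z) = 1 := by
  rw [cls_eq_two_iff] at h
  obtain ⟨h1, h2, hor⟩ := h
  rw [Amap_apply]
  apply (cls_eq_one_iff _).mpr
  rcases hor with h | h
  · refine Or.inr ⟨?_, ?_⟩
    · show z.1 + z.2 ≠ 0
      rw [h, w_add_self]
      exact neg_ne_zero.mpr h1
    · show z.1 - z.2 = 0; rw [h, sub_self]
  · refine Or.inl ⟨?_, ?_⟩
    · show z.1 + z.2 = 0; rw [h]; simp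
    · show z.1 - z.2 ≠ 0
      rw [h, sub_neg_eq_add, w_add_self]
      exact neg_ne_zero.mpr h1

lemma cls_Amap_three {z : Vm m} (h : cls z = 3) : cls (Amap m z) = 3 := by
  rw [cls_eq_three_iff] at h
  obtain ⟨h1, h2, h3, h4⟩ := h
  rw [Amap_apply]
  apply (cls_eq_three_iff _).mpr
  refine ⟨?_, ?_, ?_, ?_⟩
  · show z.1 + z.2 ≠ 0
    intro hh
    exact h4 (eq_neg_of_add_eq_zero_right hh)
  · show z.1 - z.2 ≠ 0
    intro hh
    exact h3 (sub_eq_zero.mp hh).symm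
  · show z.1 - z.2 ≠ z.1 + z.2
    intro hh
    apply h2
    funext i
    have k : ∀ a b : ZMod 3, a - b = a + b → b = 0 := by decide
    simpa using k (z.1 i) (z.2 i) (by simpa using congrFun hh i)
  · show z.1 - z.2 ≠ -(z.1 + z.2)
    intro hh
    apply h1
    funext i
    have k : ∀ a b : ZMod 3, a - b = -(a + b) → a = 0 := by decide
    simpa using k (z.1 i) (z.2 i) (by simpa using congrFun hh i)

lemma cls_Amap_zero_iff (z : Vm m) : cls (Amap m z) = 0 ↔ cls z = 0 := by
  constructor
  · intro h
    rcases cls_cases z with h' | h' | h' | h'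
    · exact h'
    · rw [cls_Amap_one h'] at h; exact absurd h (by decide)
    · rw [cls_Amap_two h'] at h; exact absurd h (by decide)
    · rw [cls_Amap_three h'] at h; exact absurd h (by decide)
  · exact cls_Amap_zero

lemma cls_Amap_one_iff (z : Vm m) : cls (Amap m z) = 1 ↔ cls z = 2 := by
  constructor
  · intro h
    rcases cls_cases z with h' | h' | h' | h'
    · rw [cls_Amap_zero h'] at h; exact absurd h (by decide)
    · rw [cls_Amap_one h'] at h; exact absurd h (by decide)
    · exact h'
    · rw [cls_Amap_three h'] at h; exact absurd h (by decide)
  · exact cls_Amap_two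

lemma cls_Amap_two_iff (z : Vm m) : cls (Amap m z) = 2 ↔ cls z = 1 := by
  constructor
  · intro h
    rcases cls_cases z with h' | h' | h' | h'
    · rw [cls_Amap_zero h'] at h; exact absurd h (by decide)
    · exact h'
    · rw [cls_Amap_two h'] at h; exact absurd h (by decide)
    · rw [cls_Amap_three h'] at h; exact absurd h (by decide)
  · exact cls_Amap_one

lemma Amap_not_mem (hm : 2 ≤ m) : Amap m ∉ gCal m := by
  intro h
  have hd := gCal_diff h (d0 m, 0) 0
  rw [Amap_zero, sub_zero, sub_zero] at hd
  have h1 : cls ((d0 m, 0) : Vm m) = 1 := (cls_eq_one_iff _).mpr (Or.inr ⟨d0_ne hm, rfl⟩)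
  rw [cls_Amap_one h1, h1] at hd
  exact absurd hd (by decide)

-- pi2
def pi2 (m : ℕ) : Equiv.Perm (Vm m) :=
  Equiv.prodCongr (Equiv.swap (d0 m) (-(d0 m))) (Equiv.refl _)

lemma pi2_apply (z : Vm m) : pi2 m z = (Equiv.swap (d0 m) (-(d0 m)) z.1, z.2) := rfl

lemma pi2_first_zero_iff (u v : Vm m) :
    (pi2 m u - pi2 m v).1 = 0 ↔ (u - v).1 = 0 := by
  rw [Prod.fst_sub, Prod.fst_sub]
  rw [pi2_apply, pi2_apply]
  simp only [sub_eq_zero]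
  exact (Equiv.swap (d0 m) (-(d0 m))).injective.eq_iff

lemma pi2_second_eq (u v : Vm m) : (pi2 m u - pi2 m v).2 = (u - v).2 := rfl

lemma pi2_cls0 (u v : Vm m) :
    cls (pi2 m u - pi2 m v) = 0 ↔ cls (u - v) = 0 := by
  rw [cls_eq_zero_iff, cls_eq_zero_iff, pi2_first_zero_iff, pi2_second_eq]

lemma pi2_cls1 (u v : Vm m) :
    cls (pi2 m u - pi2 m v) = 1 ↔ cls (u - v) = 1 := by
  rw [cls_eq_one_iff, cls_eq_one_iff, pi2_second_eq]
  have h := pi2_first_zero_iff u v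
  constructor
  · rintro (⟨h1, h2⟩ | ⟨h1, h2⟩)
    · exact Or.inl ⟨h.mp h1, h2⟩
    · exact Or.inr ⟨fun hh => h1 (h.mpr hh), h2⟩
  · rintro (⟨h1, h2⟩ | ⟨h1, h2⟩)
    · exact Or.inl ⟨h.mpr h1, h2⟩
    · exact Or.inr ⟨fun hh => h1 (h.mp hh), h2⟩

lemma pi2_cls23 (u v : Vm m) :
    (cls (pi2 m u - pi2 m v) = 2 ∨ cls (pi2 m u - pi2 m v) = 3) ↔
      (cls (u - v) = 2 ∨ cls (u - v) = 3) := by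
  rw [cls_two_or_three_iff, cls_two_or_three_iff, pi2_second_eq]
  have h := pi2_first_zero_iff u v
  constructor
  · rintro ⟨h1, h2⟩
    exact ⟨fun hh => h1 (h.mpr hh), h2⟩
  · rintro ⟨h1, h2⟩
    exact ⟨fun hh => h1 (h.mp hh), h2⟩

lemma swap_d1 (hm : 2 ≤ m) : Equiv.swap (d0 m) (-(d0 m)) (d1 m) = d1 m :=
  Equiv.swap_apply_of_ne_of_ne (d1_ne_d0 hm) (d1_ne_neg_d0 hm)

lemma inner2 (hm : 2 ≤ m) : cls ((d0 m - d1 m, d0 m - d1 m) : Vm m) = 2 := by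
  have hne : d0 m - d1 m ≠ 0 := sub_ne_zero.mpr fun h => d1_ne_d0 hm h.symm
  exact (cls_eq_two_iff _).mpr ⟨hne, hne, Or.inl rfl⟩

lemma inner3 (hm : 2 ≤ m) : cls ((-(d0 m) - d1 m, d0 m - d1 m) : Vm m) = 3 := by
  have h0 : (0 : ℕ) < m := by omega
  have h1 : (1 : ℕ) < m := by omega
  apply (cls_eq_three_iff _).mpr
  refine ⟨?_, ?_, ?_, ?_⟩
  · show -(d0 m) - d1 m ≠ 0
    intro h
    have := congrFun h ⟨0, h0⟩
    simp [d0, d1] at this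
  · show d0 m - d1 m ≠ 0
    intro h
    have := congrFun h ⟨0, h0⟩
    simp [d0, d1] at this
  · show d0 m - d1 m ≠ -(d0 m) - d1 m
    intro h
    have := congrFun h ⟨0, h0⟩
    simp only [Pi.sub_apply, Pi.neg_apply, d0, d1] at this
    norm_num at this
    exact absurd this (by decide)
  · show d0 m - d1 m ≠ -(-(d0 m) - d1 m)
    intro h
    have := congrFun h ⟨1, h1⟩
    simp only [Pi.sub_apply, Pi.neg_apply, d0, d1] at this
    norm_num at this
    exact absurd this (by decide)

lemma pi2_diff_eval (hm : 2 ≤ m) :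
    pi2 m (d0 m, d0 m) - pi2 m (d1 m, d1 m) =
      ((-(d0 m) - d1 m, d0 m - d1 m) : Vm m) := by
  rw [pi2_apply, pi2_apply, Equiv.swap_apply_left, swap_d1 hm]
  rfl

lemma pi2_not_mem (hm : 2 ≤ m) : pi2 m ∉ gCal m := by
  intro h
  have hd := gCal_diff h (d0 m, d0 m) (d1 m, d1 m)
  rw [pi2_diff_eval hm] at hd
  have hr : ((d0 m, d0 m) : Vm m) - (d1 m, d1 m) = ((d0 m - d1 m, d0 m - d1 m) : Vm m) := rfl
  rw [hr, inner3 hm, inner2 hm] at hd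
  exact absurd hd (by decide)

-- pi3
def pi3 (m : ℕ) : Equiv.Perm (Vm m) := ((Amap m).symm.trans (pi2 m)).trans (Amap m)

lemma pi3_apply (v : Vm m) : pi3 m v = Amap m (pi2 m ((Amap m).symm v)) := rfl

lemma pi3_diff (u v : Vm m) :
    pi3 m u - pi3 m v = Amap m (pi2 m ((Amap m).symm u) - pi2 m ((Amap m).symm v)) := by
  rw [pi3_apply, pi3_apply, Amap_sub]

lemma pi3_cls0 (u v : Vm m) :
    cls (pi3 m u - pi3 m v) = 0 ↔ cls (u - v) = 0 := by
  rw [pi3_diff, cls_Amap_zero_iff, pi2_cls0]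
  have : u - v = Amap m ((Amap m).symm u - (Amap m).symm v) := by
    rw [← Amap_sub, Equiv.apply_symm_apply, Equiv.apply_symm_apply]
  rw [this, cls_Amap_zero_iff]

lemma pi3_cls2 (u v : Vm m) :
    cls (pi3 m u - pi3 m v) = 2 ↔ cls (u - v) = 2 := by
  rw [pi3_diff, cls_Amap_two_iff, pi2_cls1]
  have : u - v = Amap m ((Amap m).symm u - (Amap m).symm v) := by
    rw [← Amap_sub, Equiv.apply_symm_apply, Equiv.apply_symm_apply]
  rw [this, cls_Amap_two_iff]

lemma pi3_not_mem (hm : 2 ≤ m) : pi3 m ∉ gCal m := by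
  intro h
  have hd := gCal_diff h (Amap m (d0 m, d0 m)) (Amap m (d1 m, d1 m))
  rw [pi3_diff] at hd
  rw [Equiv.symm_apply_apply, Equiv.symm_apply_apply, pi2_diff_eval hm] at hd
  rw [cls_Amap_three (inner3 hm)] at hd
  rw [Amap_sub] at hd
  have hr : ((d0 m, d0 m) : Vm m) - (d1 m, d1 m) = ((d0 m - d1 m, d0 m - d1 m) : Vm m) := rfl
  rw [hr, cls_Amap_two (inner2 hm)] at hd
  exact absurd hd (by decide)

lemma not_aut (hm : 2 ≤ m) :
    ∀ E : Vm m → Vm m → Prop, AutRel E ≠ gCal m := by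
  intro E hE
  have hinv : ∀ σ, σ ∈ gCal m → ∀ a b, E a b ↔ E (σ a) (σ b) := by
    intro σ hσ
    rw [← hE] at hσ
    exact hσ
  have key : ∀ a b a' b' : Vm m, cls (b - a) = cls (b' - a') → (E a b ↔ E a' b') := by
    intro a b a' b' h
    obtain ⟨σ, hσ, h1, h2⟩ := exists_gCal_two h
    rw [hinv σ hσ a b, h1, h2]
  set P : Fin 4 → Prop := fun j => E 0 (rep hm j) with hP
  have keyP : ∀ a b : Vm m, E a b ↔ P (cls (b - a)) := by
    intro a b
    apply key
    rw [sub_zero, cls_rep hm]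
  by_cases h12 : P 1 ↔ P 2
  · have hmem : Amap m ∈ AutRel E := by
      intro a b
      rw [keyP a b, keyP (Amap m a) (Amap m b), Amap_sub]
      rcases cls_cases (b - a) with h | h | h | h
      · rw [h, cls_Amap_zero h]
      · rw [h, cls_Amap_one h]; exact h12
      · rw [h, cls_Amap_two h]; exact h12.symm
      · rw [h, cls_Amap_three h]
    rw [hE] at hmem
    exact Amap_not_mem hm hmem
  by_cases h23 : P 2 ↔ P 3
  · have hmem : pi2 m ∈ AutRel E := by
      intro a b
      rw [keyP a b, keyP (pi2 m a) (pi2 m b)]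
      rcases cls_cases (b - a) with h | h | h | h
      · rw [h, (pi2_cls0 b a).mpr h]
      · rw [h, (pi2_cls1 b a).mpr h]
      · rcases (pi2_cls23 b a).mpr (Or.inl h) with h' | h'
        · rw [h, h']
        · rw [h, h']; exact h23
      · rcases (pi2_cls23 b a).mpr (Or.inr h) with h' | h'
        · rw [h, h']; exact h23.symm
        · rw [h, h']
    rw [hE] at hmem
    exact pi2_not_mem hm hmem
  · have h13 : P 1 ↔ P 3 := by tauto
    have hmem : pi3 m ∈ AutRel E := by
      intro a b
      rw [keyP a b, keyP (pi3 m a) (pi3 m b)]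
      rcases cls_cases (b - a) with h | h | h | h
      · rw [h, (pi3_cls0 b a).mpr h]
      · rcases cls_cases (pi3 m b - pi3 m a) with h' | h' | h' | h'
        · exfalso
          rw [(pi3_cls0 b a).mp h'] at h; exact absurd h (by decide)
        · rw [h, h']
        · exfalso
          rw [(pi3_cls2 b a).mp h'] at h; exact absurd h (by decide)
        · rw [h, h']; exact h13
      · rw [h, (pi3_cls2 b a).mpr h]
      · rcases cls_cases (pi3 m b - pi3 m a) with h' | h' | h' | h'
        · exfalso
          rw [(pi3_cls0 b a).mp h'] at h; exact absurd h (by decide)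
        · rw [h, h']; exact h13.symm
        · exfalso
          rw [(pi3_cls2 b a).mp h'] at h; exact absurd h (by decide)
        · rw [h, h']
    rw [hE] at hmem
    exact pi3_not_mem hm hmem

end Digraph

end GCalAux


/-- `𝒢(m)` (for `m ≥ 2`) is a primitive rank-4 2-closed permutation group of degree
`3^{2m}` that is not the automorphism group of any graph or digraph. -/
theorem gCal_twoClosed_not_aut (m : ℕ) (hm : 2 ≤ m) :
    IsPrimitivePerm (gCal m) ∧ permRank (gCal m) = 4 ∧ twoClosure (gCal m) = gCal m ∧
      ∀ E : ((Fin m → ZMod 3) × (Fin m → ZMod 3)) →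
          ((Fin m → ZMod 3) × (Fin m → ZMod 3)) → Prop, AutRel E ≠ gCal m := by
  exact ⟨⟨GCalAux.gCal_pretransitive, fun B hB => GCalAux.block_trivial hm hB⟩,
    GCalAux.permRank_gCal hm, GCalAux.twoClosure_gCal hm, GCalAux.not_aut hm⟩
end

section
/- Let p be a prime, let m ≥ 1, and let s, ℓ, r be powers of p (i.e. s = p^i, ℓ = p^j, r = p^k with i, j, k ≥ 1) with s ≤ ℓ ≤ r < p^m. If s + ℓ + r − 2 = p^m, then p = 2 and s = 2. -/
/-! Reduce `s + ℓ + r = p ^ m + 2` modulo a power `p ^ e` dividing all four powers of `p`: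
then `p ^ e ∣ 2`. Taking `e = 1` gives `p = 2`. If `s ≠ 2`, then `4 ∣ s`, and the ordering
`s ≤ ℓ ≤ r < 2 ^ m` makes `4` divide all four powers, so `4 ∣ 2`. -/

theorem pow_dvd_two_of_pow_add_pow_add_pow_eq {p e i j k m : ℕ} (hi : e ≤ i) (hj : e ≤ j)
    (hk : e ≤ k) (hm : e ≤ m) (h : p ^ i + p ^ j + p ^ k = p ^ m + 2) : p ^ e ∣ 2 := by
  have hsum : p ^ e ∣ p ^ m + 2 :=
    h ▸ ((pow_dvd_pow p hi).add (pow_dvd_pow p hj)).add (pow_dvd_pow p hk)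
  exact (Nat.dvd_add_right (pow_dvd_pow p hm)).mp hsum

/-- If `s ≤ ℓ ≤ r < p^m` are positive powers of a prime `p` with `s + ℓ + r - 2 = p^m`,
then `p = 2` and `s = 2`. -/
theorem sum_powers_minus_two (p : ℕ) (hp : p.Prime) (m : ℕ) (hm : 1 ≤ m) (s l r : ℕ)
    (hs : ∃ i : ℕ, 1 ≤ i ∧ s = p ^ i) (hl : ∃ j : ℕ, 1 ≤ j ∧ l = p ^ j)
    (hr : ∃ k : ℕ, 1 ≤ k ∧ r = p ^ k)
    (hsl : s ≤ l) (hlr : l ≤ r) (hrm : r < p ^ m)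
    (heq : s + l + r = p ^ m + 2) :
    p = 2 ∧ s = 2 := by
  obtain ⟨i, hi, rfl⟩ := hs
  obtain ⟨j, hj, rfl⟩ := hl
  obtain ⟨k, hk, rfl⟩ := hr
  have hp_dvd_two : p ∣ 2 := by
    simpa using pow_dvd_two_of_pow_add_pow_add_pow_eq hi hj hk hm heq
  obtain rfl : p = 2 := (Nat.prime_dvd_prime_iff_eq hp Nat.prime_two).mp hp_dvd_two
  have hij : i ≤ j := (Nat.pow_le_pow_iff_right (by norm_num)).mp hsl
  have hjk : j ≤ k := (Nat.pow_le_pow_iff_right (by norm_num)).mp hlr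
  have hkm : k < m := (Nat.pow_lt_pow_iff_right (by norm_num)).mp hrm
  refine ⟨rfl, ?_⟩
  obtain rfl | hi2 : i = 1 ∨ 2 ≤ i := by omega
  · rfl
  · have h4 := pow_dvd_two_of_pow_add_pow_add_pow_eq hi2 (by omega) (by omega) (by omega) heq
    norm_num at h4
end

section
/- Let p be a prime, let m ≥ 1, and let s be a power of p with 1 < s < p^m. Then p^m − 1 does not divide (s − 1)(p^m + 1). -/
/-! Modulo `n - 1` we have `n + 1 ≡ 2`, so `n - 1 ∣ a (n + 1)` forces `n - 1 ∣ 2a`. For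
`n = p^m` and `a = s - 1` this is impossible: `s` is a smaller power of `p`, so
`2s ≤ p s ≤ p^m` and `0 < 2(s - 1) < p^m - 1`. -/

theorem Nat.sub_one_dvd_mul_add_one_iff (n a : ℕ) :
    n - 1 ∣ a * (n + 1) ↔ n - 1 ∣ 2 * a := by
  rcases n.eq_zero_or_pos with rfl | hn
  · simp
  · have hsplit : a * (n + 1) = a * (n - 1) + 2 * a := by
      obtain ⟨k, rfl⟩ := Nat.exists_eq_add_of_le hn
      simp only [Nat.add_sub_cancel_left]
      ring
    rw [hsplit, Nat.dvd_add_right (dvd_mul_left _ _)]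

theorem Nat.mul_pow_le_of_pow_lt {p i m : ℕ} (h : p ^ i < p ^ m) : p * p ^ i ≤ p ^ m := by
  rcases p.eq_zero_or_pos with rfl | hp
  · simp
  · have him : i < m := lt_of_not_ge fun hmi => h.not_ge (Nat.pow_le_pow_right hp hmi)
    rw [← pow_succ']
    exact Nat.pow_le_pow_right hp him

theorem not_dvd_sub_one_general (p : ℕ) (hp : p.Prime) (m : ℕ) (s : ℕ)
    (hs : ∃ i : ℕ, 1 ≤ i ∧ s = p ^ i) (hs1 : 1 < s) (hsm : s < p ^ m) :
    ¬ (p ^ m - 1) ∣ (s - 1) * (p ^ m + 1) := by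
  obtain ⟨i, -, rfl⟩ := hs
  have h2s : 2 * p ^ i ≤ p ^ m :=
    (Nat.mul_le_mul_right _ hp.two_le).trans (Nat.mul_pow_le_of_pow_lt hsm)
  rw [Nat.sub_one_dvd_mul_add_one_iff]
  exact Nat.not_dvd_of_pos_of_lt (by omega) (by omega)

/-- For a prime `p`, `m ≥ 1` and a power `s` of `p` with `1 < s < p^m`, the number
`p^m - 1` does not divide `(s - 1)(p^m + 1)`. -/
theorem not_dvd_sub_one (p : ℕ) (hp : p.Prime) (m : ℕ) (hm : 1 ≤ m) (s : ℕ)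
    (hs : ∃ i : ℕ, 1 ≤ i ∧ s = p ^ i) (hs1 : 1 < s) (hsm : s < p ^ m) :
    ¬ (p ^ m - 1) ∣ (s - 1) * (p ^ m + 1) :=
  not_dvd_sub_one_general p hp m s hs hs1 hsm
end

section
/- Let p be a prime, let m ≥ 1, and let s be a power of p with 1 < s < p^m. Then p^m + 1 does not divide (s + 1)(p^m − 1). -/
/-!
Since `(s + 1)(n + 1) = (s + 1)(n - 1) + 2(s + 1)` with `n = p^m`, the divisibility would give
`p^m + 1 ∣ 2(s + 1)`, and `2(s + 1) < 2(p^m + 1)` forces equality, i.e. `p^m = 2 s + 1`.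
Reducing modulo `p`, which divides both `p^m` and `s`, gives `p ∣ 1`.
-/

theorem Nat.dvd_two_mul_of_dvd_mul_sub_one {n a : ℕ} (h : n + 1 ∣ a * (n - 1)) :
    n + 1 ∣ 2 * a := by
  rcases Nat.eq_zero_or_pos n with rfl | hn
  · exact one_dvd _
  have hsplit : a * (n + 1) = a * (n - 1) + 2 * a := by
    zify [hn]
    ring
  exact (Nat.dvd_add_right h).mp (hsplit ▸ dvd_mul_left _ _)

theorem Nat.pow_ne_two_mul_pow_add_one {p m i : ℕ} (hp : p ≠ 1) (hm : m ≠ 0) (hi : i ≠ 0) :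
    p ^ m ≠ 2 * p ^ i + 1 := by
  intro h
  have hdvd : p ∣ 2 * p ^ i + 1 := h ▸ dvd_pow_self p hm
  have hdvd_one : p ∣ 1 := (Nat.dvd_add_right (dvd_mul_of_dvd_right (dvd_pow_self p hi) 2)).mp hdvd
  exact hp (Nat.dvd_one.mp hdvd_one)

theorem not_dvd_add_one_general (p : ℕ) (hp : p.Prime) (m : ℕ) (hm : 1 ≤ m) (s : ℕ)
    (hs : ∃ i : ℕ, 1 ≤ i ∧ s = p ^ i) (hsm : s < p ^ m) :
    ¬ (p ^ m + 1) ∣ (s + 1) * (p ^ m - 1) := by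
  obtain ⟨i, hi, rfl⟩ := hs
  intro hdvd
  have heq : 2 * (p ^ i + 1) = p ^ m + 1 :=
    Nat.eq_of_dvd_of_lt_two_mul (by positivity) (Nat.dvd_two_mul_of_dvd_mul_sub_one hdvd)
      (by omega)
  exact Nat.pow_ne_two_mul_pow_add_one hp.ne_one (Nat.one_le_iff_ne_zero.mp hm)
    (Nat.one_le_iff_ne_zero.mp hi) (by omega)

/-- For a prime `p`, `m ≥ 1` and a power `s` of `p` with `1 < s < p^m`, the number
`p^m + 1` does not divide `(s + 1)(p^m - 1)`. -/
theorem not_dvd_add_one (p : ℕ) (hp : p.Prime) (m : ℕ) (hm : 1 ≤ m) (s : ℕ)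
    (hs : ∃ i : ℕ, 1 ≤ i ∧ s = p ^ i) (hs1 : 1 < s) (hsm : s < p ^ m) :
    ¬ (p ^ m + 1) ∣ (s + 1) * (p ^ m - 1) :=
  not_dvd_add_one_general p hp m hm s hs hsm
end
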